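/- arXiv:2405.02729 — 5 statements merged into one kernel-verified Lean document; each statement's English description precedes it below -/
import Mathlib

section
/- In the setting of the approximating maps τ_n, let n ≥ N and let f ∈ L¹(I,λ) with f ≥ 0 and f non-increasing on [0,1]. If g ∈ L¹(I,λ) satisfies ∫_A g dλ = ∫_{τ_n⁻¹(A)} f dλ for every Borel set A ⊆ [0,1] (i.e., g is a version of P_{τ_n} f), then g ≥ 0 λ-a.e., g is λ-a.e. equal to a non-increasing function on [0,1], and ess sup g ≤ (a_n + ∑_{m=1}^{n} 1/τ′(a_m)) · ess sup f ≤ (1 + C) · ess sup f. -/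
open MeasureTheory Set Filter
open Topology

/-- Lebesgue measure on the unit interval `I = [0,1]`. -/
noncomputable def lam : MeasureTheory.Measure ℝ := MeasureTheory.volume.restrict (Set.Icc 0 1)

/-- A piecewise convex map `τ` on `[0,1]` with countably many branches, whose partition
points form a strictly decreasing sequence `1 = a 0 > a 1 > ⋯` tending to `0`; on each
`[a (m+1), a m)` the map is continuous, convex and differentiable, vanishes at the left
endpoint, and has right derivative `d (m+1) = τ'(a (m+1)) > 0` there; there is `N ≥ 1`
with `D₁ = ∑_{m=N+1}^∞ 1/τ'(a m) < 1` and `C = ∑_{m=1}^∞ 1/τ'(a m) < ∞`. -/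
structure PCApprox (τ : ℝ → ℝ) (a d : ℕ → ℝ) (N : ℕ) : Prop where
  mapsTo : Set.MapsTo τ (Set.Icc 0 1) (Set.Icc 0 1)
  a_zero : a 0 = 1
  a_anti : StrictAnti a
  a_lim : Filter.Tendsto a Filter.atTop (nhds 0)
  cont : ∀ m : ℕ, ContinuousOn τ (Set.Ico (a (m+1)) (a m))
  conv : ∀ m : ℕ, ConvexOn ℝ (Set.Ico (a (m+1)) (a m)) τ
  diff : ∀ m : ℕ, ∀ x ∈ Set.Ico (a (m+1)) (a m),
    DifferentiableWithinAt ℝ τ (Set.Ico (a (m+1)) (a m)) x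
  map_a : ∀ m : ℕ, τ (a (m+1)) = 0
  deriv_a : ∀ m : ℕ, HasDerivWithinAt τ (d (m+1)) (Set.Ici (a (m+1))) (a (m+1))
  d_pos : ∀ m : ℕ, 0 < d (m+1)
  N_pos : 1 ≤ N
  sum_d : Summable fun m => 1 / d (m+1)
  D₁_lt : (∑' m : ℕ, 1 / d (m + N + 1)) < 1

/-- `D₁ = ∑_{m=N+1}^∞ 1/τ'(a m)`. -/
noncomputable def D₁ (d : ℕ → ℝ) (N : ℕ) : ℝ := ∑' m : ℕ, 1 / d (m + N + 1)

/-- `C = ∑_{m=1}^∞ 1/τ'(a m)`. -/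
noncomputable def Cconst (d : ℕ → ℝ) : ℝ := ∑' m : ℕ, 1 / d (m + 1)

/-- `D = ∑_{m=1}^N 1/(a m · τ'(a m))`. -/
noncomputable def Dconst (a d : ℕ → ℝ) (N : ℕ) : ℝ :=
  ∑ m ∈ Finset.range N, 1 / (a (m+1) * d (m+1))

/-- The approximating map `τ_n`: `τ_n x = x / a n` for `x < a n`, and `τ_n x = τ x`
for `a n ≤ x`. -/
noncomputable def tauN (τ : ℝ → ℝ) (a : ℕ → ℝ) (n : ℕ) : ℝ → ℝ :=
  fun x => if x < a n then x / a n else τ x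

/-- Essential supremum (with respect to `λ` on `[0,1]`) of a real function, valued in `ℝ≥0∞`. -/
noncomputable def esssup (f : ℝ → ℝ) : ENNReal := essSup (fun x => ENNReal.ofReal (f x)) lam


section Branch

variable {α β s t u v w x d₀ : ℝ} {T : ℝ → ℝ}

/-- Hypotheses on a single branch of a piecewise convex map. -/
structure IsBranch (α β : ℝ) (T : ℝ → ℝ) : Prop where
  lt : α < β
  conv : ConvexOn ℝ (Set.Ico α β) T
  cont : ContinuousOn T (Set.Ico α β)
  zero : T α = 0
  nonneg : ∀ x ∈ Set.Ico α β, 0 ≤ T x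

/-- sublevel set of a branch -/
def brS (α β : ℝ) (T : ℝ → ℝ) (t : ℝ) : Set ℝ := {x | x ∈ Set.Ico α β ∧ T x ≤ t}

/-- generalized inverse of a branch -/
noncomputable def brX (α β : ℝ) (T : ℝ → ℝ) (t : ℝ) : ℝ := sSup (brS α β T t)

namespace IsBranch

lemma monoT (hB : IsBranch α β T) : MonotoneOn T (Set.Ico α β) := by
  intro x hx y hy hxy
  rcases eq_or_lt_of_le hxy with rfl | hlt
  · exact le_rfl
  rcases eq_or_lt_of_le hx.1 with rfl | hax
  · rw [hB.zero]; exact hB.nonneg y hy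
  · have hs := hB.conv.slope_mono_adjacent ⟨le_rfl, hB.lt⟩ hy hax hlt
    rw [hB.zero, sub_zero] at hs
    have h1 : 0 ≤ T x / (x - α) := div_nonneg (hB.nonneg x hx) (by linarith)
    have h2 : 0 ≤ (T y - T x) / (y - x) := le_trans h1 hs
    rcases div_nonneg_iff.mp h2 with ⟨h, _⟩ | ⟨_, h⟩
    · linarith
    · linarith

lemma brS_nonempty (hB : IsBranch α β T) (ht : 0 ≤ t) : (brS α β T t).Nonempty :=
  ⟨α, ⟨le_rfl, hB.lt⟩, by rw [hB.zero]; exact ht⟩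

lemma brS_bddAbove : BddAbove (brS α β T t) :=
  ⟨β, fun y hy => hy.1.2.le⟩

lemma le_brX (hx : x ∈ Set.Ico α β) (h : T x ≤ t) : x ≤ brX α β T t :=
  le_csSup brS_bddAbove ⟨hx, h⟩

lemma brX_le (hB : IsBranch α β T) (ht : 0 ≤ t) : brX α β T t ≤ β :=
  csSup_le (hB.brS_nonempty ht) fun y hy => hy.1.2.le

lemma le_brX' (hB : IsBranch α β T) (ht : 0 ≤ t) : α ≤ brX α β T t :=
  le_brX ⟨le_rfl, hB.lt⟩ (by rw [hB.zero]; exact ht)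

lemma le_of_lt_brX (hB : IsBranch α β T) (ht : 0 ≤ t) (hx : x ∈ Set.Ico α β)
    (h : x < brX α β T t) : T x ≤ t := by
  obtain ⟨y, hy, hxy⟩ := exists_lt_of_lt_csSup (hB.brS_nonempty ht) h
  exact le_trans (hB.monoT hx hy.1 hxy.le) hy.2

lemma lt_of_brX_lt (hx : x ∈ Set.Ico α β) (h : brX α β T t < x) : t < T x := by
  by_contra hc
  push_neg at hc
  exact absurd (le_brX hx hc) (not_le.mpr h)

lemma brX_mono (hB : IsBranch α β T) (hs : 0 ≤ s) (hst : s ≤ t) :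
    brX α β T s ≤ brX α β T t :=
  csSup_le_csSup brS_bddAbove (hB.brS_nonempty hs) fun y hy => ⟨hy.1, hy.2.trans hst⟩

lemma alpha_lt_brX (hB : IsBranch α β T) (ht : 0 < t) : α < brX α β T t := by
  have hne : (𝓝[Set.Ioo α β] α).NeBot := by
    refine mem_closure_iff_nhdsWithin_neBot.mp ?_
    rw [closure_Ioo hB.lt.ne]
    exact ⟨le_rfl, hB.lt.le⟩
  have hcw : ContinuousWithinAt T (Set.Ico α β) α := hB.cont α ⟨le_rfl, hB.lt⟩
  have hev : T ⁻¹' (Set.Iio t) ∈ 𝓝[Set.Ico α β] α :=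
    hcw (Iio_mem_nhds (by rw [hB.zero]; exact ht))
  have hev' : T ⁻¹' (Set.Iio t) ∈ 𝓝[Set.Ioo α β] α :=
    nhdsWithin_mono α Set.Ioo_subset_Ico_self hev
  obtain ⟨q, hqT, hqm⟩ := (Filter.eventually_iff.mpr hev').and self_mem_nhdsWithin |>.exists
  exact lt_of_lt_of_le hqm.1 (le_brX ⟨hqm.1.le, hqm.2⟩ (le_of_lt hqT))

lemma brX_strict (hB : IsBranch α β T) (hu : 0 ≤ u) (huv : u < v)
    (hvb : brX α β T v < β) : brX α β T u < brX α β T v := by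
  set z := brX α β T v with hz
  have hv0 : (0:ℝ) < v := lt_of_le_of_lt hu huv
  have hz1 : α < z := hB.alpha_lt_brX hv0
  have hz2 : z ∈ Set.Ico α β := ⟨hz1.le, hvb⟩
  by_contra hc
  push_neg at hc
  have hzu : brX α β T u = z := le_antisymm (hB.brX_mono hu huv.le) hc
  have hTz : T z ≤ u := by
    have hne : (𝓝[Set.Ioo α z] z).NeBot := by
      refine mem_closure_iff_nhdsWithin_neBot.mp ?_
      rw [closure_Ioo hz1.ne]
      exact ⟨hz1.le, le_rfl⟩
    have hcw : ContinuousWithinAt T (Set.Ico α β) z := hB.cont z hz2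
    have htend : Tendsto T (𝓝[Set.Ioo α z] z) (𝓝 (T z)) :=
      hcw.tendsto.mono_left (nhdsWithin_mono z fun q hq => ⟨hq.1.le, hq.2.trans hvb⟩)
    refine le_of_tendsto htend ?_
    filter_upwards [self_mem_nhdsWithin] with q hq
    exact hB.le_of_lt_brX hu ⟨hq.1.le, hq.2.trans hvb⟩ (hzu ▸ hq.2)
  have hcw : ContinuousWithinAt T (Set.Ico α β) z := hB.cont z hz2
  have hev : T ⁻¹' (Set.Iio v) ∈ 𝓝[Set.Ico α β] z :=
    hcw (Iio_mem_nhds (lt_of_le_of_lt hTz huv))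
  have hne : (𝓝[Set.Ioo z β] z).NeBot := by
    refine mem_closure_iff_nhdsWithin_neBot.mp ?_
    rw [closure_Ioo hvb.ne]
    exact ⟨le_rfl, hvb.le⟩
  have hsubzb : Set.Ioo z β ⊆ Set.Ico α β := fun q hq => ⟨hz1.le.trans hq.1.le, hq.2⟩
  have hev' : T ⁻¹' (Set.Iio v) ∈ 𝓝[Set.Ioo z β] z :=
    nhdsWithin_mono z hsubzb hev
  obtain ⟨q, hqT, hqm⟩ := (Filter.eventually_iff.mpr hev').and self_mem_nhdsWithin |>.exists
  have hqz : q ≤ z := le_brX ⟨hz1.le.trans hqm.1.le, hqm.2⟩ (le_of_lt hqT)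
  exact absurd hqz (not_le.mpr hqm.1)

lemma brX_concave (hB : IsBranch α β T) (hu : 0 ≤ u) (huv : u < v) (hvw : v < w) :
    (v - u) * (brX α β T w - brX α β T v) ≤ (w - v) * (brX α β T v - brX α β T u) := by
  have hv0 : (0:ℝ) ≤ v := hu.trans huv.le
  have hw0 : (0:ℝ) ≤ w := hv0.trans hvw.le
  set Xu := brX α β T u with hXu
  set Xv := brX α β T v with hXv
  set Xw := brX α β T w with hXw
  have hXuv : Xu ≤ Xv := hB.brX_mono hu huv.le
  have hXvw : Xv ≤ Xw := hB.brX_mono hv0 hvw.le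
  rcases eq_or_lt_of_le hXvw with heq | hlt
  · have h1 : 0 ≤ (w - v) * (Xv - Xu) := mul_nonneg (by linarith) (by linarith)
    rw [← heq]
    simpa using h1
  · have hXvβ : Xv < β := lt_of_lt_of_le hlt (hB.brX_le hw0)
    have hXuv' : Xu < Xv := hB.brX_strict hu huv hXvβ
    have hXuα : α ≤ Xu := hB.le_brX' hu
    refine le_of_forall_pos_le_add fun ε hε => ?_
    set ε' := ε / (2 * (w - u)) with hε'def
    have hwu : (0:ℝ) < w - u := by linarith
    have hε' : 0 < ε' := div_pos hε (by linarith)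
    set y := max α (Xu - ε') with hydef
    set z := min ((Xv + Xw) / 2) (Xv + ε' / 2) with hzdef
    set x' := max ((z + Xw) / 2) (Xw - ε') with hx'def
    have hyXu : y ≤ Xu := max_le hXuα (by linarith)
    have hy_mem : y ∈ Set.Ico α β := ⟨le_max_left _ _, by linarith⟩
    have hyge : Xu - ε' ≤ y := le_max_right _ _
    have hTy : T y ≤ u := by
      rcases eq_or_lt_of_le hyXu with heq2 | hlt2
      · have hXuα' : Xu ≤ α := by
          by_contra hcon
          push_neg at hcon
          have hlt3 : y < Xu := by
            rw [hydef]
            exact max_lt hcon (by linarith)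
          exact absurd heq2 hlt3.ne
        have hyα : y = α := le_antisymm (heq2 ▸ hXuα') (le_max_left _ _)
        rw [hyα, hB.zero]; exact hu
      · exact hB.le_of_lt_brX hu hy_mem hlt2
    have hzXv : Xv < z := lt_min (by linarith) (by linarith)
    have hzXw : z < Xw := min_lt_of_left_lt (by linarith)
    have hzle : z ≤ Xv + ε' / 2 := min_le_right _ _
    have hz_mem : z ∈ Set.Ico α β :=
      ⟨(hXuα.trans hXuv'.le).trans hzXv.le, lt_of_lt_of_le hzXw (hB.brX_le hw0)⟩
    have hTz_v : v < T z := lt_of_brX_lt hz_mem hzXv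
    have hzx' : z < x' := lt_max_of_lt_left (by linarith)
    have hx'ge : Xw - ε' ≤ x' := le_max_right _ _
    have hx'Xw : x' < Xw := max_lt (by linarith) (by linarith)
    have hx'_mem : x' ∈ Set.Ico α β :=
      ⟨hz_mem.1.trans hzx'.le, lt_of_lt_of_le hx'Xw (hB.brX_le hw0)⟩
    have hTx_w : T x' ≤ w := hB.le_of_lt_brX hw0 hx'_mem hx'Xw
    have hTzx : T z ≤ T x' := hB.monoT hz_mem hx'_mem hzx'.le
    have hyz : y < z := lt_of_le_of_lt hyXu (lt_trans hXuv' hzXv)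
    have hslope := hB.conv.slope_mono_adjacent hy_mem hx'_mem hyz hzx'
    have hzy : (0:ℝ) < z - y := by linarith
    have hxz : (0:ℝ) < x' - z := by linarith
    rw [div_le_div_iff₀ hzy hxz] at hslope
    have key : (v - u) * (x' - z) ≤ (w - v) * (z - y) := by
      nlinarith [mul_le_mul_of_nonneg_right (show v - u ≤ T z - T y by linarith) hxz.le,
        mul_le_mul_of_nonneg_right (show T x' - T z ≤ w - v by linarith) hzy.le]
    have hεq : ε' * (2 * (w - u)) = ε := div_mul_cancel₀ ε (by positivity)
    nlinarith [key,
      mul_le_mul_of_nonneg_left (show Xw - Xv - (3/2) * ε' ≤ x' - z by linarith)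
        (by linarith : (0:ℝ) ≤ v - u),
      mul_le_mul_of_nonneg_left (show z - y ≤ Xv - Xu + (3/2) * ε' by linarith)
        (by linarith : (0:ℝ) ≤ w - v),
      mul_pos hε' hwu]

lemma brX_lipschitz (hB : IsBranch α β T) (hd : HasDerivWithinAt T d₀ (Set.Ico α β) α)
    (hd0 : 0 < d₀) (hs : 0 ≤ s) (hst : s ≤ t) :
    d₀ * (brX α β T t - brX α β T s) ≤ t - s := by
  have ht0 : 0 ≤ t := hs.trans hst
  set Xs := brX α β T s with hXsd
  set Xt := brX α β T t with hXtd
  have hXst : Xs ≤ Xt := hB.brX_mono hs hst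
  rcases eq_or_lt_of_le hXst with heq | hlt
  · rw [← heq]
    simpa using (by linarith : (0:ℝ) ≤ t - s)
  · have hXsα : α ≤ Xs := hB.le_brX' hs
    refine le_of_forall_pos_le_add fun ε hε => ?_
    set ε' := ε / (2 * d₀) with hε'def
    have hε' : 0 < ε' := div_pos hε (by linarith)
    set z := min ((Xs + Xt) / 2) (Xs + ε' / 2) with hzdef
    set x' := max ((z + Xt) / 2) (Xt - ε') with hx'def
    have hzXs : Xs < z := lt_min (by linarith) (by linarith)
    have hzXt : z < Xt := min_lt_of_left_lt (by linarith)
    have hzle : z ≤ Xs + ε' / 2 := min_le_right _ _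
    have hz_mem : z ∈ Set.Ico α β := ⟨hXsα.trans hzXs.le, lt_of_lt_of_le hzXt (hB.brX_le ht0)⟩
    have hzx' : z < x' := lt_max_of_lt_left (by linarith)
    have hx'ge : Xt - ε' ≤ x' := le_max_right _ _
    have hx'Xt : x' < Xt := max_lt (by linarith) (by linarith)
    have hx'_mem : x' ∈ Set.Ico α β :=
      ⟨hz_mem.1.trans hzx'.le, lt_of_lt_of_le hx'Xt (hB.brX_le ht0)⟩
    have hTz_s : s < T z := lt_of_brX_lt hz_mem hzXs
    have hTx_t : T x' ≤ t := hB.le_of_lt_brX ht0 hx'_mem hx'Xt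
    have hαz : α < z := lt_of_le_of_lt hXsα hzXs
    have hzα : (0:ℝ) < z - α := by linarith
    have hxz : (0:ℝ) < x' - z := by linarith
    have hd_le : d₀ * (z - α) ≤ T z := by
      have hslope_lim : Tendsto (slope T α) (𝓝[Set.Ico α β \ {α}] α) (𝓝 d₀) :=
        hasDerivWithinAt_iff_tendsto_slope.mp hd
      rw [Set.Ico_diff_left] at hslope_lim
      have hne : (𝓝[Set.Ioo α β] α).NeBot := by
        refine mem_closure_iff_nhdsWithin_neBot.mp ?_
        rw [closure_Ioo hB.lt.ne]
        exact ⟨le_rfl, hB.lt.le⟩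
      have hle : d₀ ≤ T z / (z - α) := by
        refine le_of_tendsto hslope_lim ?_
        filter_upwards [self_mem_nhdsWithin, nhdsWithin_le_nhds (Iio_mem_nhds hαz)] with q hq hqz
        have hsl := hB.conv.slope_mono_adjacent ⟨le_rfl, hB.lt⟩ hz_mem hq.1 hqz
        rw [hB.zero, sub_zero] at hsl
        rw [slope_def_field, hB.zero, sub_zero]
        have hqz' : q < z := Set.mem_Iio.mp hqz
        have hqα : (0:ℝ) < q - α := by linarith [hq.1]
        have hzq : (0:ℝ) < z - q := by linarith
        rw [div_le_div_iff₀ hqα hzq] at hsl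
        rw [div_le_div_iff₀ hqα hzα]
        nlinarith [hsl]
      rw [le_div_iff₀ hzα] at hle
      exact hle
    have hsl2 := hB.conv.slope_mono_adjacent ⟨le_rfl, hB.lt⟩ hx'_mem hαz hzx'
    rw [hB.zero, sub_zero] at hsl2
    have h5 : d₀ ≤ (T x' - T z) / (x' - z) := by
      have h6 : d₀ ≤ T z / (z - α) := by rw [le_div_iff₀ hzα]; exact hd_le
      linarith [hsl2]
    rw [le_div_iff₀ hxz] at h5
    have hεq : ε' * (2 * d₀) = ε := div_mul_cancel₀ ε (by positivity)
    nlinarith [h5,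
      mul_le_mul_of_nonneg_left (show Xt - Xs - (x' - z) ≤ (3/2) * ε' by linarith) hd0.le]

lemma preimage_subset (hB : IsBranch α β T) (hs : 0 ≤ s) :
    Set.Ico α β ∩ T ⁻¹' (Set.Ioc s t) ⊆ Set.Icc (brX α β T s) (brX α β T t) := by
  rintro x ⟨hx, hTx⟩
  refine ⟨?_, le_brX hx hTx.2⟩
  by_contra hc
  push_neg at hc
  exact absurd (hB.le_of_lt_brX hs hx hc) (not_le.mpr hTx.1)

lemma subset_preimage (hB : IsBranch α β T) (hs : 0 ≤ s) (ht : 0 ≤ t) :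
    Set.Ioo (brX α β T s) (brX α β T t) ⊆ Set.Ico α β ∩ T ⁻¹' (Set.Ioc s t) := by
  intro x hx
  have hx_mem : x ∈ Set.Ico α β :=
    ⟨(hB.le_brX' hs).trans hx.1.le, lt_of_lt_of_le hx.2 (hB.brX_le ht)⟩
  exact ⟨hx_mem, lt_of_brX_lt hx_mem hx.1, hB.le_of_lt_brX ht hx_mem hx.2⟩

lemma preimage_diff_finite (hB : IsBranch α β T) (hs : 0 ≤ s) :
    ((Set.Ico α β ∩ T ⁻¹' (Set.Ioc s t)) \
      Set.Ioo (brX α β T s) (brX α β T t)).Finite := by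
  apply Set.Finite.subset ((Set.finite_singleton (brX α β T t)).insert (brX α β T s))
  intro x hx
  have h2 := hB.preimage_subset hs hx.1
  rcases eq_or_lt_of_le h2.1 with h | h
  · exact Set.mem_insert_iff.mpr (Or.inl h.symm)
  rcases eq_or_lt_of_le h2.2 with h' | h'
  · exact Set.mem_insert_iff.mpr (Or.inr (by simp [h']))
  · exact absurd ⟨h, h'⟩ hx.2

lemma preimage_measurable (hB : IsBranch α β T) (hs : 0 ≤ s) (ht : 0 ≤ t) :
    MeasurableSet (Set.Ico α β ∩ T ⁻¹' (Set.Ioc s t)) := by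
  have h1 := hB.subset_preimage (s := s) (t := t) hs ht
  rw [← Set.union_diff_cancel h1]
  exact measurableSet_Ioo.union (hB.preimage_diff_finite hs).measurableSet

lemma preimage_ae (hB : IsBranch α β T) (hs : 0 ≤ s) (hst : s ≤ t) :
    (Set.Ico α β ∩ T ⁻¹' (Set.Ioc s t) : Set ℝ)
      =ᵐ[volume] Set.Ioc (brX α β T s) (brX α β T t) := by
  have ht0 : 0 ≤ t := hs.trans hst
  have hzero : volume ({brX α β T s, brX α β T t} : Set ℝ) = 0 :=
    ((Set.finite_singleton _).insert _).measure_zero _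
  rw [MeasureTheory.ae_eq_set]
  constructor
  · refine measure_mono_null (fun x hx => ?_) hzero
    have h2 := hB.preimage_subset hs hx.1
    have hx2 : ¬(brX α β T s < x ∧ x ≤ brX α β T t) := hx.2
    rcases eq_or_lt_of_le h2.1 with h | h
    · exact Set.mem_insert_iff.mpr (Or.inl h.symm)
    · exact absurd ⟨h, h2.2⟩ hx2
  · refine measure_mono_null (fun x hx => ?_) hzero
    have hx1 : brX α β T s < x ∧ x ≤ brX α β T t := hx.1
    have hx2 : x ∉ Set.Ico α β ∩ T ⁻¹' (Set.Ioc s t) := hx.2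
    rcases eq_or_lt_of_le hx1.2 with h | h
    · exact Set.mem_insert_iff.mpr (Or.inr (by simp [h]))
    · exact absurd (hB.subset_preimage hs ht0 ⟨hx1.1, h⟩) hx2

end IsBranch
end Branch


section MainAux

lemma convexOn_congr' {s : Set ℝ} {f₁ f₂ : ℝ → ℝ} (h : ConvexOn ℝ s f₁)
    (he : Set.EqOn f₁ f₂ s) : ConvexOn ℝ s f₂ := by
  refine ⟨h.1, fun x hx y hy p q hp hq hpq => ?_⟩
  rw [← he hx, ← he hy, ← he (h.1 hx hy hp hq hpq)]
  exact h.2 hx hy hp hq hpq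

end MainAux

/-- For `n ≥ N` and `f ∈ L¹` non-negative and non-increasing on `[0,1]`, any version `g` of
`P_{τ_n} f` is non-negative a.e., a.e. equal to a non-increasing function, and
`ess sup g ≤ (a n + ∑_{m=1}^n 1/τ'(a m)) · ess sup f ≤ (1 + C) · ess sup f`. -/
theorem stmt7 (τ : ℝ → ℝ) (a d : ℕ → ℝ) (N : ℕ)
    (hτ : PCApprox τ a d N) (n : ℕ) (hn : N ≤ n)
    (f g : ℝ → ℝ)
    (hf_int : MeasureTheory.Integrable f lam)
    (hg_int : MeasureTheory.Integrable g lam)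
    (hf_nonneg : ∀ x ∈ Set.Icc (0:ℝ) 1, 0 ≤ f x)
    (hf_mono : AntitoneOn f (Set.Icc 0 1))
    (hg : ∀ A : Set ℝ, MeasurableSet A → A ⊆ Set.Icc 0 1 →
      ∫ x in A, g x ∂lam = ∫ x in (tauN τ a n) ⁻¹' A, f x ∂lam) :
    (∀ᵐ x ∂lam, 0 ≤ g x) ∧
    (∃ g₀ : ℝ → ℝ, AntitoneOn g₀ (Set.Icc 0 1) ∧ g =ᵐ[lam] g₀) ∧
    esssup g ≤ ENNReal.ofReal (a n + ∑ m ∈ Finset.range n, 1 / d (m+1)) * esssup f ∧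
    ENNReal.ofReal (a n + ∑ m ∈ Finset.range n, 1 / d (m+1)) * esssup f ≤
      ENNReal.ofReal (1 + Cconst d) * esssup f := by
  classical
  have ha_nonneg : ∀ m, 0 ≤ a m := fun m =>
    le_of_tendsto hτ.a_lim (Filter.eventually_atTop.mpr
      ⟨m, fun k hk => hτ.a_anti.antitone hk⟩)
  have ha_pos : ∀ m, 0 < a m := fun m =>
    lt_of_le_of_lt (ha_nonneg (m+1)) (hτ.a_anti (Nat.lt_succ_self m))
  have ha_le_one : ∀ m, a m ≤ 1 := fun m => hτ.a_zero ▸ hτ.a_anti.antitone (Nat.zero_le m)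
  set T := tauN τ a n with hTdef
  set c : ℕ → ℝ := fun m => if m ≤ n then a m else 0 with hcdef
  have hc0 : c 0 = 1 := by simp [hcdef, hτ.a_zero]
  have hcn1 : c (n+1) = 0 := by simp [hcdef]
  have hc_nonneg : ∀ m, 0 ≤ c m := by
    intro m
    by_cases h : m ≤ n
    · simpa [hcdef, h] using ha_nonneg m
    · simp [hcdef, h]
  have hc_le_one : ∀ m, c m ≤ 1 := by
    intro m
    by_cases h : m ≤ n
    · simpa [hcdef, h] using ha_le_one m
    · simp [hcdef, h]
  have hc_anti : ∀ j k : ℕ, j ≤ k → c k ≤ c j := by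
    intro j k hjk
    by_cases hk : k ≤ n
    · have hj : j ≤ n := hjk.trans hk
      simp only [hcdef, if_pos hk, if_pos hj]
      exact hτ.a_anti.antitone hjk
    · simp only [hcdef, if_neg hk]
      exact hc_nonneg j
  haveI hlamfin : IsFiniteMeasure lam := by
    constructor
    rw [show lam = volume.restrict (Set.Icc 0 1) from rfl, Measure.restrict_apply_univ]
    exact measure_Icc_lt_top
  have hf_on : IntegrableOn f (Set.Icc 0 1) volume := hf_int
  have hg_on : IntegrableOn g (Set.Icc 0 1) volume := hg_int
  have hTeq : ∀ x, a n ≤ x → T x = τ x := fun x hx => if_neg (not_lt.mpr hx)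
  have hTlin : ∀ x, x < a n → T x = x / a n := fun x hx => if_pos hx
  -- the n+1 branches
  have hbr : ∀ m ≤ n, IsBranch (c (m+1)) (c m) T := by
    intro m hm
    by_cases hmn : m < n
    · have hcm : c m = a m := if_pos hm
      have hcm1 : c (m+1) = a (m+1) := if_pos (Nat.succ_le_of_lt hmn)
      have han : a n ≤ a (m+1) := hτ.a_anti.antitone (Nat.succ_le_of_lt hmn)
      have heq : Set.EqOn τ T (Set.Ico (a (m+1)) (a m)) := fun x hx =>
        (hTeq x (han.trans hx.1)).symm
      have hIccsub : Set.Ico (a (m+1)) (a m) ⊆ Set.Icc 0 1 := fun x hx =>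
        ⟨(ha_nonneg _).trans hx.1, hx.2.le.trans (ha_le_one m)⟩
      rw [hcm, hcm1]
      refine ⟨hτ.a_anti (Nat.lt_succ_self m), convexOn_congr' (hτ.conv m) heq,
        (hτ.cont m).congr heq.symm, ?_, ?_⟩
      · rw [hTeq _ han]; exact hτ.map_a m
      · intro x hx
        rw [← heq hx]
        exact (hτ.mapsTo (hIccsub hx)).1
    · have hmn' : m = n := le_antisymm hm (not_lt.mp hmn)
      subst hmn'
      have hcm : c m = a m := if_pos le_rfl
      have hcm1 : c (m+1) = 0 := if_neg (by omega)
      have heq : Set.EqOn (fun x => x / a m) T (Set.Ico 0 (a m)) := fun x hx =>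
        (hTlin x hx.2).symm
      rw [hcm, hcm1]
      refine ⟨ha_pos m, convexOn_congr' ?_ heq, ?_, ?_, ?_⟩
      · exact ⟨convex_Ico _ _, fun x _ y _ p q hp hq hpq => le_of_eq (by
          simp only [smul_eq_mul]; ring)⟩
      · exact ((continuous_id.div_const (a m)).continuousOn).congr heq.symm
      · rw [hTlin 0 (ha_pos m)]; simp
      · intro x hx
        rw [← heq hx]
        exact div_nonneg hx.1 (ha_pos m).le
  have hder : ∀ m ≤ n, HasDerivWithinAt T (if m < n then d (m+1) else 1 / a n)
      (Set.Ico (c (m+1)) (c m)) (c (m+1)) := by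
    intro m hm
    by_cases hmn : m < n
    · have hcm : c m = a m := if_pos hm
      have hcm1 : c (m+1) = a (m+1) := if_pos (Nat.succ_le_of_lt hmn)
      have han : a n ≤ a (m+1) := hτ.a_anti.antitone (Nat.succ_le_of_lt hmn)
      rw [if_pos hmn, hcm, hcm1]
      refine ((hτ.deriv_a m).mono Set.Ico_subset_Ici_self).congr ?_ ?_
      · intro x hx; exact hTeq x (han.trans hx.1)
      · exact hTeq _ han
    · have hmn' : m = n := le_antisymm hm (not_lt.mp hmn)
      subst hmn'
      have hcm : c m = a m := if_pos le_rfl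
      have hcm1 : c (m+1) = 0 := if_neg (by omega)
      rw [if_neg hmn, hcm, hcm1]
      refine (((hasDerivAt_id (0:ℝ)).div_const (a m)).hasDerivWithinAt).congr ?_ ?_
      · intro x hx; exact hTlin x hx.2
      · rw [hTlin 0 (ha_pos m)]; rfl
  have hder_pos : ∀ m, 0 < (if m < n then d (m+1) else 1 / a n) := by
    intro m
    by_cases hmn : m < n
    · rw [if_pos hmn]; exact hτ.d_pos m
    · rw [if_neg hmn]; exact one_div_pos.mpr (ha_pos n)
  -- restriction bookkeeping
  have hlam_res : ∀ S : Set ℝ, lam.restrict S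
      = (volume : Measure ℝ).restrict (S ∩ Set.Icc 0 1) := fun S => by
    show ((volume : Measure ℝ).restrict (Set.Icc 0 1)).restrict S = _
    rw [Measure.restrict_restrict' measurableSet_Icc]
  have hlam_apply : ∀ S : Set ℝ, lam S = volume (S ∩ Set.Icc 0 1) := fun S =>
    Measure.restrict_apply' measurableSet_Icc
  -- the cover of [0,1)
  have hcover : Set.Ico (0:ℝ) 1 = ⋃ m ∈ Finset.range (n+1), Set.Ico (c (m+1)) (c m) := by
    have haux : ∀ k, (⋃ m ∈ Finset.range k, Set.Ico (c (m+1)) (c m)) = Set.Ico (c k) (c 0) := by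
      intro k
      induction k with
      | zero => simp
      | succ k ih =>
        rw [Finset.range_add_one, Finset.set_biUnion_insert, ih,
          Set.Ico_union_Ico_eq_Ico (hc_anti k (k+1) (Nat.le_succ k))
            (hc_anti 0 k (Nat.zero_le k))]
    rw [haux (n+1), hcn1, hc0]
  have hIcosub : ∀ m ≤ n, Set.Ico (c (m+1)) (c m) ⊆ Set.Icc (0:ℝ) 1 := fun m _ x hx =>
    ⟨(hc_nonneg (m+1)).trans hx.1, hx.2.le.trans (hc_le_one m)⟩
  have hdisjIco : ∀ i j : ℕ, i < j →
      Disjoint (Set.Ico (c (i+1)) (c i)) (Set.Ico (c (j+1)) (c j)) := by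
    intro i j hij
    refine Set.disjoint_left.mpr fun x hxi hxj => ?_
    exact absurd (lt_of_lt_of_le hxj.2 (hc_anti (i+1) j hij)) (not_lt.mpr hxi.1)
  -- decomposition of the preimage integral
  have hsplit : ∀ s t : ℝ, 0 ≤ s → s ≤ t → t ≤ 1 →
      ∫ x in T ⁻¹' (Set.Ioc s t), f x ∂lam
        = ∑ m ∈ Finset.range (n+1),
            ∫ x in Set.Ioc (brX (c (m+1)) (c m) T s) (brX (c (m+1)) (c m) T t), f x := by
    intro s t hs hst ht
    have hrw1 : (∫ x in T ⁻¹' (Set.Ioc s t), f x ∂lam)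
        = ∫ x in T ⁻¹' (Set.Ioc s t) ∩ Set.Icc 0 1, f x := by
      rw [hlam_res]
    have h1 : (T ⁻¹' (Set.Ioc s t) ∩ Set.Icc 0 1 : Set ℝ)
        =ᵐ[volume] ((T ⁻¹' (Set.Ioc s t) ∩ Set.Ico 0 1 : Set ℝ)) := by
      rw [MeasureTheory.ae_eq_set]
      constructor
      · have hsub : (T ⁻¹' (Set.Ioc s t) ∩ Set.Icc 0 1)
            \ (T ⁻¹' (Set.Ioc s t) ∩ Set.Ico 0 1) ⊆ ({1} : Set ℝ) := by
          intro x hx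
          have hx1 : x ∈ T ⁻¹' (Set.Ioc s t) ∩ Set.Icc 0 1 := hx.1
          have hx2 : x ∉ T ⁻¹' (Set.Ioc s t) ∩ Set.Ico 0 1 := hx.2
          have hlt1 : ¬ x < 1 := fun hlt => hx2 ⟨hx1.1, hx1.2.1, hlt⟩
          simpa using le_antisymm hx1.2.2 (not_lt.mp hlt1)
        exact measure_mono_null hsub (measure_singleton 1)
      · have hsub : (T ⁻¹' (Set.Ioc s t) ∩ Set.Ico 0 1)
            \ (T ⁻¹' (Set.Ioc s t) ∩ Set.Icc 0 1) ⊆ (∅ : Set ℝ) := fun x hx =>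
          absurd ⟨hx.1.1, hx.1.2.1, hx.1.2.2.le⟩ hx.2
        exact measure_mono_null hsub measure_empty
    have h2 : T ⁻¹' (Set.Ioc s t) ∩ Set.Ico 0 1
        = ⋃ m ∈ Finset.range (n+1), (Set.Ico (c (m+1)) (c m) ∩ T ⁻¹' (Set.Ioc s t)) := by
      rw [Set.inter_comm, hcover, Set.iUnion₂_inter]
    rw [hrw1, MeasureTheory.setIntegral_congr_set h1, h2,
      MeasureTheory.integral_biUnion_finset]
    · refine Finset.sum_congr rfl fun m hm => ?_
      have hm' : m ≤ n := Nat.lt_succ_iff.mp (Finset.mem_range.mp hm)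
      exact MeasureTheory.setIntegral_congr_set ((hbr m hm').preimage_ae hs hst)
    · intro m hm
      exact (hbr m (Nat.lt_succ_iff.mp (Finset.mem_range.mp hm))).preimage_measurable
        hs (hs.trans hst)
    · intro i hi j hj hij
      rcases Nat.lt_or_ge i j with h | h
      · exact (hdisjIco i j h).mono Set.inter_subset_left Set.inter_subset_left
      · exact ((hdisjIco j i (lt_of_le_of_ne h (Ne.symm hij))).mono
          Set.inter_subset_left Set.inter_subset_left).symm
    · intro m hm
      have hm' : m ≤ n := Nat.lt_succ_iff.mp (Finset.mem_range.mp hm)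
      exact hf_on.mono_set ((Set.inter_subset_left).trans (hIcosub m hm'))
  -- measure bound for preimages of intervals
  have hmeasb : ∀ s t : ℝ, 0 ≤ s → s ≤ t → t ≤ 1 →
      lam (T ⁻¹' (Set.Ioc s t)) ≤ ENNReal.ofReal
        ((a n + ∑ m ∈ Finset.range n, 1 / d (m+1)) * (t - s)) := by
    intro s t hs hst ht
    have hsub : T ⁻¹' (Set.Ioc s t) ∩ Set.Icc 0 1 ⊆
        (⋃ m ∈ Finset.range (n+1), (Set.Ico (c (m+1)) (c m) ∩ T ⁻¹' (Set.Ioc s t)))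
          ∪ {1} := by
      intro x hx
      rcases eq_or_lt_of_le hx.2.2 with h1 | h1
      · exact Or.inr (by simp [h1])
      · refine Or.inl ?_
        have hx' : x ∈ T ⁻¹' (Set.Ioc s t) ∩ Set.Ico 0 1 := ⟨hx.1, hx.2.1, h1⟩
        rw [Set.inter_comm, hcover, Set.iUnion₂_inter] at hx'
        exact hx'
    calc lam (T ⁻¹' (Set.Ioc s t)) = volume (T ⁻¹' (Set.Ioc s t) ∩ Set.Icc 0 1) :=
          hlam_apply _
      _ ≤ volume ((⋃ m ∈ Finset.range (n+1),
            (Set.Ico (c (m+1)) (c m) ∩ T ⁻¹' (Set.Ioc s t))) ∪ {1}) := measure_mono hsub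
      _ ≤ volume (⋃ m ∈ Finset.range (n+1),
            (Set.Ico (c (m+1)) (c m) ∩ T ⁻¹' (Set.Ioc s t))) + volume ({1} : Set ℝ) :=
          measure_union_le _ _
      _ = volume (⋃ m ∈ Finset.range (n+1),
            (Set.Ico (c (m+1)) (c m) ∩ T ⁻¹' (Set.Ioc s t))) := by
          rw [measure_singleton, add_zero]
      _ ≤ ∑ m ∈ Finset.range (n+1),
            volume (Set.Ico (c (m+1)) (c m) ∩ T ⁻¹' (Set.Ioc s t)) :=
          measure_biUnion_finset_le _ _
      _ ≤ ∑ m ∈ Finset.range (n+1),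
            ENNReal.ofReal ((t - s) * (if m < n then 1 / d (m+1) else a n)) := by
          refine Finset.sum_le_sum fun m hm => ?_
          have hm' : m ≤ n := Nat.lt_succ_iff.mp (Finset.mem_range.mp hm)
          have hB := hbr m hm'
          have hlip := hB.brX_lipschitz (hder m hm') (hder_pos m) hs hst
          have hXd : brX (c (m+1)) (c m) T t - brX (c (m+1)) (c m) T s
              ≤ (t - s) * (if m < n then 1 / d (m+1) else a n) := by
            have hpos := hder_pos m
            by_cases hmn : m < n
            · rw [if_pos hmn] at hlip hpos ⊢
              rw [mul_one_div, le_div_iff₀ hpos]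
              linarith [hlip]
            · rw [if_neg hmn] at hlip hpos ⊢
              have han := ha_pos n
              rw [one_div_mul_eq_div, div_le_iff₀ han] at hlip
              linarith [hlip]
          calc volume (Set.Ico (c (m+1)) (c m) ∩ T ⁻¹' (Set.Ioc s t))
              ≤ volume (Set.Icc (brX (c (m+1)) (c m) T s) (brX (c (m+1)) (c m) T t)) :=
                measure_mono (hB.preimage_subset hs)
            _ = ENNReal.ofReal (brX (c (m+1)) (c m) T t - brX (c (m+1)) (c m) T s) :=
                Real.volume_Icc
            _ ≤ ENNReal.ofReal ((t - s) * (if m < n then 1 / d (m+1) else a n)) :=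
                ENNReal.ofReal_le_ofReal hXd
      _ = ENNReal.ofReal ((a n + ∑ m ∈ Finset.range n, 1 / d (m+1)) * (t - s)) := by
          rw [← ENNReal.ofReal_sum_of_nonneg]
          · congr 1
            rw [Finset.sum_range_succ, if_neg (lt_irrefl n)]
            have : ∀ m ∈ Finset.range n, (t - s) * (if m < n then 1 / d (m+1) else a n)
                = (t - s) * (1 / d (m+1)) := fun m hm => by
              rw [if_pos (Finset.mem_range.mp hm)]
            rw [Finset.sum_congr rfl this, ← Finset.mul_sum]
            ring
          · intro m _
            have := hder_pos m
            by_cases hmn : m < n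
            · rw [if_pos hmn]
              exact mul_nonneg (by linarith) (by rw [if_pos hmn] at this; positivity)
            · rw [if_neg hmn]
              exact mul_nonneg (by linarith) (ha_pos n).le
  -- essential sup of f is finite
  have h_lam_ae_mem : ∀ᵐ x ∂lam, x ∈ Set.Icc (0:ℝ) 1 := by
    rw [show lam = volume.restrict (Set.Icc 0 1) from rfl]
    exact ae_restrict_mem measurableSet_Icc
  have hfq : esssup f ≤ ENNReal.ofReal (f 0) := by
    refine essSup_le_of_ae_le _ ?_
    filter_upwards [h_lam_ae_mem] with x hx
    exact ENNReal.ofReal_le_ofReal (hf_mono (Set.left_mem_Icc.mpr zero_le_one) hx hx.1)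
  have hfin : esssup f ≠ ⊤ := (lt_of_le_of_lt hfq ENNReal.ofReal_lt_top).ne
  set sf := (esssup f).toReal with hsfdef
  have hsf0 : 0 ≤ sf := ENNReal.toReal_nonneg
  have hf_le_sf : ∀ᵐ x ∂lam, f x ≤ sf := by
    have hae : ∀ᵐ x ∂lam, ENNReal.ofReal (f x) ≤ esssup f :=
      ENNReal.ae_le_essSup (fun x => ENNReal.ofReal (f x))
    filter_upwards [hae] with x hx
    rcases le_or_gt (f x) 0 with h | h
    · exact h.trans hsf0
    · calc f x = (ENNReal.ofReal (f x)).toReal := (ENNReal.toReal_ofReal h.le).symm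
        _ ≤ sf := ENNReal.toReal_mono hfin hx
  set M := a n + ∑ m ∈ Finset.range n, 1 / d (m+1) with hMdef
  have hM0 : 0 < M := add_pos_of_pos_of_nonneg (ha_pos n)
    (Finset.sum_nonneg fun m _ => (one_div_pos.mpr (hτ.d_pos m)).le)
  set cc := M * sf with hccdef
  have hcc0 : 0 ≤ cc := mul_nonneg hM0.le hsf0
  set G : ℝ → ℝ := fun x => ∫ y in Set.Icc 0 x, g y ∂lam with hGdef
  -- increments of G
  have hGincr : ∀ s t : ℝ, 0 ≤ s → s ≤ t → t ≤ 1 →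
      G t - G s = ∫ x in T ⁻¹' (Set.Ioc s t), f x ∂lam := by
    intro s t hs hst ht
    have hsplit2 : Set.Icc (0:ℝ) t = Set.Icc 0 s ∪ Set.Ioc s t :=
      (Set.Icc_union_Ioc_eq_Icc hs hst).symm
    have hdis : Disjoint (Set.Icc (0:ℝ) s) (Set.Ioc s t) :=
      Set.disjoint_left.mpr fun x hx1 hx2 => absurd hx1.2 (not_le.mpr hx2.1)
    have hGt : G t = G s + ∫ x in Set.Ioc s t, g x ∂lam := by
      show (∫ y in Set.Icc 0 t, g y ∂lam) = _
      rw [hsplit2, MeasureTheory.setIntegral_union hdis measurableSet_Ioc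
        hg_int.integrableOn hg_int.integrableOn]
    rw [hGt, hg (Set.Ioc s t) measurableSet_Ioc
      (fun x hx => ⟨hs.trans hx.1.le, hx.2.trans ht⟩)]
    ring
  have hGnn : ∀ s t : ℝ, 0 ≤ s → s ≤ t → t ≤ 1 → 0 ≤ G t - G s := by
    intro s t hs hst ht
    rw [hGincr s t hs hst ht]
    apply MeasureTheory.integral_nonneg_of_ae
    exact (h_lam_ae_mem.mono fun x hx => hf_nonneg x hx).filter_mono
      (MeasureTheory.ae_mono Measure.restrict_le_self)
  have hGub : ∀ s t : ℝ, 0 ≤ s → s ≤ t → t ≤ 1 → G t - G s ≤ cc * (t - s) := by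
    intro s t hs hst ht
    rw [hGincr s t hs hst ht]
    have h1 : (∫ x in T ⁻¹' (Set.Ioc s t), f x ∂lam)
        ≤ ∫ _x in T ⁻¹' (Set.Ioc s t), sf ∂lam := by
      apply MeasureTheory.integral_mono_ae hf_int.restrict (integrable_const sf)
      exact hf_le_sf.filter_mono (MeasureTheory.ae_mono Measure.restrict_le_self)
    have h2 : (∫ _x in T ⁻¹' (Set.Ioc s t), sf ∂lam)
        = (lam (T ⁻¹' (Set.Ioc s t))).toReal * sf := by
      rw [MeasureTheory.setIntegral_const, smul_eq_mul]; rfl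
    have h3 : (lam (T ⁻¹' (Set.Ioc s t))).toReal ≤ M * (t - s) := by
      apply ENNReal.toReal_le_of_le_ofReal (by nlinarith [hM0])
      exact hmeasb s t hs hst ht
    calc (∫ x in T ⁻¹' (Set.Ioc s t), f x ∂lam)
        ≤ (lam (T ⁻¹' (Set.Ioc s t))).toReal * sf := h1.trans (le_of_eq h2)
      _ ≤ (M * (t - s)) * sf := mul_le_mul_of_nonneg_right h3 hsf0
      _ = cc * (t - s) := by rw [hccdef]; ring
  -- concavity of the increments of G
  have hGconc : ∀ u v w : ℝ, 0 ≤ u → u < v → v < w → w ≤ 1 →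
      (v - u) * (G w - G v) ≤ (w - v) * (G v - G u) := by
    intro u v w hu huv hvw hw
    rw [hGincr u v hu huv.le (by linarith), hGincr v w (by linarith) hvw.le hw,
      hsplit u v hu huv.le (by linarith), hsplit v w (by linarith) hvw.le hw,
      Finset.mul_sum, Finset.mul_sum]
    refine Finset.sum_le_sum fun m hm => ?_
    have hm' : m ≤ n := Nat.lt_succ_iff.mp (Finset.mem_range.mp hm)
    have hB := hbr m hm'
    have hIccsub : Set.Icc (c (m+1)) (c m) ⊆ Set.Icc (0:ℝ) 1 := fun x hx =>
      ⟨(hc_nonneg (m+1)).trans hx.1, hx.2.trans (hc_le_one m)⟩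
    have hv0 : (0:ℝ) ≤ v := by linarith
    have hw0 : (0:ℝ) ≤ w := by linarith
    set Xu := brX (c (m+1)) (c m) T u with hXu
    set Xv := brX (c (m+1)) (c m) T v with hXv
    set Xw := brX (c (m+1)) (c m) T w with hXw
    have hXu_mem : Xu ∈ Set.Icc (c (m+1)) (c m) := ⟨hB.le_brX' hu, hB.brX_le hu⟩
    have hXv_mem : Xv ∈ Set.Icc (c (m+1)) (c m) := ⟨hB.le_brX' hv0, hB.brX_le hv0⟩
    have hXw_mem : Xw ∈ Set.Icc (c (m+1)) (c m) := ⟨hB.le_brX' hw0, hB.brX_le hw0⟩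
    have hXuv : Xu ≤ Xv := hB.brX_mono hu huv.le
    have hXvw : Xv ≤ Xw := hB.brX_mono hv0 hvw.le
    have hXv01 : Xv ∈ Set.Icc (0:ℝ) 1 := hIccsub hXv_mem
    have hfXv : 0 ≤ f Xv := hf_nonneg _ hXv01
    have hIoc1_sub : Set.Ioc Xu Xv ⊆ Set.Icc (0:ℝ) 1 := fun x hx =>
      ⟨(hIccsub hXu_mem).1.trans hx.1.le, hx.2.trans hXv01.2⟩
    have hIoc2_sub : Set.Ioc Xv Xw ⊆ Set.Icc (0:ℝ) 1 := fun x hx =>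
      ⟨hXv01.1.trans hx.1.le, hx.2.trans (hIccsub hXw_mem).2⟩
    have hint2 : (∫ x in Set.Ioc Xv Xw, f x) ≤ (Xw - Xv) * f Xv := by
      have hconst : (∫ _x in Set.Ioc Xv Xw, f Xv) = (Xw - Xv) * f Xv := by
        rw [MeasureTheory.setIntegral_const, Real.volume_real_Ioc_of_le (by linarith), smul_eq_mul]
      rw [← hconst]
      refine MeasureTheory.setIntegral_mono_on (hf_on.mono_set hIoc2_sub)
        (integrableOn_const measure_Ioc_lt_top.ne) measurableSet_Ioc ?_
      intro x hx
      exact hf_mono hXv01 (hIoc2_sub hx) hx.1.le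
    have hint1 : (Xv - Xu) * f Xv ≤ ∫ x in Set.Ioc Xu Xv, f x := by
      have hconst : (∫ _x in Set.Ioc Xu Xv, f Xv) = (Xv - Xu) * f Xv := by
        rw [MeasureTheory.setIntegral_const, Real.volume_real_Ioc_of_le (by linarith), smul_eq_mul]
      rw [← hconst]
      refine MeasureTheory.setIntegral_mono_on
        (integrableOn_const measure_Ioc_lt_top.ne) (hf_on.mono_set hIoc1_sub)
        measurableSet_Ioc ?_
      intro x hx
      exact hf_mono (hIoc1_sub hx) hXv01 hx.2
    have hxc := hB.brX_concave hu huv hvw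
    calc (v - u) * ∫ x in Set.Ioc Xv Xw, f x
        ≤ (v - u) * ((Xw - Xv) * f Xv) := mul_le_mul_of_nonneg_left hint2 (by linarith)
      _ ≤ (w - v) * ((Xv - Xu) * f Xv) := by
          nlinarith [mul_le_mul_of_nonneg_right hxc hfXv]
      _ ≤ (w - v) * ∫ x in Set.Ioc Xu Xv, f x := mul_le_mul_of_nonneg_left hint1 (by linarith)
  -- the slope sets of G
  set SL : ℝ → Set ℝ := fun x => (fun y => (G y - G x) / (y - x)) '' Set.Ioc x 1 with hSLdef
  have hSL_ne : ∀ x, x < 1 → (SL x).Nonempty := fun x hx1 =>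
    ⟨(G 1 - G x) / (1 - x), ⟨1, ⟨hx1, le_rfl⟩, rfl⟩⟩
  have hSL_ub : ∀ x, 0 ≤ x → x < 1 → ∀ b ∈ SL x, b ≤ cc := by
    rintro x hx0 hx1 b ⟨y, hy, rfl⟩
    have hyx : 0 < y - x := by linarith [hy.1]
    rw [div_le_iff₀ hyx]
    have := hGub x y hx0 hy.1.le hy.2
    linarith
  have hSL_bdd : ∀ x, 0 ≤ x → x < 1 → BddAbove (SL x) := fun x h0 h1 =>
    ⟨cc, fun b hb => hSL_ub x h0 h1 b hb⟩
  have hSL_el_nn : ∀ x, 0 ≤ x → x < 1 → 0 ≤ (G 1 - G x) / (1 - x) := fun x h0 h1 =>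
    div_nonneg (hGnn x 1 h0 h1.le le_rfl) (by linarith)
  -- the candidate density g0
  set g0 : ℝ → ℝ := fun x => if x < 0 then cc else if x < 1 then sSup (SL x) else 0
    with hg0def
  have hg0_eq : ∀ x, 0 ≤ x → x < 1 → g0 x = sSup (SL x) := by
    intro x h0 h1
    rw [hg0def]
    simp only
    rw [if_neg (not_lt.mpr h0), if_pos h1]
  have hg0_nn : ∀ x, 0 ≤ g0 x := by
    intro x
    by_cases h0 : x < 0
    · rw [hg0def]; simp only; rw [if_pos h0]; exact hcc0
    by_cases h1 : x < 1
    · rw [hg0_eq x (not_lt.mp h0) h1]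
      exact (hSL_el_nn x (not_lt.mp h0) h1).trans
        (le_csSup (hSL_bdd x (not_lt.mp h0) h1) ⟨1, ⟨h1, le_rfl⟩, rfl⟩)
    · rw [hg0def]; simp only; rw [if_neg h0, if_neg h1]
  have hg0_ub : ∀ x, g0 x ≤ cc := by
    intro x
    by_cases h0 : x < 0
    · rw [hg0def]; simp only; rw [if_pos h0]
    by_cases h1 : x < 1
    · rw [hg0_eq x (not_lt.mp h0) h1]
      exact csSup_le (hSL_ne x h1) (hSL_ub x (not_lt.mp h0) h1)
    · rw [hg0def]; simp only; rw [if_neg h0, if_neg h1]; exact hcc0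
  -- slopes decrease in the second variable
  have hslope_y : ∀ x y₁ y₂, 0 ≤ x → x < y₁ → y₁ ≤ y₂ → y₂ ≤ 1 →
      (G y₂ - G x) / (y₂ - x) ≤ (G y₁ - G x) / (y₁ - x) := by
    intro x y₁ y₂ h0 h1 h12 h2
    rcases eq_or_lt_of_le h12 with rfl | hlt
    · exact le_rfl
    · have hc := hGconc x y₁ y₂ h0 h1 hlt h2
      rw [div_le_div_iff₀ (by linarith) (by linarith)]
      nlinarith [hc]
  have hcross : ∀ x₁ x₂ y, 0 ≤ x₁ → x₁ < x₂ → x₂ < y → y ≤ 1 →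
      (G y - G x₂) / (y - x₂) ≤ (G x₂ - G x₁) / (x₂ - x₁) := by
    intro x₁ x₂ y h0 h1 h2 h3
    have hc := hGconc x₁ x₂ y h0 h1 h2 h3
    rw [div_le_div_iff₀ (by linarith) (by linarith)]
    nlinarith [hc]
  have hg0_anti : Antitone g0 := by
    intro x₁ x₂ h12
    rcases eq_or_lt_of_le h12 with rfl | hlt
    · exact le_rfl
    by_cases h2a : x₂ < 0
    · rw [hg0def]; simp only
      rw [if_pos (lt_trans hlt h2a), if_pos h2a]
    by_cases h2b : x₂ < 1
    · have h20 : 0 ≤ x₂ := not_lt.mp h2a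
      by_cases h1a : x₁ < 0
      · have hx1cc : g0 x₁ = cc := by rw [hg0def]; simp only; rw [if_pos h1a]
        rw [hx1cc]
        exact hg0_ub x₂
      · have h10 : 0 ≤ x₁ := not_lt.mp h1a
        have h1b : x₁ < 1 := lt_trans hlt h2b
        rw [hg0_eq x₂ h20 h2b, hg0_eq x₁ h10 h1b]
        refine csSup_le (hSL_ne x₂ h2b) ?_
        rintro b ⟨y, hy, rfl⟩
        exact (hcross x₁ x₂ y h10 hlt hy.1 hy.2).trans
          (le_csSup (hSL_bdd x₁ h10 h1b) ⟨x₂, ⟨hlt, h2b.le⟩, rfl⟩)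
    · have hx2z : g0 x₂ = 0 := by rw [hg0def]; simp only; rw [if_neg h2a, if_neg h2b]
      rw [hx2z]
      exact hg0_nn x₁
  -- g0 is the right derivative of G on [0,1)
  have hg0_deriv : ∀ x, 0 ≤ x → x < 1 → HasDerivWithinAt G (g0 x) (Set.Ioi x) x := by
    intro x h0 h1
    rw [hasDerivWithinAt_iff_tendsto_slope]
    have hset : Set.Ioi x \ {x} = Set.Ioi x :=
      Set.diff_singleton_eq_self (by simp)
    rw [hset, hg0_eq x h0 h1]
    refine tendsto_order.2 ⟨?_, ?_⟩
    · intro b hb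
      obtain ⟨s0, ⟨y₀, hy₀, rfl⟩, hbs⟩ := exists_lt_of_lt_csSup (hSL_ne x h1) hb
      filter_upwards [Ioo_mem_nhdsGT_of_mem (Set.left_mem_Ico.mpr hy₀.1)]
        with y hy
      have h := hslope_y x y y₀ h0 hy.1 hy.2.le hy₀.2
      rw [slope_def_field]
      linarith
    · intro b hb
      filter_upwards [Ioc_mem_nhdsGT_of_mem (Set.left_mem_Ico.mpr h1)] with y hy
      rw [slope_def_field]
      have hmem : (G y - G x) / (y - x) ∈ SL x := ⟨y, hy, rfl⟩
      have := le_csSup (hSL_bdd x h0 h1) hmem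
      linarith
  -- continuity of G on [0,1]
  have hGcont : ContinuousOn G (Set.Icc 0 1) := by
    have hlip : LipschitzOnWith (Real.toNNReal cc) G (Set.Icc 0 1) := by
      refine LipschitzOnWith.of_dist_le_mul fun x hx y hy => ?_
      rw [Real.dist_eq, Real.dist_eq, Real.coe_toNNReal cc hcc0]
      rcases le_total x y with h | h
      · rw [abs_of_nonpos (by linarith [hGnn x y hx.1 h hy.2] : G x - G y ≤ 0),
          abs_of_nonpos (by linarith : x - y ≤ 0)]
        linarith [hGub x y hx.1 h hy.2]
      · rw [abs_of_nonneg (by linarith [hGnn y x hy.1 h hx.2] : 0 ≤ G x - G y),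
          abs_of_nonneg (by linarith : 0 ≤ x - y)]
        linarith [hGub y x hy.1 h hx.2]
    exact hlip.continuousOn
  have hg0_meas : Measurable g0 := hg0_anti.measurable
  have hg0_intOn : ∀ b : ℝ, 0 ≤ b → IntervalIntegrable g0 volume 0 b := by
    intro b hb
    rw [intervalIntegrable_iff_integrableOn_Ioc_of_le hb]
    refine Measure.integrableOn_of_bounded (M := cc) measure_Ioc_lt_top.ne
      hg0_meas.aestronglyMeasurable ?_
    filter_upwards with x
    rw [Real.norm_eq_abs, abs_of_nonneg (hg0_nn x)]
    exact hg0_ub x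
  have hG0 : G 0 = 0 := by
    show (∫ y in Set.Icc 0 0, g y ∂lam) = 0
    have hz : lam (Set.Icc (0:ℝ) 0) = 0 := by
      rw [hlam_apply]
      exact measure_mono_null (fun x hx => hx.1) (by rw [Set.Icc_self]; exact measure_singleton 0)
    rw [Measure.restrict_eq_zero.mpr hz]
    exact MeasureTheory.integral_zero_measure _
  have hFTC : ∀ b, 0 ≤ b → b ≤ 1 → (∫ y in Set.Ioc 0 b, g0 y) = G b := by
    intro b hb hb1
    have h1 : (∫ y in (0:ℝ)..b, g0 y) = G b - G 0 :=
      intervalIntegral.integral_eq_sub_of_hasDeriv_right_of_le hb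
        (hGcont.mono (Set.Icc_subset_Icc le_rfl hb1))
        (fun x hx => hg0_deriv x hx.1.le (lt_of_lt_of_le hx.2 hb1))
        (hg0_intOn b hb)
    rw [intervalIntegral.integral_of_le hb] at h1
    rw [h1, hG0, sub_zero]
  -- Step A: the integrals of g and g0 over Ioc 0 b agree
  have hA : ∀ b, 0 ≤ b → b ≤ 1 → (∫ y in Set.Ioc 0 b, g y) = ∫ y in Set.Ioc 0 b, g0 y := by
    intro b hb hb1
    rw [hFTC b hb hb1]
    show (∫ y in Set.Ioc 0 b, g y) = ∫ y in Set.Icc 0 b, g y ∂lam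
    have h2 : lam.restrict (Set.Icc 0 b) = volume.restrict (Set.Icc 0 b) := by
      rw [hlam_res, Set.inter_eq_self_of_subset_left (Set.Icc_subset_Icc le_rfl hb1)]
    have h3 : (Set.Icc (0:ℝ) b : Set ℝ) =ᵐ[volume] (Set.Ioc (0:ℝ) b : Set ℝ) :=
      (MeasureTheory.Ioc_ae_eq_Icc).symm
    rw [h2, MeasureTheory.setIntegral_congr_set h3]
  -- restrict to (0,1]
  set lam' : Measure ℝ := volume.restrict (Set.Ioc 0 1) with hlam'def
  have hg_int' : Integrable g lam' :=
    (hg_on.mono_set Set.Ioc_subset_Icc_self : IntegrableOn g (Set.Ioc 0 1) volume)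
  have hg0_int' : Integrable g0 lam' := by
    refine Measure.integrableOn_of_bounded (M := cc) measure_Ioc_lt_top.ne
      hg0_meas.aestronglyMeasurable ?_
    filter_upwards with x
    rw [Real.norm_eq_abs, abs_of_nonneg (hg0_nn x)]
    exact hg0_ub x
  have hlam'_res : ∀ p q : ℝ, lam'.restrict (Set.Ioc p q)
      = volume.restrict (Set.Ioc (max p 0) (min q 1)) := by
    intro p q
    rw [hlam'def, Measure.restrict_restrict' measurableSet_Ioc, Set.Ioc_inter_Ioc]
  -- Step B : equality over all Ioc, wrt lam'
  have hB2 : ∀ p q : ℝ, (∫ y in Set.Ioc p q, g y ∂lam') = ∫ y in Set.Ioc p q, g0 y ∂lam' := by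
    intro p q
    rw [show (∫ y in Set.Ioc p q, g y ∂lam') = ∫ y in Set.Ioc (max p 0) (min q 1), g y from by
        rw [hlam'_res p q],
      show (∫ y in Set.Ioc p q, g0 y ∂lam') = ∫ y in Set.Ioc (max p 0) (min q 1), g0 y from by
        rw [hlam'_res p q]]
    rcases le_or_gt (min q 1) (max p 0) with hle | hlt
    · rw [Set.Ioc_eq_empty (not_lt.mpr hle)]
      simp
    · have hp0 : (0:ℝ) ≤ max p 0 := le_max_right p 0
      have hq1 : min q 1 ≤ 1 := min_le_right q 1
      have hpq : max p 0 ≤ min q 1 := hlt.le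
      have hq0 : (0:ℝ) ≤ min q 1 := hp0.trans hpq
      have hp1 : max p 0 ≤ 1 := hpq.trans hq1
      have hsplitI : Set.Ioc (0:ℝ) (min q 1)
          = Set.Ioc 0 (max p 0) ∪ Set.Ioc (max p 0) (min q 1) :=
        (Set.Ioc_union_Ioc_eq_Ioc hp0 hpq).symm
      have hdisj : Disjoint (Set.Ioc (0:ℝ) (max p 0)) (Set.Ioc (max p 0) (min q 1)) :=
        Set.disjoint_left.mpr fun x hx1 hx2 => absurd hx1.2 (not_le.mpr hx2.1)
      have hsub1 : Set.Ioc (0:ℝ) (max p 0) ⊆ Set.Icc 0 1 := fun x hx =>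
        ⟨hx.1.le, hx.2.trans hp1⟩
      have hsub2 : Set.Ioc (max p 0) (min q 1) ⊆ Set.Icc 0 1 := fun x hx =>
        ⟨hp0.trans hx.1.le, hx.2.trans hq1⟩
      have hg0_on : IntegrableOn g0 (Set.Icc 0 1) volume := by
        refine Measure.integrableOn_of_bounded (M := cc) measure_Icc_lt_top.ne
          hg0_meas.aestronglyMeasurable ?_
        filter_upwards with x
        rw [Real.norm_eq_abs, abs_of_nonneg (hg0_nn x)]
        exact hg0_ub x
      have key : ∀ h : ℝ → ℝ, IntegrableOn h (Set.Icc 0 1) volume →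
          (∫ y in Set.Ioc (max p 0) (min q 1), h y)
            = (∫ y in Set.Ioc 0 (min q 1), h y) - ∫ y in Set.Ioc 0 (max p 0), h y := by
        intro h hint
        rw [show (∫ y in Set.Ioc (0:ℝ) (min q 1), h y)
            = (∫ y in Set.Ioc (0:ℝ) (max p 0), h y)
              + ∫ y in Set.Ioc (max p 0) (min q 1), h y from by
          rw [← MeasureTheory.setIntegral_union hdisj measurableSet_Ioc
            (hint.mono_set hsub1) (hint.mono_set hsub2), ← hsplitI]]
        ring
      rw [key g hg_on, key g0 hg0_on, hA (min q 1) hq0 hq1, hA (max p 0) hp0 hp1]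
  -- Step C: a.e. equality wrt lam'
  have hsub_int : Integrable (fun x => g x - g0 x) lam' := hg_int'.sub hg0_int'
  have hsub_int' : Integrable (fun x => g0 x - g x) lam' := hg0_int'.sub hg_int'
  have hρp_fin : (∫⁻ x, ENNReal.ofReal (g x - g0 x) ∂lam') ≠ ⊤ :=
    hsub_int.lintegral_lt_top.ne
  have hρm_fin : (∫⁻ x, ENNReal.ofReal (g0 x - g x) ∂lam') ≠ ⊤ :=
    hsub_int'.lintegral_lt_top.ne
  haveI hfinp : IsFiniteMeasure (lam'.withDensity fun x => ENNReal.ofReal (g x - g0 x)) := by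
    constructor
    rw [MeasureTheory.withDensity_apply _ MeasurableSet.univ, setLIntegral_univ]
    exact hρp_fin.lt_top
  haveI hfinm : IsFiniteMeasure (lam'.withDensity fun x => ENNReal.ofReal (g0 x - g x)) := by
    constructor
    rw [MeasureTheory.withDensity_apply _ MeasurableSet.univ, setLIntegral_univ]
    exact hρm_fin.lt_top
  have hset_eq : ∀ S : Set ℝ, MeasurableSet S → ((∫ y in S, (g y - g0 y) ∂lam') = 0) →
      (lam'.withDensity fun x => ENNReal.ofReal (g x - g0 x)) S
        = (lam'.withDensity fun x => ENNReal.ofReal (g0 x - g x)) S := by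
    intro S hS hint0
    rw [MeasureTheory.withDensity_apply _ hS, MeasureTheory.withDensity_apply _ hS]
    have hIs : Integrable (fun x => g x - g0 x) (lam'.restrict S) := hsub_int.restrict
    have heq := MeasureTheory.integral_eq_lintegral_pos_part_sub_lintegral_neg_part hIs
    simp only [neg_sub] at heq
    rw [hint0] at heq
    have hAfin : (∫⁻ a, ENNReal.ofReal (g a - g0 a) ∂lam'.restrict S) ≠ ⊤ :=
      (lt_of_le_of_lt (lintegral_mono' Measure.restrict_le_self le_rfl)
        hρp_fin.lt_top).ne
    have hBfin : (∫⁻ a, ENNReal.ofReal (g0 a - g a) ∂lam'.restrict S) ≠ ⊤ :=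
      (lt_of_le_of_lt (lintegral_mono' Measure.restrict_le_self le_rfl)
        hρm_fin.lt_top).ne
    have htr : (∫⁻ a, ENNReal.ofReal (g a - g0 a) ∂lam'.restrict S).toReal
        = (∫⁻ a, ENNReal.ofReal (g0 a - g a) ∂lam'.restrict S).toReal := by
      linarith [heq]
    exact (ENNReal.toReal_eq_toReal_iff' hAfin hBfin).mp htr
  have hν : (lam'.withDensity fun x => ENNReal.ofReal (g x - g0 x))
      = lam'.withDensity fun x => ENNReal.ofReal (g0 x - g x) := by
    refine MeasureTheory.Measure.ext_of_Ioc_finite _ _ ?_ fun p q _ => ?_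
    · have huniv : (∫ y in Set.univ, (g y - g0 y) ∂lam') = 0 := by
        rw [MeasureTheory.setIntegral_univ]
        have hres : lam'.restrict (Set.Ioc 0 1) = lam' := by
          rw [hlam'def, Measure.restrict_restrict' measurableSet_Ioc, Set.inter_self]
        have := hB2 0 1
        rw [show (∫ y in Set.Ioc (0:ℝ) 1, g y ∂lam') = ∫ y, g y ∂lam' from by rw [hres],
          show (∫ y in Set.Ioc (0:ℝ) 1, g0 y ∂lam') = ∫ y, g0 y ∂lam' from by rw [hres]] at this
        rw [MeasureTheory.integral_sub hg_int' hg0_int', this, sub_self]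
      exact hset_eq Set.univ MeasurableSet.univ huniv
    · refine hset_eq _ measurableSet_Ioc ?_
      rw [MeasureTheory.integral_sub (hg_int'.restrict) (hg0_int'.restrict), hB2 p q, sub_self]
  have hae0 : g =ᵐ[lam'] g0 := by
    have hρp_meas : AEMeasurable (fun x => ENNReal.ofReal (g x - g0 x)) lam' :=
      ENNReal.measurable_ofReal.comp_aemeasurable hsub_int.aemeasurable
    have hρm_meas : AEMeasurable (fun x => ENNReal.ofReal (g0 x - g x)) lam' :=
      ENNReal.measurable_ofReal.comp_aemeasurable hsub_int'.aemeasurable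
    have hdens := (MeasureTheory.withDensity_eq_iff hρp_meas hρm_meas hρp_fin).mp hν
    filter_upwards [hdens] with x hx
    by_contra hne
    rcases lt_or_gt_of_ne hne with h | h
    · have h1 : ENNReal.ofReal (g x - g0 x) = 0 := ENNReal.ofReal_eq_zero.mpr (by linarith)
      have h2 : ENNReal.ofReal (g0 x - g x) ≠ 0 := by
        rw [Ne, ENNReal.ofReal_eq_zero]
        push_neg
        linarith
      exact h2 (by rw [← hx, h1])
    · have h1 : ENNReal.ofReal (g0 x - g x) = 0 := ENNReal.ofReal_eq_zero.mpr (by linarith)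
      have h2 : ENNReal.ofReal (g x - g0 x) ≠ 0 := by
        rw [Ne, ENNReal.ofReal_eq_zero]
        push_neg
        linarith
      exact h2 (by rw [hx, h1])
  -- transfer to lam
  have haefinal : g =ᵐ[lam] g0 := by
    have hnull : lam' {x | ¬ g x = g0 x} = 0 := by
      have : ∀ᵐ x ∂lam', g x = g0 x := hae0
      exact MeasureTheory.ae_iff.mp this
    have hle : lam {x | ¬ g x = g0 x} ≤ lam' {x | ¬ g x = g0 x} + volume ({0} : Set ℝ) := by
      rw [hlam_apply, hlam'def, Measure.restrict_apply' measurableSet_Ioc]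
      refine le_trans (measure_mono ?_) (measure_union_le _ _)
      intro x hx
      rcases eq_or_lt_of_le hx.2.1 with h | h
      · exact Or.inr (by simp [← h])
      · exact Or.inl ⟨hx.1, h, hx.2.2⟩
    show ∀ᵐ x ∂lam, g x = g0 x
    rw [MeasureTheory.ae_iff]
    refine le_antisymm ?_ (by simp)
    simpa [hnull, measure_singleton] using hle
  -- conclusions
  refine ⟨?_, ⟨g0, hg0_anti.antitoneOn _, haefinal⟩, ?_, ?_⟩
  · filter_upwards [haefinal] with x hx
    rw [hx]
    exact hg0_nn x
  · have h1 : esssup g ≤ ENNReal.ofReal cc := by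
      refine essSup_le_of_ae_le _ ?_
      filter_upwards [haefinal] with x hx
      show ENNReal.ofReal (g x) ≤ ENNReal.ofReal cc
      rw [hx]
      exact ENNReal.ofReal_le_ofReal (hg0_ub x)
    have h2 : ENNReal.ofReal cc = ENNReal.ofReal M * esssup f := by
      rw [hccdef, ENNReal.ofReal_mul hM0.le, hsfdef, ENNReal.ofReal_toReal hfin]
    exact h1.trans (le_of_eq h2)
  · refine mul_le_mul_left (ENNReal.ofReal_le_ofReal ?_) _
    have hsum : (∑ m ∈ Finset.range n, 1 / d (m+1)) ≤ Cconst d := by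
      rw [Cconst]
      exact Summable.sum_le_tsum (Finset.range n) (fun m _ => (one_div_pos.mpr (hτ.d_pos m)).le)
        hτ.sum_d
    rw [hMdef]
    linarith [ha_le_one n, hsum]
end

section
/- In the setting of the approximating maps τ_n, let n ≥ N and let f : [0,1] → ℝ⁺ be non-increasing and integrable. If g ∈ L¹(I,λ) satisfies ∫_A g dλ = ∫_{τ_n⁻¹(A)} f dλ for every Borel set A ⊆ [0,1] (i.e., g is a version of P_{τ_n} f), then ess sup g ≤ (a_n + D₁) · ess sup f + D · ‖f‖₁. -/
open MeasureTheory Set Filter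

lemma volume_le_of_expand {φ : ℝ → ℝ} {s : Set ℝ} {c : ℝ} (hc : 0 < c)
    (h : ∀ x ∈ s, ∀ y ∈ s, c * |x - y| ≤ |φ x - φ y|) :
    volume s ≤ ENNReal.ofReal c⁻¹ * volume (φ '' s) := by
  set ψ := Function.invFunOn φ s with hψ
  have hmem : ∀ u ∈ φ '' s, ψ u ∈ s ∧ φ (ψ u) = u := by
    intro u hu
    obtain ⟨x, hx, rfl⟩ := hu
    exact ⟨Function.invFunOn_mem ⟨x, hx, rfl⟩, Function.invFunOn_eq ⟨x, hx, rfl⟩⟩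
  have hK : LipschitzOnWith (Real.toNNReal c⁻¹) ψ (φ '' s) := by
    apply LipschitzOnWith.of_dist_le_mul
    intro u hu v hv
    obtain ⟨hu1, hu2⟩ := hmem u hu
    obtain ⟨hv1, hv2⟩ := hmem v hv
    have := h (ψ u) hu1 (ψ v) hv1
    rw [hu2, hv2] at this
    rw [Real.dist_eq, Real.dist_eq, Real.coe_toNNReal _ (by positivity)]
    rw [inv_mul_eq_div, le_div_iff₀ hc, mul_comm]
    exact this
  have hsub : s ⊆ ψ '' (φ '' s) := by
    intro x hx
    refine ⟨φ x, ⟨x, hx, rfl⟩, ?_⟩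
    obtain ⟨h1, h2⟩ := hmem (φ x) ⟨x, hx, rfl⟩
    have := h x hx (ψ (φ x)) h1
    rw [h2, sub_self, abs_zero] at this
    have hx0 : |x - ψ (φ x)| = 0 := le_antisymm (by nlinarith [abs_nonneg (x - ψ (φ x))]) (abs_nonneg _)
    have := abs_eq_zero.1 hx0
    linarith [this]
  calc volume s ≤ volume (ψ '' (φ '' s)) := measure_mono hsub
    _ = μH[1] (ψ '' (φ '' s)) := by rw [MeasureTheory.hausdorffMeasure_real]
    _ ≤ (Real.toNNReal c⁻¹ : ENNReal) ^ (1:ℝ) * μH[1] (φ '' s) :=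
        hK.hausdorffMeasure_image_le zero_le_one
    _ = ENNReal.ofReal c⁻¹ * volume (φ '' s) := by
        rw [ENNReal.rpow_one, MeasureTheory.hausdorffMeasure_real]; rfl

lemma expand_branch {τ : ℝ → ℝ} {p q dd : ℝ} (hpq : p < q)
    (hconv : ConvexOn ℝ (Set.Ico p q) τ)
    (hder : HasDerivWithinAt τ dd (Set.Ici p) p) :
    ∀ x ∈ Set.Ico p q, ∀ y ∈ Set.Ico p q, dd * |x - y| ≤ |τ x - τ y| := by
  have hslope : ∀ y ∈ Set.Ioo p q, dd ≤ (τ y - τ p) / (y - p) := by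
    intro y hy
    have h1 : Tendsto (slope τ p) (nhdsWithin p (Set.Ici p \ {p})) (nhds dd) :=
      hasDerivWithinAt_iff_tendsto_slope.1 hder
    rw [Set.Ici_sdiff_left] at h1
    have hev : ∀ᶠ z in nhdsWithin p (Set.Ioi p), slope τ p z ≤ (τ y - τ p) / (y - p) := by
      filter_upwards [Ioo_mem_nhdsGT_of_mem (Set.left_mem_Ico.2 hy.1)] with z hz
      have hz1 : z ∈ Set.Ico p q := ⟨hz.1.le, hz.2.trans hy.2⟩
      have := hconv.secant_mono (Set.left_mem_Ico.2 hpq) hz1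
        ⟨hy.1.le, hy.2⟩ (ne_of_gt hz.1) (ne_of_gt hy.1) hz.2.le
      rw [slope_def_field]
      exact this
    exact le_of_tendsto h1 hev
  have main : ∀ x ∈ Set.Ico p q, ∀ y ∈ Set.Ico p q, x ≤ y → dd * |x - y| ≤ |τ x - τ y| := by
    intro x hx y hy hxy
    rcases eq_or_lt_of_le hxy with rfl | hlt
    · simp
    · have hy' : y ∈ Set.Ioo p q := ⟨lt_of_le_of_lt hx.1 hlt, hy.2⟩
      have key : dd * (y - x) ≤ τ y - τ x := by
        rcases eq_or_lt_of_le hx.1 with rfl | hpx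
        · have := hslope y hy'
          rw [le_div_iff₀ (by linarith)] at this
          linarith
        · have h2 : (τ p - τ y) / (p - y) ≤ (τ x - τ y) / (x - y) :=
            hconv.secant_mono hy (Set.left_mem_Ico.2 hpq) hx
              (by linarith : p ≠ y) (ne_of_lt hlt) hx.1
          have h3 : dd ≤ (τ p - τ y) / (p - y) := by
            have := hslope y hy'
            have he : (τ p - τ y) / (p - y) = (τ y - τ p) / (y - p) := by
              rw [← neg_sub (τ y) (τ p), ← neg_sub y p, neg_div_neg_eq]
            rw [he]; exact this
          have h4 : dd ≤ (τ x - τ y) / (x - y) := h3.trans h2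
          have he2 : (τ x - τ y) / (x - y) = (τ y - τ x) / (y - x) := by
            rw [← neg_sub (τ y) (τ x), ← neg_sub y x, neg_div_neg_eq]
          rw [he2, le_div_iff₀ (by linarith)] at h4
          linarith
      rw [abs_sub_comm x y, abs_of_nonneg (by linarith : (0:ℝ) ≤ y - x)]
      calc dd * (y - x) ≤ τ y - τ x := key
        _ ≤ |τ y - τ x| := le_abs_self _
        _ = |τ x - τ y| := abs_sub_comm _ _
  intro x hx y hy
  rcases le_total x y with hxy | hxy
  · exact main x hx y hy hxy
  · rw [abs_sub_comm x y, abs_sub_comm (τ x) (τ y)]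
    exact main y hy x hx hxy

lemma setLIntegral_le_of_ae_on {u s : Set ℝ} (hu : MeasurableSet u) (hsu : s ⊆ u)
    {F : ℝ → ENNReal} {c : ENNReal} (h : ∀ᵐ x ∂(volume.restrict u), F x ≤ c) :
    ∫⁻ x in s, F x ∂(volume : Measure ℝ) ≤ c * volume s := by
  have heq : (volume : Measure ℝ).restrict s = ((volume : Measure ℝ).restrict u).restrict s := by
    rw [Measure.restrict_restrict' hu, inter_eq_self_of_subset_left hsu]
  calc ∫⁻ x in s, F x ∂(volume : Measure ℝ)
      = ∫⁻ x, F x ∂(((volume : Measure ℝ).restrict u).restrict s) := by rw [← heq]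
    _ ≤ ∫⁻ _x, c ∂(((volume : Measure ℝ).restrict u).restrict s) :=
        lintegral_mono_ae (ae_restrict_of_ae h)
    _ = c * volume s := by
        rw [lintegral_const, Measure.restrict_apply_univ, Measure.restrict_apply' hu, inter_eq_self_of_subset_left hsu]

lemma lintegral_finset_biUnion_le {ι : Type*} (s : Finset ι) (t : ι → Set ℝ)
    (F : ℝ → ENNReal) (μ : Measure ℝ) :
    ∫⁻ x in ⋃ i ∈ s, t i, F x ∂μ ≤ ∑ i ∈ s, ∫⁻ x in t i, F x ∂μ := by
  classical
  induction s using Finset.induction with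
  | empty => simp
  | insert _ _ hnot ih =>
    rename_i a s'
    rw [Finset.set_biUnion_insert, Finset.sum_insert hnot]
    exact (lintegral_union_le _ _ _).trans (add_le_add le_rfl ih)

/-- For `n ≥ N` and `f : [0,1] → ℝ⁺` non-increasing and integrable, any version `g` of
`P_{τ_n} f` satisfies `ess sup g ≤ (a n + D₁) · ess sup f + D · ‖f‖₁`. -/
theorem stmt8 (τ : ℝ → ℝ) (a d : ℕ → ℝ) (N : ℕ)
    (hτ : PCApprox τ a d N) (n : ℕ) (hn : N ≤ n)
    (f g : ℝ → ℝ)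
    (hf_int : MeasureTheory.Integrable f lam)
    (hg_int : MeasureTheory.Integrable g lam)
    (hf_nonneg : ∀ x ∈ Set.Icc (0:ℝ) 1, 0 ≤ f x)
    (hf_mono : AntitoneOn f (Set.Icc 0 1))
    (hg : ∀ A : Set ℝ, MeasurableSet A → A ⊆ Set.Icc 0 1 →
      ∫ x in A, g x ∂lam = ∫ x in (tauN τ a n) ⁻¹' A, f x ∂lam) :
    esssup g ≤ ENNReal.ofReal (a n + D₁ d N) * esssup f
      + ENNReal.ofReal (Dconst a d N * ∫ x, |f x| ∂lam) := by
  have apos : ∀ k, 0 < a k := by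
    intro k
    have h1 : 0 ≤ a (k+1) := by
      have hev : ∀ᶠ j in atTop, a j ≤ a (k+1) := by
        filter_upwards [eventually_ge_atTop (k+1)] with j hj
        exact hτ.a_anti.antitone hj
      exact le_of_tendsto hτ.a_lim hev
    exact lt_of_le_of_lt h1 (hτ.a_anti (Nat.lt_succ_self k))
  have ale1 : ∀ k, a k ≤ 1 := fun k => hτ.a_zero ▸ hτ.a_anti.antitone (Nat.zero_le k)
  have hD₁0 : 0 ≤ D₁ d N := tsum_nonneg fun m => by
    have := hτ.d_pos (m + N); positivity
  have hD0 : 0 ≤ Dconst a d N := Finset.sum_nonneg fun m _ => by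
    have h1 := apos (m+1); have h2 := hτ.d_pos m; positivity
  set L : ℝ := ∫ x, |f x| ∂lam with hLdef
  have hL0 : 0 ≤ L := integral_nonneg fun x => abs_nonneg _
  by_cases hS : esssup f = ⊤
  · have htop : ENNReal.ofReal (a n + D₁ d N) * esssup f = ⊤ := by
      rw [hS, ENNReal.mul_top]
      exact (ENNReal.ofReal_pos.2 (by linarith [apos n])).ne'
    rw [htop, top_add]
    exact le_top
  · haveI hfin_lam : IsFiniteMeasure lam := by
      constructor
      rw [show lam = volume.restrict (Set.Icc 0 1) from rfl, Measure.restrict_apply_univ,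
        Real.volume_Icc]
      exact ENNReal.ofReal_lt_top
    set S : ℝ := (esssup f).toReal with hSdef
    have hS0 : 0 ≤ S := ENNReal.toReal_nonneg
    have hFS : ∀ᵐ x ∂lam, ENNReal.ofReal (f x) ≤ ENNReal.ofReal S := by
      have h := ae_le_essSup (μ := lam) (f := fun x => ENNReal.ofReal (f x))
      filter_upwards [h] with x hx
      rwa [hSdef, ENNReal.ofReal_toReal hS]
    have hFS' : ∀ᵐ x ∂(volume.restrict (Set.Icc (0:ℝ) 1)), ENNReal.ofReal (f x) ≤ ENNReal.ofReal S := hFS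
    have hfa : ∀ t ∈ Set.Ioc (0:ℝ) 1, t * f t ≤ L := by
      intro t ht
      have htI : t ∈ Set.Icc (0:ℝ) 1 := ⟨ht.1.le, ht.2⟩
      have h1 : ∫ x in Set.Icc 0 t, (fun _ => f t) x ∂lam ≤ ∫ x in Set.Icc 0 t, |f x| ∂lam := by
        apply integral_mono_ae ((integrable_const (f t)).restrict) (hf_int.abs.restrict)
        filter_upwards [ae_restrict_mem measurableSet_Icc] with x hx
        have hxI : x ∈ Set.Icc (0:ℝ) 1 := ⟨hx.1, hx.2.trans ht.2⟩
        exact (hf_mono hxI htI hx.2).trans (le_abs_self _)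
      have h2 : ∫ x in Set.Icc 0 t, (fun _ => f t) x ∂lam = t * f t := by
        rw [setIntegral_const, show lam = volume.restrict (Set.Icc 0 1) from rfl,
          measureReal_def, Measure.restrict_apply measurableSet_Icc,
          inter_eq_self_of_subset_left (Set.Icc_subset_Icc le_rfl ht.2),
          Real.volume_Icc, smul_eq_mul, sub_zero, ENNReal.toReal_ofReal ht.1.le]
      have h3 : ∫ x in Set.Icc 0 t, |f x| ∂lam ≤ L :=
        setIntegral_le_integral hf_int.abs (Eventually.of_forall fun x => abs_nonneg _)
      linarith
    set M : ℝ := (a n + D₁ d N) * S + Dconst a d N * L with hMdef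
    have hM0 : 0 ≤ M :=
      add_nonneg (mul_nonneg (by linarith [apos n]) hS0) (mul_nonneg hD0 hL0)
    -- KEY estimate
    have key : ∀ A : Set ℝ, MeasurableSet A → A ⊆ Set.Icc 0 1 →
        ∫ x in (tauN τ a n) ⁻¹' A, f x ∂lam ≤ M * (volume A).toReal := by
      intro A hA hA1
      set T := (tauN τ a n) ⁻¹' A with hTdef
      set F : ℝ → ENNReal := fun x => ENNReal.ofReal (f x) with hFdef
      have hmemlam : ∀ᵐ x ∂lam, x ∈ Set.Icc (0:ℝ) 1 := ae_restrict_mem measurableSet_Icc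
      have hnn : 0 ≤ᵐ[lam.restrict T] f := by
        apply ae_restrict_of_ae
        filter_upwards [hmemlam] with x hx using hf_nonneg x hx
      have h1 : ∫ x in T, f x ∂lam = (∫⁻ x in T, F x ∂lam).toReal :=
        integral_eq_lintegral_of_nonneg_ae hnn hf_int.aestronglyMeasurable.restrict
      have hres : lam.restrict T = volume.restrict (T ∩ Set.Icc 0 1) :=
        Measure.restrict_restrict' measurableSet_Icc
      set B0 := T ∩ Set.Icc 0 1 ∩ Set.Iio (a n) with hB0def
      set B : ℕ → Set ℝ := fun m => T ∩ Set.Ico (a (m+1)) (a m) with hBdef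
      have hBIcc : ∀ m, B m ⊆ Set.Icc (0:ℝ) 1 := by
        intro m x hx
        exact ⟨(apos (m+1)).le.trans hx.2.1, hx.2.2.le.trans (ale1 m)⟩
      -- covering
      have hcover : T ∩ Set.Icc 0 1 ⊆ (B0 ∪ ⋃ m ∈ Finset.range n, B m) ∪ {1} := by
        intro x hx
        by_cases hx1 : x = (1:ℝ)
        · exact Or.inr (by simp [hx1])
        · left
          by_cases hxn : x < a n
          · exact Or.inl ⟨hx, hxn⟩
          · right
            have hxlt1 : x < 1 := lt_of_le_of_ne hx.2.2 hx1
            have hex : ∃ k, a k ≤ x := ⟨n, not_lt.1 hxn⟩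
            have hm0n : Nat.find hex ≤ n := Nat.find_le (not_lt.1 hxn)
            have hm0pos : Nat.find hex ≠ 0 := by
              intro h0
              have := Nat.find_spec hex
              rw [h0, hτ.a_zero] at this
              linarith
            obtain ⟨m, hm⟩ := Nat.exists_eq_succ_of_ne_zero hm0pos
            have hmn : m ∈ Finset.range n := Finset.mem_range.2 (by omega)
            apply Set.mem_biUnion hmn
            refine ⟨hx.1, ?_, ?_⟩
            · have := Nat.find_spec hex; rwa [hm] at this
            · have hmin := Nat.find_min hex (show m < Nat.find hex by omega)
              exact lt_of_not_ge hmin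
      -- piece B0
      have hB0sub : B0 ⊆ (fun x => x * (a n)⁻¹) ⁻¹' A := by
        intro x hx
        have hxT : tauN τ a n x ∈ A := hx.1.1
        have he : tauN τ a n x = x / a n := if_pos hx.2
        rw [he] at hxT
        simpa [div_eq_mul_inv] using hxT
      have hB0vol : volume B0 ≤ ENNReal.ofReal (a n) * volume A := by
        calc volume B0 ≤ volume ((· * (a n)⁻¹) ⁻¹' A) := measure_mono hB0sub
          _ = ENNReal.ofReal |((a n)⁻¹)⁻¹| * volume A :=
              Real.volume_preimage_mul_right (inv_ne_zero (apos n).ne') A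
          _ = ENNReal.ofReal (a n) * volume A := by rw [inv_inv, abs_of_pos (apos n)]
      have hB0int : ∫⁻ x in B0, F x ∂volume ≤ ENNReal.ofReal (a n * S) * volume A := by
        calc ∫⁻ x in B0, F x ∂volume ≤ ENNReal.ofReal S * volume B0 :=
              setLIntegral_le_of_ae_on measurableSet_Icc (fun x hx => hx.1.2) hFS'
          _ ≤ ENNReal.ofReal S * (ENNReal.ofReal (a n) * volume A) :=
              mul_le_mul_right hB0vol _
          _ = ENNReal.ofReal (a n * S) * volume A := by
              rw [← mul_assoc, ← ENNReal.ofReal_mul hS0, mul_comm S (a n)]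
      -- pieces B m
      set r : ℕ → ℝ := fun m => if m < N then L / (a (m+1) * d (m+1)) else S / d (m+1) with hrdef
      have hr0 : ∀ m, 0 ≤ r m := by
        intro m
        have h1 := apos (m+1); have h2 := hτ.d_pos m
        by_cases hmN : m < N
        · simp only [hrdef, if_pos hmN]; positivity
        · simp only [hrdef, if_neg hmN]; positivity
      have hBm : ∀ m, m < n → ∫⁻ x in B m, F x ∂volume ≤ ENNReal.ofReal (r m) * volume A := by
        intro m hmn
        have hIccsub : Set.Ico (a (m+1)) (a m) ⊆ Set.Icc (0:ℝ) 1 := by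
          intro x hx
          exact ⟨(apos (m+1)).le.trans hx.1, hx.2.le.trans (ale1 m)⟩
        have haan : a n ≤ a (m+1) := hτ.a_anti.antitone (by omega)
        have htau : ∀ x ∈ B m, tauN τ a n x = τ x := by
          intro x hx
          exact if_neg (not_lt.2 (haan.trans hx.2.1))
        have himg : τ '' B m ⊆ A := by
          rintro y ⟨x, hx, rfl⟩
          have := hx.1
          rwa [hTdef, Set.mem_preimage, htau x hx] at this
        have hexp := expand_branch (hτ.a_anti (Nat.lt_succ_self m)) (hτ.conv m) (hτ.deriv_a m)
        have hvol : volume (B m) ≤ ENNReal.ofReal (1 / d (m+1)) * volume A := by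
          have hBsub : B m ⊆ Set.Ico (a (m+1)) (a m) := inter_subset_right
          have h5 := volume_le_of_expand (s := B m) (hτ.d_pos m)
            (fun x hx y hy => hexp x (hBsub hx) y (hBsub hy))
          calc volume (B m) ≤ ENNReal.ofReal (d (m+1))⁻¹ * volume (τ '' B m) := h5
            _ ≤ ENNReal.ofReal (d (m+1))⁻¹ * volume A :=
                mul_le_mul_right (measure_mono himg) _
            _ = ENNReal.ofReal (1 / d (m+1)) * volume A := by rw [one_div]
        by_cases hmN : m < N
        · have hfb : ∫⁻ x in B m, F x ∂volume ≤ ENNReal.ofReal (f (a (m+1))) * volume (B m) := by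
            apply setLIntegral_le_of_ae_on measurableSet_Ico (fun x hx => hx.2)
            filter_upwards [ae_restrict_mem measurableSet_Ico] with x hx
            apply ENNReal.ofReal_le_ofReal
            exact hf_mono (hIccsub (Set.left_mem_Ico.2 (hτ.a_anti (Nat.lt_succ_self m))))
              (hIccsub hx) hx.1
          have hfam : 0 ≤ f (a (m+1)) :=
            hf_nonneg _ ⟨(apos (m+1)).le, ale1 (m+1)⟩
          have hram : f (a (m+1)) * (1 / d (m+1)) ≤ r m := by
            simp only [hrdef, if_pos hmN]
            have hfam2 : a (m+1) * f (a (m+1)) ≤ L := hfa _ ⟨apos (m+1), ale1 (m+1)⟩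
            have hd := hτ.d_pos m
            have ha := apos (m+1)
            have hstep : f (a (m+1)) ≤ L / a (m+1) := by
              rw [le_div_iff₀ ha]; linarith [hfam2, mul_comm (a (m+1)) (f (a (m+1)))]
            calc f (a (m+1)) * (1 / d (m+1)) ≤ (L / a (m+1)) * (1 / d (m+1)) :=
                  mul_le_mul_of_nonneg_right hstep (by positivity)
              _ = L / (a (m+1) * d (m+1)) := by field_simp
          calc ∫⁻ x in B m, F x ∂volume ≤ ENNReal.ofReal (f (a (m+1))) * volume (B m) := hfb
            _ ≤ ENNReal.ofReal (f (a (m+1))) * (ENNReal.ofReal (1 / d (m+1)) * volume A) :=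
                mul_le_mul_right hvol _
            _ = ENNReal.ofReal (f (a (m+1)) * (1 / d (m+1))) * volume A := by
                rw [← mul_assoc, ← ENNReal.ofReal_mul hfam]
            _ ≤ ENNReal.ofReal (r m) * volume A :=
                mul_le_mul_left (ENNReal.ofReal_le_ofReal hram) _
        · have hfb : ∫⁻ x in B m, F x ∂volume ≤ ENNReal.ofReal S * volume (B m) :=
            setLIntegral_le_of_ae_on measurableSet_Icc (hBIcc m) hFS'
          have hram : S * (1 / d (m+1)) ≤ r m := by
            simp only [hrdef, if_neg hmN]
            rw [mul_one_div]
          calc ∫⁻ x in B m, F x ∂volume ≤ ENNReal.ofReal S * volume (B m) := hfb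
            _ ≤ ENNReal.ofReal S * (ENNReal.ofReal (1 / d (m+1)) * volume A) :=
                mul_le_mul_right hvol _
            _ = ENNReal.ofReal (S * (1 / d (m+1))) * volume A := by
                rw [← mul_assoc, ← ENNReal.ofReal_mul hS0]
            _ ≤ ENNReal.ofReal (r m) * volume A :=
                mul_le_mul_left (ENNReal.ofReal_le_ofReal hram) _
      -- real inequality
      have hreal : a n * S + ∑ m ∈ Finset.range n, r m ≤ M := by
        have hsplit : ∑ m ∈ Finset.range N, r m + ∑ m ∈ Finset.Ico N n, r m
            = ∑ m ∈ Finset.range n, r m := Finset.sum_range_add_sum_Ico r hn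
        have hpart1 : ∑ m ∈ Finset.range N, r m = Dconst a d N * L := by
          rw [Dconst, Finset.sum_mul]
          apply Finset.sum_congr rfl
          intro m hm
          simp only [hrdef, if_pos (Finset.mem_range.1 hm)]
          rw [div_eq_mul_inv, one_div, mul_comm]
        have hpart2 : ∑ m ∈ Finset.Ico N n, r m ≤ S * D₁ d N := by
          have he : ∀ m ∈ Finset.Ico N n, r m = S * (1 / d (m+1)) := by
            intro m hm
            simp only [hrdef, if_neg (not_lt.2 (Finset.mem_Ico.1 hm).1)]
            rw [mul_one_div]
          rw [Finset.sum_congr rfl he, ← Finset.mul_sum]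
          apply mul_le_mul_of_nonneg_left _ hS0
          have hsummable : Summable (fun m => 1 / d (m + N + 1)) := by
            have := (_root_.summable_nat_add_iff (f := fun m => 1 / d (m+1)) N).2 hτ.sum_d
            exact this
          rw [Finset.sum_Ico_eq_sum_range]
          have he2 : ∀ i, 1 / d (N + i + 1) = 1 / d (i + N + 1) := by
            intro i; rw [Nat.add_comm N i]
          calc ∑ i ∈ Finset.range (n - N), 1 / d (N + i + 1)
              = ∑ i ∈ Finset.range (n - N), 1 / d (i + N + 1) := by
                apply Finset.sum_congr rfl; intro i _; exact he2 i
            _ ≤ D₁ d N := by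
                rw [D₁]
                apply Summable.sum_le_tsum _ (fun i _ => by have := hτ.d_pos (i + N); positivity) hsummable
        calc a n * S + ∑ m ∈ Finset.range n, r m
            = a n * S + (∑ m ∈ Finset.range N, r m + ∑ m ∈ Finset.Ico N n, r m) := by
              rw [hsplit]
          _ ≤ a n * S + (Dconst a d N * L + S * D₁ d N) := by
              rw [hpart1]; linarith [hpart2]
          _ = M := by rw [hMdef]; ring
      -- assemble lintegral bound
      have hlin : ∫⁻ x in T, F x ∂lam ≤ ENNReal.ofReal M * volume A := by
        calc ∫⁻ x in T, F x ∂lam = ∫⁻ x in T ∩ Set.Icc 0 1, F x ∂volume := by rw [hres]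
          _ ≤ ∫⁻ x in (B0 ∪ ⋃ m ∈ Finset.range n, B m) ∪ {1}, F x ∂volume :=
              lintegral_mono_set hcover
          _ ≤ (∫⁻ x in B0 ∪ ⋃ m ∈ Finset.range n, B m, F x ∂volume)
              + ∫⁻ x in ({1} : Set ℝ), F x ∂volume := lintegral_union_le _ _ _
          _ ≤ ((∫⁻ x in B0, F x ∂volume) + ∫⁻ x in ⋃ m ∈ Finset.range n, B m, F x ∂volume) + 0 := by
              apply add_le_add (lintegral_union_le _ _ _)
              rw [setLIntegral_measure_zero _ _ (by simp : volume ({1} : Set ℝ) = 0)]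
          _ ≤ (ENNReal.ofReal (a n * S) * volume A
              + ∑ m ∈ Finset.range n, ENNReal.ofReal (r m) * volume A) + 0 := by
              apply add_le_add _ le_rfl
              apply add_le_add hB0int
              calc ∫⁻ x in ⋃ m ∈ Finset.range n, B m, F x ∂volume
                  ≤ ∑ m ∈ Finset.range n, ∫⁻ x in B m, F x ∂volume :=
                    lintegral_finset_biUnion_le _ _ _ _
                _ ≤ ∑ m ∈ Finset.range n, ENNReal.ofReal (r m) * volume A := by
                    apply Finset.sum_le_sum
                    intro m hm
                    exact hBm m (Finset.mem_range.1 hm)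
          _ = ENNReal.ofReal (a n * S + ∑ m ∈ Finset.range n, r m) * volume A := by
              rw [add_zero, ← Finset.sum_mul, ← add_mul,
                ← ENNReal.ofReal_sum_of_nonneg (fun i _ => hr0 i),
                ← ENNReal.ofReal_add (mul_nonneg (apos n).le hS0)
                  (Finset.sum_nonneg fun i _ => hr0 i)]
          _ ≤ ENNReal.ofReal M * volume A :=
              mul_le_mul_left (ENNReal.ofReal_le_ofReal hreal) _
      have hfinA : ENNReal.ofReal M * volume A ≠ ⊤ := by
        apply ENNReal.mul_ne_top ENNReal.ofReal_ne_top
        exact ((measure_mono hA1).trans_lt (by rw [Real.volume_Icc]; exact ENNReal.ofReal_lt_top)).ne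
      calc ∫ x in T, f x ∂lam = (∫⁻ x in T, F x ∂lam).toReal := h1
        _ ≤ (ENNReal.ofReal M * volume A).toReal := ENNReal.toReal_mono hfinA hlin
        _ = M * (volume A).toReal := by
            rw [ENNReal.toReal_mul, ENNReal.toReal_ofReal hM0]
      -- end key
    -- derive g ≤ M a.e.
    have h0 : 0 ≤ᵐ[lam] fun x => M - g x := by
      apply ae_nonneg_of_forall_setIntegral_nonneg ((integrable_const M).sub hg_int)
      intro s hs _
      simp only [Pi.sub_apply]
      have hlamres : lam.restrict s = lam.restrict (s ∩ Set.Icc 0 1) := by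
        rw [show lam = volume.restrict (Set.Icc 0 1) from rfl,
          Measure.restrict_restrict' measurableSet_Icc,
          Measure.restrict_restrict' measurableSet_Icc, inter_assoc, inter_self]
      have hint : ∫ x in s, g x ∂lam = ∫ x in s ∩ Set.Icc 0 1, g x ∂lam := by
        rw [show (∫ x in s, g x ∂lam) = ∫ x, g x ∂(lam.restrict s) from rfl, hlamres]
      have hgA := hg (s ∩ Set.Icc 0 1) (hs.inter measurableSet_Icc) inter_subset_right
      have hkey := key (s ∩ Set.Icc 0 1) (hs.inter measurableSet_Icc) inter_subset_right
      have hlams : lam s = volume (s ∩ Set.Icc 0 1) := by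
        rw [show lam = volume.restrict (Set.Icc 0 1) from rfl, Measure.restrict_apply hs]
      rw [integral_sub (integrable_const M).restrict hg_int.restrict]
      rw [setIntegral_const, smul_eq_mul, hint, hgA]
      have : ∫ x in (tauN τ a n) ⁻¹' (s ∩ Set.Icc 0 1), f x ∂lam
          ≤ M * (volume (s ∩ Set.Icc 0 1)).toReal := hkey
      rw [measureReal_def, hlams]
      linarith [this, mul_comm ((volume (s ∩ Set.Icc 0 1)).toReal) M]
    have gle : ∀ᵐ x ∂lam, g x ≤ M := by
      filter_upwards [h0] with x hx
      simpa [sub_nonneg] using hx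
    have hgess : esssup g ≤ ENNReal.ofReal M := by
      refine essSup_le_of_ae_le _ ?_
      filter_upwards [gle] with x hx
      exact ENNReal.ofReal_le_ofReal hx
    calc esssup g ≤ ENNReal.ofReal M := hgess
      _ = ENNReal.ofReal ((a n + D₁ d N) * S) + ENNReal.ofReal (Dconst a d N * L) := by
          rw [hMdef, ENNReal.ofReal_add (mul_nonneg (by linarith [apos n]) hS0)
            (mul_nonneg hD0 hL0)]
      _ = ENNReal.ofReal (a n + D₁ d N) * esssup f + ENNReal.ofReal (Dconst a d N * L) := by
          rw [ENNReal.ofReal_mul (by linarith [apos n]), hSdef, ENNReal.ofReal_toReal hS]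
      _ = _ := rfl
end

section
/- In the setting of the approximating maps τ_n, for each n ≥ N there exists a non-increasing, non-negative function f_n ∈ L¹(I,λ) with ∫₀¹ f_n dλ = 1 such that the probability measure μ_n = f_n·λ is τ_n-invariant (i.e., μ_n(τ_n⁻¹(A)) = μ_n(A) for every Borel set A ⊆ [0,1]). -/
open MeasureTheory Set Filter

section Stmt10AuxSec
open Topology
namespace Stmt10Aux

/-- Class of "nice distribution functions" on `[0,1]`: monotone, concave,
pinned at the endpoints, with slope at `0` bounded by `M`. -/
structure DF (M : ℝ) (F : ℝ → ℝ) : Prop where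
  mono : MonotoneOn F (Set.Icc 0 1)
  conc : ∀ u ∈ Set.Icc (0:ℝ) 1, ∀ v ∈ Set.Icc (0:ℝ) 1, ∀ t ∈ Set.Icc (0:ℝ) 1,
      t * F u + (1 - t) * F v ≤ F (t * u + (1 - t) * v)
  zero : F 0 = 0
  one : F 1 = 1
  bound : ∀ x ∈ Set.Icc (0:ℝ) 1, F x ≤ M * x

variable {M : ℝ} {F : ℝ → ℝ}

lemma comb_mem {u v t : ℝ} (hu : u ∈ Set.Icc (0:ℝ) 1) (hv : v ∈ Set.Icc (0:ℝ) 1)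
    (ht : t ∈ Set.Icc (0:ℝ) 1) : t * u + (1 - t) * v ∈ Set.Icc (0:ℝ) 1 := by
  obtain ⟨h1, h2⟩ := hu; obtain ⟨h3, h4⟩ := hv; obtain ⟨h5, h6⟩ := ht
  constructor <;> nlinarith

lemma DF.nonneg (hF : DF M F) {x : ℝ} (hx : x ∈ Set.Icc (0:ℝ) 1) : 0 ≤ F x := by
  rw [← hF.zero]; exact hF.mono (by simp) hx hx.1

lemma DF.le_one (hF : DF M F) {x : ℝ} (hx : x ∈ Set.Icc (0:ℝ) 1) : F x ≤ 1 := by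
  rw [← hF.one]; exact hF.mono hx (by simp) hx.2

/-- Chord inequality: slopes of a concave function decrease. -/
lemma DF.chord (hF : DF M F) {x y z : ℝ} (hx : 0 ≤ x) (hxy : x < y) (hyz : y < z)
    (hz : z ≤ 1) : (F z - F y) * (y - x) ≤ (F y - F x) * (z - y) := by
  have hxm : x ∈ Set.Icc (0:ℝ) 1 := ⟨hx, by linarith⟩
  have hzm : z ∈ Set.Icc (0:ℝ) 1 := ⟨by linarith, hz⟩
  have ht : (z - y) / (z - x) ∈ Set.Icc (0:ℝ) 1 := by
    constructor
    · apply div_nonneg <;> linarith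
    · rw [div_le_one (by linarith)]; linarith
  have h := hF.conc x hxm z hzm _ ht
  have hzx : z - x ≠ 0 := by linarith
  have h2 : (z - y) / (z - x) * x + (1 - (z - y) / (z - x)) * z = y := by
    field_simp
    ring
  rw [h2] at h
  have h3 : (0:ℝ) < z - x := by linarith
  have h4 : (z - y) / (z - x) * F x + (1 - (z - y) / (z - x)) * F z
      = ((z - y) * F x + (y - x) * F z) / (z - x) := by
    field_simp
    ring
  rw [h4, div_le_iff₀ h3] at h
  nlinarith

/-- From concavity through the origin: `F v - F u ≤ F u * (v - u) / u`. -/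
lemma DF.slope_origin (hF : DF M F) {u v : ℝ} (hu : 0 < u) (huv : u ≤ v) (hv : v ≤ 1) :
    F v - F u ≤ F u * (v - u) / u := by
  rcases eq_or_lt_of_le huv with rfl | huv'
  · simp [le_div_iff₀ hu]
  have hvm : v ∈ Set.Icc (0:ℝ) 1 := ⟨by linarith, hv⟩
  have ht : u / v ∈ Set.Icc (0:ℝ) 1 := by
    constructor
    · apply div_nonneg <;> linarith
    · rw [div_le_one (by linarith)]; linarith
  have h := hF.conc v hvm 0 ⟨le_refl _, zero_le_one⟩ _ ht
  rw [hF.zero] at h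
  have hvne : v ≠ 0 := by linarith
  have h2 : u / v * v + (1 - u / v) * 0 = u := by field_simp; ring
  rw [h2] at h
  have hFv : 0 ≤ F v := hF.nonneg hvm
  rw [le_div_iff₀ hu]
  have hvpos : (0:ℝ) < v := by linarith
  have h3 : u / v * F v ≤ F u := by linarith
  have h4 : u * F v ≤ v * F u := by
    have h5 := mul_le_mul_of_nonneg_left h3 hvpos.le
    have h6 : v * (u / v * F v) = u * F v := by field_simp
    nlinarith
  nlinarith



lemma DF.one_le_M (hF : DF M F) : 1 ≤ M := by
  have h := hF.bound 1 ⟨zero_le_one, le_refl 1⟩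
  rw [hF.one, mul_one] at h; exact h

/-- Right-derivative-like slope supremum. -/
noncomputable def gslope (F : ℝ → ℝ) (x : ℝ) : ℝ :=
  sSup ((fun y => (F y - F x) / (y - x)) '' Set.Ioc x 1)

/-- The density: `gslope` clamped to `[0,1]`, with value `0` at `1` and beyond. -/
noncomputable def dens (F : ℝ → ℝ) : ℝ → ℝ :=
  fun x => if max 0 (min 1 x) < 1 then gslope F (max 0 (min 1 x)) else 0

lemma slope_le_M (hF : DF M F) {x y : ℝ} (hx : 0 ≤ x) (hxy : x < y) (hy : y ≤ 1) :
    (F y - F x) / (y - x) ≤ M := by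
  rw [div_le_iff₀ (by linarith)]
  rcases eq_or_lt_of_le hx with h|hx'
  · have hb := hF.bound y ⟨by linarith, hy⟩
    rw [← h, hF.zero]
    nlinarith
  · have hc := hF.chord (le_refl 0) hx' hxy hy
    rw [hF.zero, sub_zero, sub_zero] at hc
    have hb := hF.bound x ⟨hx, by linarith⟩
    nlinarith

lemma bddAbove_slopes (hF : DF M F) {x : ℝ} (hx : 0 ≤ x) :
    BddAbove ((fun y => (F y - F x) / (y - x)) '' Set.Ioc x 1) := by
  refine ⟨M, ?_⟩
  rintro s ⟨y, hy, rfl⟩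
  exact slope_le_M hF hx hy.1 hy.2

lemma nonempty_slopes {x : ℝ} (hx : x < 1) :
    ((fun y => (F y - F x) / (y - x)) '' Set.Ioc x 1).Nonempty :=
  ⟨_, ⟨1, ⟨hx, le_refl 1⟩, rfl⟩⟩

lemma gslope_nonneg (hF : DF M F) {x : ℝ} (hx : 0 ≤ x) (hx1 : x < 1) :
    0 ≤ gslope F x := by
  have h1 : (F 1 - F x) / (1 - x) ∈ (fun y => (F y - F x) / (y - x)) '' Set.Ioc x 1 :=
    ⟨1, ⟨hx1, le_refl 1⟩, rfl⟩
  refine le_trans ?_ (le_csSup (bddAbove_slopes hF hx) h1)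
  have := hF.mono ⟨hx, hx1.le⟩ ⟨by linarith, le_refl 1⟩ hx1.le
  apply div_nonneg <;> linarith

lemma gslope_le_M (hF : DF M F) {x : ℝ} (hx : 0 ≤ x) : gslope F x ≤ M := by
  by_cases hx1 : x < 1
  · exact csSup_le (nonempty_slopes hx1) (by rintro s ⟨y, hy, rfl⟩; exact slope_le_M hF hx hy.1 hy.2)
  · have : Set.Ioc x 1 = ∅ := Set.Ioc_eq_empty (by intro h; exact hx1 (by linarith))
    rw [gslope, this, Set.image_empty, Real.sSup_empty]
    linarith [hF.one_le_M]

lemma step_up (hF : DF M F) {u v : ℝ} (h0 : 0 ≤ u) (huv : u < v) (hv : v ≤ 1) :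
    F v - F u ≤ gslope F u * (v - u) := by
  have hm : (F v - F u) / (v - u) ≤ gslope F u :=
    le_csSup (bddAbove_slopes hF h0) (Set.mem_image_of_mem _ ⟨huv, hv⟩)
  rw [div_le_iff₀ (by linarith)] at hm
  linarith

lemma step_down (hF : DF M F) {u v : ℝ} (h0 : 0 ≤ u) (huv : u < v) (hv1 : v < 1) :
    gslope F v * (v - u) ≤ F v - F u := by
  have hm : gslope F v ≤ (F v - F u) / (v - u) := by
    refine csSup_le (nonempty_slopes hv1) ?_
    rintro s ⟨z, hz, rfl⟩
    have hc := hF.chord h0 huv hz.1 hz.2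
    rw [div_le_div_iff₀ (by linarith [hz.1]) (by linarith)]
    nlinarith
  rw [le_div_iff₀ (by linarith)] at hm
  linarith

lemma clamp_mem (x : ℝ) : max 0 (min 1 x) ∈ Set.Icc (0:ℝ) 1 :=
  ⟨le_max_left _ _, max_le (by norm_num) (min_le_left _ _)⟩

lemma clamp_of_mem {x : ℝ} (hx : x ∈ Set.Icc (0:ℝ) 1) : max 0 (min 1 x) = x := by
  rw [min_eq_right hx.2, max_eq_right hx.1]

lemma dens_eq {x : ℝ} (hx0 : 0 ≤ x) (hx1 : x < 1) : dens F x = gslope F x := by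
  rw [dens, clamp_of_mem ⟨hx0, hx1.le⟩, if_pos hx1]

lemma dens_of_ge {x : ℝ} (hx : 1 ≤ x) : dens F x = 0 := by
  rw [dens, min_eq_left hx, max_eq_right zero_le_one, if_neg (lt_irrefl 1)]

lemma gslope_anti (hF : DF M F) {x₁ x₂ : ℝ} (h0 : 0 ≤ x₁) (h12 : x₁ ≤ x₂) (h2 : x₂ < 1) :
    gslope F x₂ ≤ gslope F x₁ := by
  rcases eq_or_lt_of_le h12 with rfl|h12'
  · exact le_refl _
  have h1 := step_down hF h0 h12' h2
  have h2' := step_up hF h0 h12' h2.le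
  have hpos : (0:ℝ) < x₂ - x₁ := by linarith
  nlinarith

lemma dens_nonneg (hF : DF M F) (x : ℝ) : 0 ≤ dens F x := by
  rw [dens]
  split_ifs with h
  · exact gslope_nonneg hF (clamp_mem x).1 h
  · exact le_refl 0

lemma dens_le_M (hF : DF M F) (x : ℝ) : dens F x ≤ M := by
  rw [dens]
  split_ifs with h
  · exact gslope_le_M hF (clamp_mem x).1
  · linarith [hF.one_le_M]

lemma dens_antitone (hF : DF M F) : Antitone (dens F) := by
  intro y₁ y₂ h
  have hc : max 0 (min 1 y₁) ≤ max 0 (min 1 y₂) :=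
    max_le_max (le_refl 0) (min_le_min (le_refl 1) h)
  unfold dens
  split_ifs with h2 h1 h1
  · exact gslope_anti hF (clamp_mem y₁).1 hc h2
  · exact absurd (lt_of_le_of_lt hc h2) h1
  · exact gslope_nonneg hF (clamp_mem y₁).1 h1
  · exact le_refl 0

lemma dens_antitoneOn (hF : DF M F) : AntitoneOn (dens F) (Set.Icc 0 1) :=
  (dens_antitone hF).antitoneOn _

lemma dens_measurable (hF : DF M F) : Measurable (dens F) :=
  (dens_antitone hF).measurable


lemma dens_intervalIntegrable (hF : DF M F) (u v : ℝ) :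
    IntervalIntegrable (dens F) volume u v :=
  (dens_antitone hF).intervalIntegrable

/-- Fundamental theorem of calculus for the concave function `F` and its density. -/
lemma integral_dens (hF : DF M F) {x : ℝ} (hx : x ∈ Set.Icc (0:ℝ) 1) :
    ∫ t in (0:ℝ)..x, dens F t = F x := by
  rcases eq_or_lt_of_le hx.1 with h|hx0
  · rw [← h, intervalIntegral.integral_same, hF.zero]
  have key : ∀ n : ℕ, 0 < n → |(∫ t in (0:ℝ)..x, dens F t) - F x| ≤ M * x / n := by
    intro n hn
    have hn0 : (n:ℝ) ≠ 0 := Nat.cast_ne_zero.2 hn.ne'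
    set δ := x / n with hδ
    have hδ0 : 0 < δ := div_pos hx0 (Nat.cast_pos.2 hn)
    set pts : ℕ → ℝ := fun i => i * δ with hpts
    have hpts0 : pts 0 = 0 := by simp [hpts]
    have hptsn : pts n = x := by
      rw [hpts]; show (n:ℝ) * δ = x; rw [hδ]; field_simp
    have hstep : ∀ i : ℕ, pts (i+1) = pts i + δ := by
      intro i; rw [hpts]; push_cast; ring
    have hlt : ∀ i : ℕ, pts i < pts (i+1) := fun i => by rw [hstep]; linarith
    have hmono : Monotone pts := monotone_nat_of_le_succ (fun i => (hlt i).le)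
    have hmem : ∀ i ≤ n, pts i ∈ Set.Icc (0:ℝ) 1 := by
      intro i hi
      refine ⟨by rw [hpts]; positivity, ?_⟩
      calc pts i ≤ pts n := hmono hi
      _ = x := hptsn
      _ ≤ 1 := hx.2
    have hint : ∀ i, IntervalIntegrable (dens F) volume (pts i) (pts (i+1)) :=
      fun i => dens_intervalIntegrable hF _ _
    have hsum_int : ∑ i ∈ Finset.range n, ∫ t in pts i..pts (i+1), dens F t
        = ∫ t in (0:ℝ)..x, dens F t := by
      have h := intervalIntegral.sum_integral_adjacent_intervals (μ := volume)
        (a := pts) (n := n) (fun k _ => hint k)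
      rw [hpts0, hptsn] at h; exact h
    have hsum_F : ∑ i ∈ Finset.range n, (F (pts (i+1)) - F (pts i)) = F x := by
      rw [Finset.sum_range_sub (fun i => F (pts i)), hpts0, hptsn, hF.zero, sub_zero]
    have hterm : ∀ i < n,
        |(∫ t in pts i..pts (i+1), dens F t) - (F (pts (i+1)) - F (pts i))|
          ≤ (dens F (pts i) - dens F (pts (i+1))) * δ := by
      intro i hi
      have hi1 : i + 1 ≤ n := hi
      have hui : pts i ∈ Set.Icc (0:ℝ) 1 := hmem i (le_of_lt hi)
      have hvi : pts (i+1) ∈ Set.Icc (0:ℝ) 1 := hmem (i+1) hi1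
      have hlt' := hlt i
      have hu1 : pts i < 1 := lt_of_lt_of_le hlt' hvi.2
      have hdiff : pts (i+1) - pts i = δ := by rw [hstep]; ring
      -- integral bounds
      have hIub : (∫ t in pts i..pts (i+1), dens F t) ≤ dens F (pts i) * δ := by
        have h := intervalIntegral.integral_mono_on (μ := volume) hlt'.le (hint i)
          (intervalIntegrable_const) (fun t ht => dens_antitone hF ht.1)
        rw [intervalIntegral.integral_const, smul_eq_mul, hdiff] at h
        linarith [h]
      have hIlb : dens F (pts (i+1)) * δ ≤ ∫ t in pts i..pts (i+1), dens F t := by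
        have h := intervalIntegral.integral_mono_on (μ := volume) hlt'.le
          (intervalIntegrable_const) (hint i) (fun t ht => dens_antitone hF ht.2)
        rw [intervalIntegral.integral_const, smul_eq_mul, hdiff] at h
        linarith [h]
      -- F bounds
      have hFub : F (pts (i+1)) - F (pts i) ≤ dens F (pts i) * δ := by
        have h1 := step_up hF hui.1 hlt' hvi.2
        rw [← dens_eq hui.1 hu1, hdiff] at h1
        exact h1
      have hFlb : dens F (pts (i+1)) * δ ≤ F (pts (i+1)) - F (pts i) := by
        by_cases h1 : pts (i+1) < 1
        · have h2 := step_down hF hui.1 hlt' h1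
          rw [← dens_eq hvi.1 h1, hdiff] at h2
          exact h2
        · push_neg at h1
          rw [dens_of_ge h1, zero_mul]
          have := hF.mono hui hvi hlt'.le
          linarith
      rw [abs_le]
      constructor <;> linarith
    -- sum up
    have htot : |(∫ t in (0:ℝ)..x, dens F t) - F x|
        ≤ ∑ i ∈ Finset.range n, (dens F (pts i) - dens F (pts (i+1))) * δ := by
      rw [← hsum_int, ← hsum_F, ← Finset.sum_sub_distrib]
      refine le_trans (Finset.abs_sum_le_sum_abs _ _) ?_
      exact Finset.sum_le_sum (fun i hi => hterm i (Finset.mem_range.1 hi))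
    have htel : ∑ i ∈ Finset.range n, (dens F (pts i) - dens F (pts (i+1))) * δ
        = (dens F (pts 0) - dens F (pts n)) * δ := by
      rw [← Finset.sum_mul, Finset.sum_range_sub' (fun i => dens F (pts i))]
    have hbd : (dens F (pts 0) - dens F (pts n)) * δ ≤ M * x / n := by
      have h1 : dens F (pts 0) ≤ M := dens_le_M hF _
      have h2 : 0 ≤ dens F (pts n) := dens_nonneg hF _
      have : (dens F (pts 0) - dens F (pts n)) * δ ≤ M * δ := by nlinarith
      calc (dens F (pts 0) - dens F (pts n)) * δ ≤ M * δ := this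
        _ = M * x / n := by rw [hδ]; ring
    linarith [htot, htel ▸ htot]
  -- conclude by letting n → ∞
  have hlim : Tendsto (fun n : ℕ => M * x / n) atTop (𝓝 0) :=
    tendsto_const_div_atTop_nhds_zero_nat _
  have habs : |(∫ t in (0:ℝ)..x, dens F t) - F x| ≤ 0 := by
    refine ge_of_tendsto hlim ?_
    filter_upwards [eventually_ge_atTop 1] with n hn
    exact key n hn
  have := abs_nonpos_iff.1 habs
  linarith [sub_eq_zero.1 this, (sub_eq_zero.1 this).le]



variable {τ : ℝ → ℝ} {a d : ℕ → ℝ} {N : ℕ}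

lemma a_nonneg (hτ : PCApprox τ a d N) (m : ℕ) : 0 ≤ a m := by
  refine le_of_tendsto hτ.a_lim ?_
  filter_upwards [eventually_ge_atTop (m+1)] with k hk
  exact (hτ.a_anti (lt_of_lt_of_le (Nat.lt_succ_self m) hk)).le

lemma a_pos (hτ : PCApprox τ a d N) (m : ℕ) : 0 < a m :=
  lt_of_le_of_lt (a_nonneg hτ (m+1)) (hτ.a_anti (Nat.lt_succ_self m))

lemma a_succ_lt (hτ : PCApprox τ a d N) (m : ℕ) : a (m+1) < a m :=
  hτ.a_anti (Nat.lt_succ_self m)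

lemma a_le_one (hτ : PCApprox τ a d N) (m : ℕ) : a m ≤ 1 := by
  rw [← hτ.a_zero]; exact hτ.a_anti.antitone (Nat.zero_le m)

lemma branch_subset (hτ : PCApprox τ a d N) (k : ℕ) :
    Set.Ico (a (k+1)) (a k) ⊆ Set.Icc 0 1 := fun y hy =>
  ⟨le_trans (a_pos hτ (k+1)).le hy.1, le_trans hy.2.le (a_le_one hτ k)⟩

lemma tau_mem01 (hτ : PCApprox τ a d N) {k : ℕ} {y : ℝ} (hy : y ∈ Set.Ico (a (k+1)) (a k)) :
    τ y ∈ Set.Icc (0:ℝ) 1 := hτ.mapsTo (branch_subset hτ k hy)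

/-- Convexity chord through the left endpoint: for `c < z ≤ y` in the branch,
`τ z * (y - c) ≤ τ y * (z - c)`. -/
lemma tau_chord0 (hτ : PCApprox τ a d N) {k : ℕ} {z y : ℝ}
    (hy : y ∈ Set.Ico (a (k+1)) (a k)) (hz1 : a (k+1) < z) (hz2 : z ≤ y) :
    τ z * (y - a (k+1)) ≤ τ y * (z - a (k+1)) := by
  set c := a (k+1) with hc
  have hcy : c < y := lt_of_lt_of_le hz1 hz2
  have hzmem : z ∈ Set.Ico (a (k+1)) (a k) := ⟨hz1.le, lt_of_le_of_lt hz2 hy.2⟩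
  have hcmem : c ∈ Set.Ico (a (k+1)) (a k) := ⟨le_refl _, lt_trans hcy hy.2⟩
  set s := (z - c) / (y - c) with hs
  have hs0 : 0 ≤ s := by apply div_nonneg <;> linarith
  have hs1 : s ≤ 1 := by rw [hs, div_le_one (by linarith)]; linarith
  have hco := (hτ.conv k).2 hcmem hy (by linarith : (0:ℝ) ≤ 1 - s) hs0 (by ring)
  simp only [smul_eq_mul] at hco
  have hyc : y - c ≠ 0 := sub_ne_zero.2 (ne_of_gt hcy)
  have hzz : (1 - s) * c + s * y = z := by rw [hs]; field_simp; ring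
  rw [hzz, hτ.map_a k] at hco
  -- hco : τ z ≤ (1-s)*0 + s * τ y
  have h2 : τ z ≤ s * τ y := by linarith
  have h3 : (y - c) * τ z ≤ (y - c) * (s * τ y) := by
    apply mul_le_mul_of_nonneg_left h2; linarith
  have hs' : (y - c) * s = z - c := by rw [hs]; field_simp
  calc τ z * (y - c) = (y - c) * τ z := by ring
    _ ≤ (y - c) * (s * τ y) := h3
    _ = ((y - c) * s) * τ y := by ring
    _ = (z - c) * τ y := by rw [hs']
    _ = τ y * (z - c) := by ring

/-- The slope from the left endpoint is at least `d (k+1)`. -/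
lemma tau_lower (hτ : PCApprox τ a d N) {k : ℕ} {y : ℝ}
    (hy : y ∈ Set.Ico (a (k+1)) (a k)) :
    d (k+1) * (y - a (k+1)) ≤ τ y := by
  set c := a (k+1) with hc
  rcases eq_or_lt_of_le hy.1 with h|hcy
  · rw [← h, hτ.map_a k]; simp
  have hd := hτ.deriv_a k
  rw [hasDerivWithinAt_iff_tendsto_slope, Set.Ici_sdiff_left] at hd
  have hslope : d (k+1) ≤ slope τ c y := by
    refine le_of_tendsto hd ?_
    filter_upwards [Ioo_mem_nhdsGT hcy] with z hz
    have hzy : z ≤ y := hz.2.le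
    have hch := tau_chord0 hτ hy hz.1 hzy
    rw [slope_def_field, slope_def_field]
    rw [hτ.map_a k]
    rw [div_le_div_iff₀ (by linarith [hz.1]) (by linarith)]
    nlinarith [hch]
  rw [slope_def_field, hτ.map_a k] at hslope
  rw [le_div_iff₀ (by linarith)] at hslope
  nlinarith [hslope]

/-- Uniform expansion within a branch. -/
lemma tau_gap (hτ : PCApprox τ a d N) {k : ℕ} {u v : ℝ} (hu : a (k+1) ≤ u) (huv : u ≤ v)
    (hv : v < a k) : d (k+1) * (v - u) ≤ τ v - τ u := by
  set c := a (k+1) with hc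
  have hvmem : v ∈ Set.Ico (a (k+1)) (a k) := ⟨le_trans hu huv, hv⟩
  rcases eq_or_lt_of_le hu with h|hcu
  · have h1 := tau_lower hτ hvmem
    rw [← h, hτ.map_a k]
    linarith
  rcases eq_or_lt_of_le huv with h|huv'
  · rw [h]; simp
  have humem : u ∈ Set.Ico (a (k+1)) (a k) := ⟨hu, lt_trans huv' hv⟩
  have h1 := tau_chord0 hτ hvmem hcu huv
  have h2 := tau_lower hτ humem
  -- (v-c) * τ u ≤ (u-c) * τ v  and  d(u-c) ≤ τ u  give  d(v-u) ≤ τ v - τ u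
  have h3 : (u - c) * (τ v - τ u) ≥ (v - u) * τ u := by nlinarith [h1]
  have h4 : (v - u) * τ u ≥ (v - u) * (d (k+1) * (u - c)) := by
    apply mul_le_mul_of_nonneg_left h2; linarith
  have h5 : (u - c) * (τ v - τ u) ≥ (u - c) * (d (k+1) * (v - u)) := by nlinarith
  have h6 : (0:ℝ) < u - c := by linarith
  nlinarith [h5]

lemma tau_monoOn (hτ : PCApprox τ a d N) {k : ℕ} {u v : ℝ} (hu : a (k+1) ≤ u) (huv : u ≤ v)
    (hv : v < a k) : τ u ≤ τ v := by
  have := tau_gap hτ hu huv hv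
  nlinarith [hτ.d_pos k]

/-- The sublevel set of branch `k`. -/
def S (τ : ℝ → ℝ) (a : ℕ → ℝ) (k : ℕ) (x : ℝ) : Set ℝ :=
  {y | y ∈ Set.Ico (a (k+1)) (a k) ∧ τ y ≤ x}

/-- The (upper) inverse of branch `k` at `x`. -/
noncomputable def psiK (τ : ℝ → ℝ) (a : ℕ → ℝ) (k : ℕ) (x : ℝ) : ℝ := sSup (S τ a k x)

lemma S_mem_left (hτ : PCApprox τ a d N) (k : ℕ) {x : ℝ} (hx : 0 ≤ x) :
    a (k+1) ∈ S τ a k x :=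
  ⟨⟨le_refl _, a_succ_lt hτ k⟩, by rw [hτ.map_a k]; exact hx⟩

lemma S_bddAbove (k : ℕ) (x : ℝ) : BddAbove (S τ a k x) :=
  ⟨a k, fun y hy => hy.1.2.le⟩

lemma psiK_mem (hτ : PCApprox τ a d N) (k : ℕ) {x : ℝ} (hx : 0 ≤ x) :
    psiK τ a k x ∈ Set.Icc (a (k+1)) (a k) := by
  constructor
  · exact le_csSup (S_bddAbove k x) (S_mem_left hτ k hx)
  · exact csSup_le ⟨_, S_mem_left hτ k hx⟩ (fun y hy => hy.1.2.le)

lemma psiK_zero (hτ : PCApprox τ a d N) (k : ℕ) : psiK τ a k 0 = a (k+1) := by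
  refine le_antisymm ?_ (psiK_mem hτ k (le_refl 0)).1
  refine csSup_le ⟨_, S_mem_left hτ k (le_refl 0)⟩ ?_
  intro y hy
  have h1 := tau_lower hτ hy.1
  have h2 := hτ.d_pos k
  nlinarith [hy.2]

lemma psiK_of_one_le (hτ : PCApprox τ a d N) (k : ℕ) {x : ℝ} (hx : 1 ≤ x) :
    psiK τ a k x = a k := by
  have hS : S τ a k x = Set.Ico (a (k+1)) (a k) := by
    ext y
    exact ⟨fun hy => hy.1, fun hy => ⟨hy, le_trans (tau_mem01 hτ hy).2 hx⟩⟩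
  rw [psiK, hS, csSup_Ico (a_succ_lt hτ k)]

lemma psiK_mono (hτ : PCApprox τ a d N) (k : ℕ) {x x' : ℝ} (hx : 0 ≤ x) (hxx : x ≤ x') :
    psiK τ a k x ≤ psiK τ a k x' :=
  csSup_le_csSup (S_bddAbove k x') ⟨_, S_mem_left hτ k hx⟩
    (fun y hy => ⟨hy.1, le_trans hy.2 hxx⟩)

lemma psiK_sub_le (hτ : PCApprox τ a d N) (k : ℕ) {x : ℝ} (hx : 0 ≤ x) :
    psiK τ a k x - a (k+1) ≤ x / d (k+1) := by
  have hd := hτ.d_pos k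
  have h : psiK τ a k x ≤ a (k+1) + x / d (k+1) := by
    refine csSup_le ⟨_, S_mem_left hτ k hx⟩ ?_
    intro y hy
    have h1 := tau_lower hτ hy.1
    have h2 : d (k+1) * (y - a (k+1)) ≤ x := le_trans h1 hy.2
    rw [← sub_le_iff_le_add']
    rw [le_div_iff₀ hd]
    linarith [h2]
  linarith

lemma psiK_conc (hτ : PCApprox τ a d N) (k : ℕ) {x₁ x₂ t : ℝ} (h1 : 0 ≤ x₁) (h2 : 0 ≤ x₂)
    (ht : t ∈ Set.Icc (0:ℝ) 1) :
    t * psiK τ a k x₁ + (1 - t) * psiK τ a k x₂ ≤ psiK τ a k (t * x₁ + (1 - t) * x₂) := by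
  by_contra hcon
  push_neg at hcon
  set ε := (t * psiK τ a k x₁ + (1 - t) * psiK τ a k x₂ - psiK τ a k (t * x₁ + (1 - t) * x₂)) / 2
    with hε
  have hε0 : 0 < ε := by rw [hε]; linarith
  obtain ⟨y₁, hy₁, hy₁'⟩ := exists_lt_of_lt_csSup (⟨_, S_mem_left hτ k h1⟩ : (S τ a k x₁).Nonempty)
    (by linarith : psiK τ a k x₁ - ε < psiK τ a k x₁)
  obtain ⟨y₂, hy₂, hy₂'⟩ := exists_lt_of_lt_csSup (⟨_, S_mem_left hτ k h2⟩ : (S τ a k x₂).Nonempty)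
    (by linarith : psiK τ a k x₂ - ε < psiK τ a k x₂)
  obtain ⟨ht0, ht1⟩ := ht
  have hymem : t * y₁ + (1 - t) * y₂ ∈ Set.Ico (a (k+1)) (a k) := by
    obtain ⟨⟨hA, hB⟩, -⟩ := hy₁
    obtain ⟨⟨hC, hD⟩, -⟩ := hy₂
    constructor
    · nlinarith
    · rcases le_total y₁ y₂ with h|h
      · nlinarith
      · nlinarith
  have hco := (hτ.conv k).2 hy₁.1 hy₂.1 ht0 (by linarith : (0:ℝ) ≤ 1 - t) (by ring)
  simp only [smul_eq_mul] at hco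
  have htau : τ (t * y₁ + (1 - t) * y₂) ≤ t * x₁ + (1 - t) * x₂ := by
    refine le_trans hco ?_
    have := hy₁.2; have := hy₂.2
    nlinarith
  have hmem2 : t * y₁ + (1 - t) * y₂ ∈ S τ a k (t * x₁ + (1 - t) * x₂) := ⟨hymem, htau⟩
  have hle : t * y₁ + (1 - t) * y₂ ≤ psiK τ a k (t * x₁ + (1 - t) * x₂) :=
    le_csSup (S_bddAbove k _) hmem2
  have hst : t * (psiK τ a k x₁ - ε) ≤ t * y₁ := mul_le_mul_of_nonneg_left hy₁'.le ht0
  have hst2 : (1 - t) * (psiK τ a k x₂ - ε) ≤ (1 - t) * y₂ :=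
    mul_le_mul_of_nonneg_left hy₂'.le (by linarith)
  have hfin : t * psiK τ a k x₁ + (1 - t) * psiK τ a k x₂ - ε
      ≤ psiK τ a k (t * x₁ + (1 - t) * x₂) := by
    refine le_trans ?_ hle
    nlinarith
  rw [hε] at hfin
  linarith

lemma Ico_subset_S (hτ : PCApprox τ a d N) (k : ℕ) {x : ℝ} (hx : 0 ≤ x) :
    Set.Ico (a (k+1)) (psiK τ a k x) ⊆ S τ a k x := by
  intro y hy
  obtain ⟨s, hs, hys⟩ := exists_lt_of_lt_csSup (⟨_, S_mem_left hτ k hx⟩ : (S τ a k x).Nonempty) hy.2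
  have hymem : y ∈ Set.Ico (a (k+1)) (a k) := ⟨hy.1, lt_trans hys hs.1.2⟩
  refine ⟨hymem, ?_⟩
  have := tau_gap hτ hy.1 hys.le hs.1.2
  have hd := hτ.d_pos k
  nlinarith [hs.2]

lemma S_subset_Icc (hτ : PCApprox τ a d N) (k : ℕ) (x : ℝ) :
    S τ a k x ⊆ Set.Icc (a (k+1)) (psiK τ a k x) :=
  fun y hy => ⟨hy.1.1, le_csSup (S_bddAbove k x) hy⟩


/-! ### The Perron–Frobenius operator at the level of distribution functions -/

/-- `Dn` constant. -/
noncomputable def DnC (a d : ℕ → ℝ) (n : ℕ) : ℝ :=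
  ∑ m ∈ Finset.range n, 1 / (a (m+1) * d (m+1))

noncomputable def Phi (τ : ℝ → ℝ) (a : ℕ → ℝ) (n : ℕ) (F : ℝ → ℝ) : ℝ → ℝ :=
  fun x => F (a n * x) + ∑ k ∈ Finset.range n, (F (psiK τ a k x) - F (a (k+1)))

variable {τ : ℝ → ℝ} {a d : ℕ → ℝ} {N : ℕ}

lemma an_lt_one (hτ : PCApprox τ a d N) {n : ℕ} (hn : 1 ≤ n) : a n < 1 := by
  rw [← hτ.a_zero]
  exact hτ.a_anti (by omega)

lemma anx_mem (hτ : PCApprox τ a d N) (n : ℕ) {x : ℝ} (hx : x ∈ Set.Icc (0:ℝ) 1) :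
    a n * x ∈ Set.Icc (0:ℝ) 1 := by
  have h1 := a_pos hτ n
  have h2 := a_le_one hτ n
  obtain ⟨hx0, hx1⟩ := hx
  constructor <;> nlinarith

lemma psiK_mem01 (hτ : PCApprox τ a d N) (k : ℕ) {x : ℝ} (hx : 0 ≤ x) :
    psiK τ a k x ∈ Set.Icc (0:ℝ) 1 := by
  have h := psiK_mem hτ k hx
  exact ⟨le_trans (a_pos hτ (k+1)).le h.1, le_trans h.2 (a_le_one hτ k)⟩

lemma a_mem01 (hτ : PCApprox τ a d N) (k : ℕ) : a k ∈ Set.Icc (0:ℝ) 1 :=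
  ⟨(a_pos hτ k).le, a_le_one hτ k⟩

lemma DnC_nonneg (hτ : PCApprox τ a d N) (n : ℕ) : 0 ≤ DnC a d n := by
  refine Finset.sum_nonneg (fun m _ => ?_)
  have := a_pos hτ (m+1); have := hτ.d_pos m
  positivity

lemma DF.weaken {M M' : ℝ} {F : ℝ → ℝ} (h : M ≤ M') (hF : DF M F) : DF M' F :=
  ⟨hF.mono, hF.conc, hF.zero, hF.one, fun x hx =>
    le_trans (hF.bound x hx) (mul_le_mul_of_nonneg_right h hx.1)⟩

/-- The operator `Phi` preserves the class `DF`, with the Lasota–Yorke bound. -/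
lemma DF_Phi (hτ : PCApprox τ a d N) {n : ℕ} (hn : 1 ≤ n) {M : ℝ} {F : ℝ → ℝ}
    (hF : DF M F) : DF (a n * M + DnC a d n) (Phi τ a n F) := by
  constructor
  · -- monotone
    intro x hx y hy hxy
    unfold Phi
    have h1 : F (a n * x) ≤ F (a n * y) :=
      hF.mono (anx_mem hτ n hx) (anx_mem hτ n hy)
        (mul_le_mul_of_nonneg_left hxy (a_pos hτ n).le)
    have h2 : ∀ k ∈ Finset.range n,
        F (psiK τ a k x) - F (a (k+1)) ≤ F (psiK τ a k y) - F (a (k+1)) := by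
      intro k _
      have := hF.mono (psiK_mem01 hτ k hx.1) (psiK_mem01 hτ k hy.1)
        (psiK_mono hτ k hx.1 hxy)
      linarith
    have := Finset.sum_le_sum h2
    linarith
  · -- concavity
    intro u hu v hv t ht
    have hcomb := comb_mem hu hv ht
    have h1 : t * F (a n * u) + (1 - t) * F (a n * v) ≤ F (a n * (t * u + (1 - t) * v)) := by
      have heq : a n * (t * u + (1 - t) * v) = t * (a n * u) + (1 - t) * (a n * v) := by ring
      rw [heq]
      exact hF.conc _ (anx_mem hτ n hu) _ (anx_mem hτ n hv) _ ht
    have h2 : ∀ k ∈ Finset.range n,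
        t * (F (psiK τ a k u) - F (a (k+1))) + (1 - t) * (F (psiK τ a k v) - F (a (k+1)))
          ≤ F (psiK τ a k (t * u + (1 - t) * v)) - F (a (k+1)) := by
      intro k _
      have hψu := psiK_mem01 hτ k hu.1
      have hψv := psiK_mem01 hτ k hv.1
      have hs1 := psiK_conc hτ k hu.1 hv.1 ht
      have hs2 : F (t * psiK τ a k u + (1 - t) * psiK τ a k v)
          ≤ F (psiK τ a k (t * u + (1 - t) * v)) :=
        hF.mono (comb_mem hψu hψv ht) (psiK_mem01 hτ k hcomb.1) hs1
      have hs3 := hF.conc _ hψu _ hψv _ ht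
      linarith
    have hsum := Finset.sum_le_sum h2
    have hexp : ∑ i ∈ Finset.range n,
        (t * (F (psiK τ a i u) - F (a (i+1))) + (1 - t) * (F (psiK τ a i v) - F (a (i+1))))
        = t * ∑ i ∈ Finset.range n, (F (psiK τ a i u) - F (a (i+1)))
          + (1 - t) * ∑ i ∈ Finset.range n, (F (psiK τ a i v) - F (a (i+1))) := by
      rw [Finset.sum_add_distrib, ← Finset.mul_sum, ← Finset.mul_sum]
    rw [hexp] at hsum
    unfold Phi
    linarith
  · -- zero
    unfold Phi
    rw [mul_zero, hF.zero]
    have : ∀ k ∈ Finset.range n, F (psiK τ a k 0) - F (a (k+1)) = 0 := by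
      intro k _
      rw [psiK_zero hτ k, sub_self]
    rw [Finset.sum_congr rfl this]
    simp
  · -- one
    unfold Phi
    rw [mul_one]
    have : ∀ k ∈ Finset.range n, F (psiK τ a k 1) - F (a (k+1)) = F (a k) - F (a (k+1)) := by
      intro k _
      rw [psiK_of_one_le hτ k (le_refl 1)]
    rw [Finset.sum_congr rfl this, Finset.sum_range_sub' (fun k => F (a k)), hτ.a_zero, hF.one]
    ring
  · -- bound
    intro x hx
    unfold Phi
    have h1 : F (a n * x) ≤ (a n * M) * x := by
      have := hF.bound _ (anx_mem hτ n hx)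
      nlinarith
    have h2 : ∀ k ∈ Finset.range n,
        F (psiK τ a k x) - F (a (k+1)) ≤ (1 / (a (k+1) * d (k+1))) * x := by
      intro k _
      have hc0 : (0:ℝ) < a (k+1) := a_pos hτ (k+1)
      have hd0 := hτ.d_pos k
      have hψm := psiK_mem hτ k hx.1
      have hψ1 : psiK τ a k x ≤ 1 := le_trans hψm.2 (a_le_one hτ k)
      have hslope := hF.slope_origin hc0 hψm.1 hψ1
      have hFc1 : F (a (k+1)) ≤ 1 := hF.le_one (a_mem01 hτ (k+1))
      have hFc0 : 0 ≤ F (a (k+1)) := hF.nonneg (a_mem01 hτ (k+1))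
      have hψc : psiK τ a k x - a (k+1) ≤ x / d (k+1) := psiK_sub_le hτ k hx.1
      have hψc0 : 0 ≤ psiK τ a k x - a (k+1) := by linarith [hψm.1]
      have hA : F (a (k+1)) * (psiK τ a k x - a (k+1)) ≤ x / d (k+1) := by nlinarith
      have hkey : F (psiK τ a k x) - F (a (k+1)) ≤ (x / d (k+1)) / a (k+1) := by
        refine le_trans hslope ?_
        rw [div_le_div_iff₀ hc0 hc0]
        exact mul_le_mul_of_nonneg_right hA hc0.le
      have heq : (x / d (k+1)) / a (k+1) = (1 / (a (k+1) * d (k+1))) * x := by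
        rw [div_div, one_div_mul_eq_div, mul_comm]
      rw [heq] at hkey
      exact hkey
    have hsum := Finset.sum_le_sum h2
    have : ∑ k ∈ Finset.range n, (1 / (a (k+1) * d (k+1))) * x = DnC a d n * x := by
      rw [DnC, Finset.sum_mul]
    rw [this] at hsum
    nlinarith [h1, hsum]

/-! ### Iteration, Cesàro averages, and the fixed point -/

noncomputable def Mstar (a d : ℕ → ℝ) (n : ℕ) : ℝ := max 1 (DnC a d n / (1 - a n))

noncomputable def seqF (τ : ℝ → ℝ) (a : ℕ → ℝ) (n k : ℕ) : ℝ → ℝ :=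
  (Phi τ a n)^[k] id

noncomputable def AvgF (τ : ℝ → ℝ) (a : ℕ → ℝ) (n k : ℕ) : ℝ → ℝ :=
  fun y => (∑ i ∈ Finset.range k, seqF τ a n i y) / k

lemma Mstar_one_le (a d : ℕ → ℝ) (n : ℕ) : 1 ≤ Mstar a d n := le_max_left _ _

lemma DF_id : DF 1 (id : ℝ → ℝ) := by
  refine ⟨fun x _ y _ h => h, fun u _ v _ t _ => le_refl _, rfl, rfl, fun x hx => ?_⟩
  simp

lemma seqF_DF (hτ : PCApprox τ a d N) {n : ℕ} (hn : 1 ≤ n) (k : ℕ) :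
    DF (Mstar a d n) (seqF τ a n k) := by
  induction k with
  | zero => exact DF_id.weaken (Mstar_one_le a d n)
  | succ k ih =>
    have h1 : seqF τ a n (k+1) = Phi τ a n (seqF τ a n k) := Function.iterate_succ_apply' _ _ _
    rw [h1]
    refine (DF_Phi hτ hn ih).weaken ?_
    have h2 : a n < 1 := an_lt_one hτ hn
    have h3 : 0 < a n := a_pos hτ n
    have h4 : 0 ≤ DnC a d n := DnC_nonneg hτ n
    have h5 : DnC a d n / (1 - a n) ≤ Mstar a d n := le_max_right _ _
    have h6 : DnC a d n ≤ (1 - a n) * Mstar a d n := by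
      rw [div_le_iff₀ (by linarith)] at h5
      linarith
    have h7 : 1 ≤ Mstar a d n := Mstar_one_le a d n
    nlinarith

lemma Phi_add (τ : ℝ → ℝ) (a : ℕ → ℝ) (n : ℕ) (F G : ℝ → ℝ) (x : ℝ) :
    Phi τ a n (fun y => F y + G y) x = Phi τ a n F x + Phi τ a n G x := by
  simp only [Phi]
  have h : ∀ j ∈ Finset.range n,
      (F (psiK τ a j x) + G (psiK τ a j x)) - (F (a (j+1)) + G (a (j+1)))
      = (F (psiK τ a j x) - F (a (j+1))) + (G (psiK τ a j x) - G (a (j+1))) :=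
    fun j _ => by ring
  rw [Finset.sum_congr rfl h, Finset.sum_add_distrib]
  ring

lemma Phi_zero (τ : ℝ → ℝ) (a : ℕ → ℝ) (n : ℕ) (x : ℝ) :
    Phi τ a n (fun _ => (0:ℝ)) x = 0 := by
  simp [Phi]

lemma Phi_smul (τ : ℝ → ℝ) (a : ℕ → ℝ) (n : ℕ) (c : ℝ) (F : ℝ → ℝ) (x : ℝ) :
    Phi τ a n (fun y => c * F y) x = c * Phi τ a n F x := by
  simp only [Phi]
  have h : ∀ j ∈ Finset.range n,
      c * F (psiK τ a j x) - c * F (a (j+1)) = c * (F (psiK τ a j x) - F (a (j+1))) :=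
    fun j _ => by ring
  rw [Finset.sum_congr rfl h, ← Finset.mul_sum]
  ring

lemma Phi_sum (τ : ℝ → ℝ) (a : ℕ → ℝ) (n : ℕ) (G : ℕ → ℝ → ℝ) (k : ℕ) (x : ℝ) :
    Phi τ a n (fun y => ∑ i ∈ Finset.range k, G i y) x
      = ∑ i ∈ Finset.range k, Phi τ a n (G i) x := by
  induction k with
  | zero => simpa using Phi_zero τ a n x
  | succ k ih =>
    have h1 : (fun y => ∑ i ∈ Finset.range (k+1), G i y)
        = fun y => (∑ i ∈ Finset.range k, G i y) + G k y := by
      funext y; rw [Finset.sum_range_succ]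
    rw [h1, Phi_add, ih, Finset.sum_range_succ]

lemma Phi_sum_div (τ : ℝ → ℝ) (a : ℕ → ℝ) (n : ℕ) (G : ℕ → ℝ → ℝ) (k : ℕ) (x : ℝ) :
    Phi τ a n (fun y => (∑ i ∈ Finset.range k, G i y) / k) x
      = (∑ i ∈ Finset.range k, Phi τ a n (G i) x) / k := by
  have h1 : (fun y => (∑ i ∈ Finset.range k, G i y) / k)
      = fun y => ((k:ℝ)⁻¹) * ∑ i ∈ Finset.range k, G i y := by
    funext y; rw [div_eq_inv_mul]
  rw [h1, Phi_smul, Phi_sum, div_eq_inv_mul]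

lemma Phi_Avg (τ : ℝ → ℝ) (a : ℕ → ℝ) (n k : ℕ) (x : ℝ) :
    Phi τ a n (AvgF τ a n k) x
      = AvgF τ a n k x + (seqF τ a n k x - seqF τ a n 0 x) / k := by
  have h1 : Phi τ a n (AvgF τ a n k) x = (∑ i ∈ Finset.range k, Phi τ a n (seqF τ a n i) x) / k :=
    Phi_sum_div τ a n _ k x
  have h2 : ∀ i, Phi τ a n (seqF τ a n i) x = seqF τ a n (i+1) x := fun i =>
    (congrFun (Function.iterate_succ_apply' (Phi τ a n) i id) x).symm
  rw [h1]
  have h3 : ∑ i ∈ Finset.range k, Phi τ a n (seqF τ a n i) x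
      = ∑ i ∈ Finset.range k, seqF τ a n i x + seqF τ a n k x - seqF τ a n 0 x := by
    simp only [h2]
    have h4 := Finset.sum_range_succ' (fun i => seqF τ a n i x) k
    have h5 := Finset.sum_range_succ (fun i => seqF τ a n i x) k
    rw [h5] at h4
    linarith [h4]
  rw [h3]
  simp only [AvgF]
  rw [sub_div, add_div, sub_div]
  ring

/-! ### The fixed point of `Phi` via an ultrafilter limit of Cesàro averages -/

lemma div_nat_le_div_nat {A B : ℝ} (k : ℕ) (h : A ≤ B) : A / (k:ℝ) ≤ B / k := by
  rcases Nat.eq_zero_or_pos k with rfl|hk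
  · simp
  · exact (div_le_div_iff_of_pos_right (by exact_mod_cast hk)).2 h

lemma AvgF_mem01 (hτ : PCApprox τ a d N) {n : ℕ} (hn : 1 ≤ n) (k : ℕ) {x : ℝ}
    (hx : x ∈ Set.Icc (0:ℝ) 1) : AvgF τ a n k x ∈ Set.Icc (0:ℝ) 1 := by
  have hDFk := seqF_DF hτ hn
  rcases Nat.eq_zero_or_pos k with rfl|hk
  · simp [AvgF]
  constructor
  · apply div_nonneg
    · exact Finset.sum_nonneg (fun i _ => (hDFk i).nonneg hx)
    · positivity
  · rw [AvgF, div_le_one (by exact_mod_cast hk)]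
    calc ∑ i ∈ Finset.range k, seqF τ a n i x ≤ ∑ _i ∈ Finset.range k, (1:ℝ) :=
          Finset.sum_le_sum (fun i _ => (hDFk i).le_one hx)
      _ = k := by simp

lemma exists_DF_fixed (hτ : PCApprox τ a d N) {n : ℕ} (hn : 1 ≤ n) :
    ∃ F : ℝ → ℝ, DF (Mstar a d n) F ∧ ∀ x ∈ Set.Icc (0:ℝ) 1, Phi τ a n F x = F x := by
  classical
  have hDFk := seqF_DF hτ hn
  set U : Ultrafilter ℕ := Ultrafilter.of atTop with hUdef
  have hU : (U : Filter ℕ) ≤ atTop := Ultrafilter.of_le _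
  have hex : ∀ x, x ∈ Set.Icc (0:ℝ) 1 →
      ∃ L, L ∈ Set.Icc (0:ℝ) 1 ∧ Tendsto (fun k => AvgF τ a n k x) ↑U (𝓝 L) := by
    intro x hx
    have hle : ↑(U.map (fun k => AvgF τ a n k x)) ≤ 𝓟 (Set.Icc (0:ℝ) 1) := by
      rw [Ultrafilter.coe_map, le_principal_iff, mem_map]
      filter_upwards with k
      exact AvgF_mem01 hτ hn k hx
    obtain ⟨L, hL, hconv⟩ := isCompact_Icc.ultrafilter_le_nhds _ hle
    rw [Ultrafilter.coe_map] at hconv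
    exact ⟨L, hL, hconv⟩
  choose L hLmem hLt using hex
  set F : ℝ → ℝ := fun x => if hx : x ∈ Set.Icc (0:ℝ) 1 then L x hx else 0 with hFdef
  have hFt : ∀ x (hx : x ∈ Set.Icc (0:ℝ) 1),
      Tendsto (fun k => AvgF τ a n k x) ↑U (𝓝 (F x)) := by
    intro x hx
    rw [hFdef]
    simp only [dif_pos hx]
    exact hLt x hx
  have hAvg_mono : ∀ k, ∀ x ∈ Set.Icc (0:ℝ) 1, ∀ y ∈ Set.Icc (0:ℝ) 1, x ≤ y →
      AvgF τ a n k x ≤ AvgF τ a n k y := by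
    intro k x hx y hy hxy
    apply div_nat_le_div_nat
    exact Finset.sum_le_sum (fun i _ => (hDFk i).mono hx hy hxy)
  have hAvg_conc : ∀ k, ∀ u ∈ Set.Icc (0:ℝ) 1, ∀ v ∈ Set.Icc (0:ℝ) 1,
      ∀ t ∈ Set.Icc (0:ℝ) 1,
      t * AvgF τ a n k u + (1 - t) * AvgF τ a n k v ≤ AvgF τ a n k (t * u + (1 - t) * v) := by
    intro k u hu v hv t ht
    have h1 : ∑ i ∈ Finset.range k, (t * seqF τ a n i u + (1 - t) * seqF τ a n i v)
        ≤ ∑ i ∈ Finset.range k, seqF τ a n i (t * u + (1 - t) * v) :=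
      Finset.sum_le_sum (fun i _ => (hDFk i).conc u hu v hv t ht)
    have h2 := div_nat_le_div_nat k h1
    rw [Finset.sum_add_distrib, ← Finset.mul_sum, ← Finset.mul_sum, add_div,
      mul_div_assoc, mul_div_assoc] at h2
    exact h2
  have hAvg_bound : ∀ k, ∀ x ∈ Set.Icc (0:ℝ) 1, AvgF τ a n k x ≤ Mstar a d n * x := by
    intro k x hx
    have h1 : ∑ i ∈ Finset.range k, seqF τ a n i x
        ≤ ∑ _i ∈ Finset.range k, Mstar a d n * x :=
      Finset.sum_le_sum (fun i _ => (hDFk i).bound x hx)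
    have h2 := div_nat_le_div_nat k h1
    rcases Nat.eq_zero_or_pos k with rfl|hk
    · simp only [AvgF]
      norm_num
      have := Mstar_one_le a d n
      nlinarith [hx.1]
    calc AvgF τ a n k x ≤ (∑ _i ∈ Finset.range k, Mstar a d n * x) / k := h2
      _ = Mstar a d n * x := by
          rw [Finset.sum_const, Finset.card_range, nsmul_eq_mul]
          field_simp
  have hAvg_zero : ∀ k, AvgF τ a n k 0 = 0 := by
    intro k
    have : ∀ i ∈ Finset.range k, seqF τ a n i 0 = 0 := fun i _ => (hDFk i).zero
    rw [AvgF, Finset.sum_congr rfl this]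
    simp
  have hAvg_one : ∀ k, 1 ≤ k → AvgF τ a n k 1 = 1 := by
    intro k hk
    have : ∀ i ∈ Finset.range k, seqF τ a n i 1 = 1 := fun i _ => (hDFk i).one
    rw [AvgF, Finset.sum_congr rfl this, Finset.sum_const, Finset.card_range, nsmul_eq_mul,
      mul_one, div_self (Nat.cast_ne_zero.2 (by omega) : (k:ℝ) ≠ 0)]
  have h0mem : (0:ℝ) ∈ Set.Icc (0:ℝ) 1 := by norm_num
  have h1mem : (1:ℝ) ∈ Set.Icc (0:ℝ) 1 := by norm_num
  have hDF : DF (Mstar a d n) F := by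
    constructor
    · intro x hx y hy hxy
      exact le_of_tendsto_of_tendsto' (hFt x hx) (hFt y hy)
        (fun k => hAvg_mono k x hx y hy hxy)
    · intro u hu v hv t ht
      have hc := comb_mem hu hv ht
      refine le_of_tendsto_of_tendsto'
        (((hFt u hu).const_mul t).add ((hFt v hv).const_mul (1 - t))) (hFt _ hc)
        (fun k => hAvg_conc k u hu v hv t ht)
    · refine tendsto_nhds_unique (hFt 0 h0mem) ?_
      have : (fun k => AvgF τ a n k 0) = fun _ => (0:ℝ) := funext hAvg_zero
      rw [this]
      exact tendsto_const_nhds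
    · refine tendsto_nhds_unique (hFt 1 h1mem) ?_
      refine Tendsto.congr' ?_ (tendsto_const_nhds : Tendsto (fun _ : ℕ => (1:ℝ)) ↑U (𝓝 1))
      have : ∀ᶠ k in atTop, (1:ℝ) = AvgF τ a n k 1 := by
        filter_upwards [eventually_ge_atTop 1] with k hk
        exact (hAvg_one k hk).symm
      exact this.filter_mono hU
    · intro x hx
      exact le_of_tendsto (hFt x hx) (Eventually.of_forall (fun k => hAvg_bound k x hx))
  refine ⟨F, hDF, ?_⟩
  intro x hx
  have hTa : Tendsto (fun k => Phi τ a n (AvgF τ a n k) x) ↑U (𝓝 (Phi τ a n F x)) := by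
    have h1 : ∀ k, Phi τ a n (AvgF τ a n k) x
        = AvgF τ a n k (a n * x)
          + ∑ j ∈ Finset.range n, (AvgF τ a n k (psiK τ a j x) - AvgF τ a n k (a (j+1))) :=
      fun k => rfl
    have h2 : Phi τ a n F x
        = F (a n * x) + ∑ j ∈ Finset.range n, (F (psiK τ a j x) - F (a (j+1))) := rfl
    rw [h2]
    simp only [h1]
    refine Tendsto.add (hFt _ (anx_mem hτ n hx)) ?_
    refine tendsto_finset_sum _ (fun j _ => ?_)
    exact Tendsto.sub (hFt _ (psiK_mem01 hτ j hx.1)) (hFt _ (a_mem01 hτ (j+1)))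
  have hTb : Tendsto (fun k => Phi τ a n (AvgF τ a n k) x) ↑U (𝓝 (F x)) := by
    have heq : (fun k => Phi τ a n (AvgF τ a n k) x)
        = fun k => AvgF τ a n k x + (seqF τ a n k x - seqF τ a n 0 x) / k :=
      funext (fun k => Phi_Avg τ a n k x)
    rw [heq]
    have hz : Tendsto (fun k : ℕ => (seqF τ a n k x - seqF τ a n 0 x) / k) ↑U (𝓝 0) := by
      refine Tendsto.mono_left ?_ hU
      have hb1 : Tendsto (fun k : ℕ => -(1 / (k:ℝ))) atTop (𝓝 0) := by
        rw [← neg_zero]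
        exact (tendsto_one_div_atTop_nhds_zero_nat).neg
      have hb2 : Tendsto (fun k : ℕ => 1 / (k:ℝ)) atTop (𝓝 0) :=
        tendsto_one_div_atTop_nhds_zero_nat
      refine tendsto_of_tendsto_of_tendsto_of_le_of_le hb1 hb2 ?_ ?_
      · intro k
        rcases Nat.eq_zero_or_pos k with rfl|hk
        · simp
        have hk0 : (0:ℝ) < k := by exact_mod_cast hk
        have hA : -1 ≤ seqF τ a n k x - seqF τ a n 0 x := by
          have := (hDFk k).nonneg hx
          have := (hDFk 0).le_one hx
          linarith
        calc -(1 / (k:ℝ)) = (-1) / k := by ring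
          _ ≤ (seqF τ a n k x - seqF τ a n 0 x) / k := (div_le_div_iff_of_pos_right hk0).2 hA
      · intro k
        rcases Nat.eq_zero_or_pos k with rfl|hk
        · simp
        have hk0 : (0:ℝ) < k := by exact_mod_cast hk
        have hA : seqF τ a n k x - seqF τ a n 0 x ≤ 1 := by
          have h1 := (hDFk k).le_one hx
          have h2 := (hDFk 0).nonneg hx
          linarith
        exact (div_le_div_iff_of_pos_right hk0).2 hA
    have := (hFt x hx).add hz
    rw [add_zero] at this
    exact this
  exact tendsto_nhds_unique hTa hTb

/-! ### Measurable modification of `tauN` and branch covering -/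

noncomputable def tauM (τ : ℝ → ℝ) (a : ℕ → ℝ) (n : ℕ) : ℝ → ℝ :=
  fun x => if x < a n then x / a n else if x < 1 then τ x else τ 1

lemma tauM_eq_tauN {τ : ℝ → ℝ} {a : ℕ → ℝ} {n : ℕ} {y : ℝ} (hy : y ≤ 1) :
    tauM τ a n y = tauN τ a n y := by
  unfold tauM tauN
  rcases lt_or_ge y (a n) with h|h
  · rw [if_pos h, if_pos h]
  · rw [if_neg (not_lt.2 h), if_neg (not_lt.2 h)]
    rcases lt_or_eq_of_le hy with h1|h1
    · rw [if_pos h1]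
    · rw [if_neg (by rw [h1]; exact lt_irrefl 1), h1]

lemma exists_branch (hτ : PCApprox τ a d N) :
    ∀ n : ℕ, ∀ y : ℝ, a n ≤ y → y < 1 → ∃ k < n, a (k+1) ≤ y ∧ y < a k := by
  intro n
  induction n with
  | zero =>
    intro y h1 h2
    rw [hτ.a_zero] at h1
    linarith
  | succ n ih =>
    intro y h1 h2
    by_cases h : y < a n
    · exact ⟨n, Nat.lt_succ_self n, h1, h⟩
    · obtain ⟨k, hk, hk2⟩ := ih y (not_lt.1 h) h2
      exact ⟨k, Nat.lt_succ_of_lt hk, hk2⟩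

lemma branch_inter_measurable (hτ : PCApprox τ a d N) (k : ℕ) {B : Set ℝ}
    (hB : MeasurableSet B) :
    MeasurableSet (Set.Ico (a (k+1)) (a k) ∩ τ ⁻¹' B) := by
  have hres : Continuous ((Set.Ico (a (k+1)) (a k)).restrict τ) :=
    ContinuousOn.restrict (hτ.cont k)
  have hpre : MeasurableSet (((Set.Ico (a (k+1)) (a k)).restrict τ) ⁻¹' B) :=
    hres.measurable hB
  have himg := MeasurableSet.subtype_image (measurableSet_Ico) hpre
  have heq : Subtype.val '' (((Set.Ico (a (k+1)) (a k)).restrict τ) ⁻¹' B)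
      = Set.Ico (a (k+1)) (a k) ∩ τ ⁻¹' B := by
    ext y
    constructor
    · rintro ⟨⟨z, hz⟩, hz2, rfl⟩
      exact ⟨hz, hz2⟩
    · rintro ⟨hy1, hy2⟩
      exact ⟨⟨y, hy1⟩, hy2, rfl⟩
  rw [heq] at himg
  exact himg

lemma measurable_tauM (hτ : PCApprox τ a d N) (n : ℕ) : Measurable (tauM τ a n) := by
  classical
  intro B hB
  have hdecomp : tauM τ a n ⁻¹' B
      = (Set.Iio (a n) ∩ (fun x => x / a n) ⁻¹' B)
        ∪ ((⋃ k ∈ Finset.range n, (Set.Ico (a (k+1)) (a k) ∩ τ ⁻¹' B))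
          ∪ (Set.Ici 1 ∩ (if τ 1 ∈ B then Set.univ else ∅))) := by
    ext y
    simp only [Set.mem_preimage, Set.mem_union, Set.mem_inter_iff, Set.mem_Iio, Set.mem_Ici,
      Set.mem_iUnion, Finset.mem_range]
    constructor
    · intro hy
      unfold tauM at hy
      by_cases h1 : y < a n
      · rw [if_pos h1] at hy
        exact Or.inl ⟨h1, hy⟩
      · rw [if_neg h1] at hy
        by_cases h2 : y < 1
        · rw [if_pos h2] at hy
          obtain ⟨k, hk, hk2, hk3⟩ := exists_branch hτ n y (not_lt.1 h1) h2
          exact Or.inr (Or.inl ⟨k, hk, ⟨hk2, hk3⟩, hy⟩)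
        · rw [if_neg h2] at hy
          refine Or.inr (Or.inr ⟨not_lt.1 h2, ?_⟩)
          rw [if_pos hy]
          trivial
    · intro hy
      unfold tauM
      rcases hy with ⟨h1, h2⟩ | ⟨k, hk, ⟨hk2, hk3⟩, hk4⟩ | ⟨h1, h2⟩
      · rw [if_pos h1]; exact h2
      · have hyn : ¬ y < a n := by
          push_neg
          refine le_trans ?_ hk2
          exact hτ.a_anti.antitone (by omega)
        rw [if_neg hyn, if_pos (lt_of_lt_of_le hk3 (a_le_one hτ k))]
        exact hk4
      · have h3 : ¬ y < a n := by
          push_neg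
          exact le_trans (a_le_one hτ n) h1
        rw [if_neg h3, if_neg (not_lt.2 h1)]
        by_cases h4 : τ 1 ∈ B
        · exact h4
        · rw [if_neg h4] at h2
          exact absurd h2 (Set.notMem_empty y)
  rw [hdecomp]
  refine MeasurableSet.union ?_ (MeasurableSet.union ?_ ?_)
  · exact measurableSet_Iio.inter ((measurable_id.div_const _) hB)
  · exact Finset.measurableSet_biUnion _ (fun k _ => branch_inter_measurable hτ k hB)
  · refine measurableSet_Ici.inter ?_
    by_cases h : τ 1 ∈ B
    · rw [if_pos h]; exact MeasurableSet.univ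
    · rw [if_neg h]; exact MeasurableSet.empty

lemma tauM_mem01 (hτ : PCApprox τ a d N) {n : ℕ} {y : ℝ} (hy : y ∈ Set.Icc (0:ℝ) 1) :
    tauM τ a n y ∈ Set.Icc (0:ℝ) 1 := by
  unfold tauM
  by_cases h1 : y < a n
  · rw [if_pos h1]
    have han := a_pos hτ n
    constructor
    · exact div_nonneg hy.1 han.le
    · rw [div_le_one han]
      exact h1.le
  · rw [if_neg h1]
    by_cases h2 : y < 1
    · rw [if_pos h2]
      exact hτ.mapsTo hy
    · rw [if_neg h2]
      exact hτ.mapsTo ⟨zero_le_one, le_refl 1⟩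

/-! ### The invariant measure -/

noncomputable def muF (F : ℝ → ℝ) : MeasureTheory.Measure ℝ :=
  lam.withDensity (fun x => ENNReal.ofReal (dens F x))

instance lam_finite : IsFiniteMeasure lam := by
  constructor
  rw [lam, Measure.restrict_apply_univ, Real.volume_Icc]
  simp

lemma dens_integrable {M : ℝ} {F : ℝ → ℝ} (hF : DF M F) : Integrable (dens F) lam := by
  refine Integrable.mono' (integrable_const M) (dens_measurable hF).aestronglyMeasurable ?_
  filter_upwards with x
  rw [Real.norm_eq_abs, abs_of_nonneg (dens_nonneg hF x)]
  exact dens_le_M hF x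

lemma dens_integrableOn_Icc {M : ℝ} {F : ℝ → ℝ} (hF : DF M F) {u v : ℝ} (huv : u ≤ v) :
    IntegrableOn (dens F) (Set.Icc u v) volume :=
  (intervalIntegrable_iff_integrableOn_Icc_of_le huv).1 (dens_intervalIntegrable hF u v)

lemma muF_apply {F : ℝ → ℝ} {S : Set ℝ} (hS : MeasurableSet S) :
    muF F S = ∫⁻ x in S ∩ Set.Icc 0 1, ENNReal.ofReal (dens F x) ∂volume := by
  rw [muF, withDensity_apply _ hS, lam, Measure.restrict_restrict hS]

lemma muF_Icc {M : ℝ} {F : ℝ → ℝ} (hF : DF M F) {u v : ℝ} (h0 : 0 ≤ u) (huv : u ≤ v)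
    (hv : v ≤ 1) : muF F (Set.Icc u v) = ENNReal.ofReal (F v - F u) := by
  rw [muF_apply measurableSet_Icc]
  have h1 : Set.Icc u v ∩ Set.Icc 0 1 = Set.Icc u v :=
    Set.inter_eq_left.2 (fun y hy => ⟨le_trans h0 hy.1, le_trans hy.2 hv⟩)
  rw [h1, ← ofReal_integral_eq_lintegral_ofReal (dens_integrableOn_Icc hF huv)
    (Eventually.of_forall fun x => dens_nonneg hF x)]
  congr 1
  rw [MeasureTheory.integral_Icc_eq_integral_Ioc, ← intervalIntegral.integral_of_le huv]
  have h2 := integral_dens hF (⟨h0, le_trans huv hv⟩ : u ∈ Set.Icc (0:ℝ) 1)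
  have h3 := integral_dens hF (⟨le_trans h0 huv, hv⟩ : v ∈ Set.Icc (0:ℝ) 1)
  have h4 := intervalIntegral.integral_add_adjacent_intervals
    (dens_intervalIntegrable hF 0 u) (dens_intervalIntegrable hF u v)
  linarith

lemma muF_compl (F : ℝ → ℝ) : muF F ((Set.Icc (0:ℝ) 1)ᶜ) = 0 := by
  rw [muF_apply measurableSet_Icc.compl, Set.compl_inter_self]
  simp

lemma muF_inter (F : ℝ → ℝ) (S : Set ℝ) : muF F S = muF F (S ∩ Set.Icc 0 1) := by
  refine le_antisymm ?_ (measure_mono Set.inter_subset_left)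
  calc muF F S ≤ muF F ((S ∩ Set.Icc 0 1) ∪ (Set.Icc (0:ℝ) 1)ᶜ) := by
        refine measure_mono (fun y hy => ?_)
        by_cases h : y ∈ Set.Icc (0:ℝ) 1
        · exact Or.inl ⟨hy, h⟩
        · exact Or.inr h
    _ ≤ muF F (S ∩ Set.Icc 0 1) + muF F ((Set.Icc (0:ℝ) 1)ᶜ) := measure_union_le _ _
    _ = muF F (S ∩ Set.Icc 0 1) := by rw [muF_compl F, add_zero]

lemma muF_singleton (F : ℝ → ℝ) (v : ℝ) : muF F {v} = 0 := by
  rw [muF_apply (measurableSet_singleton v)]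
  have h1 : volume ({v} ∩ Set.Icc (0:ℝ) 1) = 0 :=
    measure_mono_null Set.inter_subset_left (Real.volume_singleton)
  rw [Measure.restrict_eq_zero.2 h1]
  simp

lemma muF_Ico {M : ℝ} {F : ℝ → ℝ} (hF : DF M F) {u v : ℝ} (h0 : 0 ≤ u) (huv : u ≤ v)
    (hv : v ≤ 1) : muF F (Set.Ico u v) = ENNReal.ofReal (F v - F u) := by
  refine le_antisymm ?_ ?_
  · rw [← muF_Icc hF h0 huv hv]
    exact measure_mono Set.Ico_subset_Icc_self
  · rw [← muF_Icc hF h0 huv hv]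
    calc muF F (Set.Icc u v) ≤ muF F (Set.Ico u v ∪ {v}) := by
          refine measure_mono (fun y hy => ?_)
          rcases lt_or_eq_of_le hy.2 with h|h
          · exact Or.inl ⟨hy.1, h⟩
          · exact Or.inr (by rw [h]; rfl)
      _ ≤ muF F (Set.Ico u v) + muF F {v} := measure_union_le _ _
      _ = muF F (Set.Ico u v) := by rw [muF_singleton F v, add_zero]

lemma S_alt (hτ : PCApprox τ a d N) (k : ℕ) {t : ℝ} (ht : 0 ≤ t) :
    S τ a k t = Set.Ico (a (k+1)) (psiK τ a k t)
      ∨ S τ a k t = Set.Icc (a (k+1)) (psiK τ a k t) := by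
  by_cases hψ : psiK τ a k t ∈ S τ a k t
  · right
    refine Set.Subset.antisymm (S_subset_Icc hτ k t) (fun y hy => ?_)
    rcases lt_or_eq_of_le hy.2 with h|h
    · exact Ico_subset_S hτ k ht ⟨hy.1, h⟩
    · rw [h]; exact hψ
  · left
    refine Set.Subset.antisymm (fun y hy => ?_) (Ico_subset_S hτ k ht)
    exact ⟨hy.1.1, lt_of_le_of_ne (le_csSup (S_bddAbove k t) hy)
      (fun h => hψ (h ▸ hy))⟩

lemma muF_S {M : ℝ} (hτ : PCApprox τ a d N) {F : ℝ → ℝ} (hF : DF M F) (k : ℕ) {t : ℝ}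
    (ht : 0 ≤ t) :
    muF F (S τ a k t) = ENNReal.ofReal (F (psiK τ a k t) - F (a (k+1))) := by
  have h0 : (0:ℝ) ≤ a (k+1) := (a_pos hτ (k+1)).le
  have hm := psiK_mem hτ k ht
  have h1 : psiK τ a k t ≤ 1 := le_trans hm.2 (a_le_one hτ k)
  rcases S_alt hτ k ht with h|h
  · rw [h, muF_Ico hF h0 hm.1 h1]
  · rw [h, muF_Icc hF h0 hm.1 h1]

lemma S_measurable (hτ : PCApprox τ a d N) (k : ℕ) {t : ℝ} (ht : 0 ≤ t) :
    MeasurableSet (S τ a k t) := by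
  rcases S_alt hτ k ht with h|h
  · rw [h]; exact measurableSet_Ico
  · rw [h]; exact measurableSet_Icc

lemma muF_Iic {M : ℝ} {F : ℝ → ℝ} (hF : DF M F) {t : ℝ} (ht : t ∈ Set.Icc (0:ℝ) 1) :
    muF F (Set.Iic t) = ENNReal.ofReal (F t) := by
  rw [muF_inter F (Set.Iic t)]
  have h1 : Set.Iic t ∩ Set.Icc 0 1 = Set.Icc 0 t := by
    ext y
    simp only [Set.mem_inter_iff, Set.mem_Iic, Set.mem_Icc]
    constructor
    · rintro ⟨h1, h2, h3⟩; exact ⟨h2, h1⟩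
    · rintro ⟨h1, h2⟩; exact ⟨h2, h1, le_trans h2 ht.2⟩
  rw [h1, muF_Icc hF (le_refl 0) ht.1 ht.2, hF.zero, sub_zero]

lemma muF_preimage_Iic (hτ : PCApprox τ a d N) {n : ℕ} (hn : 1 ≤ n) {F : ℝ → ℝ} {M : ℝ}
    (hF : DF M F) (hfix : ∀ x ∈ Set.Icc (0:ℝ) 1, Phi τ a n F x = F x) (t : ℝ) :
    muF F (tauM τ a n ⁻¹' (Set.Iic t)) = muF F (Set.Iic t) := by
  classical
  have han : 0 < a n := a_pos hτ n
  have han1 : a n < 1 := an_lt_one hτ hn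
  rcases lt_or_ge t 0 with ht|ht
  · rw [muF_inter F _, muF_inter F (Set.Iic t)]
    have h1 : tauM τ a n ⁻¹' (Set.Iic t) ∩ Set.Icc 0 1 = ∅ := by
      ext y
      simp only [Set.mem_inter_iff, Set.mem_preimage, Set.mem_Iic, Set.mem_empty_iff_false,
        iff_false, not_and]
      intro hy1 hy2
      have := (tauM_mem01 hτ (n := n) hy2).1
      linarith
    have h2 : Set.Iic t ∩ Set.Icc 0 1 = ∅ := by
      ext y
      simp only [Set.mem_inter_iff, Set.mem_Iic, Set.mem_empty_iff_false, iff_false, not_and]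
      intro hy1 hy2
      linarith [hy2.1]
    rw [h1, h2]
  rcases lt_or_ge t 1 with ht1|ht1
  swap
  · rw [muF_inter F _, muF_inter F (Set.Iic t)]
    have h1 : tauM τ a n ⁻¹' (Set.Iic t) ∩ Set.Icc 0 1 = Set.Icc 0 1 := by
      refine Set.inter_eq_right.2 (fun y hy => ?_)
      rw [Set.mem_preimage, Set.mem_Iic]
      exact le_trans (tauM_mem01 hτ (n := n) hy).2 ht1
    have h2 : Set.Iic t ∩ Set.Icc 0 1 = Set.Icc 0 1 :=
      Set.inter_eq_right.2 (fun y hy => le_trans hy.2 ht1)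
    rw [h1, h2]
  -- main case : 0 ≤ t < 1
  have htm : t ∈ Set.Icc (0:ℝ) 1 := ⟨ht, ht1.le⟩
  have hant : a n * t < a n := by nlinarith
  have hant0 : 0 ≤ a n * t := by positivity
  have hant1 : a n * t ≤ 1 := by nlinarith [a_le_one hτ n]
  have hdec : tauM τ a n ⁻¹' (Set.Iic t) ∩ Set.Icc 0 1
      = (Set.Icc 0 (a n * t) ∪ ⋃ k ∈ Finset.range n, S τ a k t)
        ∪ (if τ 1 ≤ t then ({1} : Set ℝ) else ∅) := by
    ext y
    simp only [Set.mem_inter_iff, Set.mem_preimage, Set.mem_Iic, Set.mem_union, Set.mem_Icc,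
      Set.mem_iUnion, Finset.mem_range]
    constructor
    · rintro ⟨hy1, hy2, hy3⟩
      unfold tauM at hy1
      by_cases h1 : y < a n
      · rw [if_pos h1] at hy1
        rw [div_le_iff₀ han] at hy1
        exact Or.inl (Or.inl ⟨hy2, by linarith [hy1]⟩)
      · rw [if_neg h1] at hy1
        by_cases h2 : y < 1
        · rw [if_pos h2] at hy1
          obtain ⟨k, hk, hk2, hk3⟩ := exists_branch hτ n y (not_lt.1 h1) h2
          exact Or.inl (Or.inr ⟨k, hk, ⟨hk2, hk3⟩, hy1⟩)
        · rw [if_neg h2] at hy1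
          have hy4 : y = 1 := le_antisymm hy3 (not_lt.1 h2)
          rw [if_pos hy1]
          exact Or.inr (by rw [hy4]; rfl)
    · intro hy
      rcases hy with (⟨hy1, hy2⟩ | ⟨k, hk, hk2, hk3⟩) | hy1
      · have hya : y < a n := lt_of_le_of_lt hy2 hant
        refine ⟨?_, hy1, by linarith⟩
        unfold tauM
        rw [if_pos hya, div_le_iff₀ han]
        linarith
      · have hyb : a (k+1) ≤ y := hk2.1
        have hyc : y < a k := hk2.2
        have hyn : ¬ y < a n := by
          push_neg
          exact le_trans (hτ.a_anti.antitone (by omega : n ≥ k+1)) hyb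
        have hy1 : y < 1 := lt_of_lt_of_le hyc (a_le_one hτ k)
        refine ⟨?_, branch_subset hτ k hk2⟩
        unfold tauM
        rw [if_neg hyn, if_pos hy1]
        exact hk3
      · by_cases h : τ 1 ≤ t
        · rw [if_pos h] at hy1
          have hy2 : y = 1 := hy1
          subst hy2
          refine ⟨?_, zero_le_one, le_refl 1⟩
          unfold tauM
          rw [if_neg (not_lt.2 han1.le), if_neg (lt_irrefl 1)]
          exact h
        · rw [if_neg h] at hy1
          exact absurd hy1 (Set.notMem_empty y)
  rw [muF_inter F _, hdec]
  -- measurability of the pieces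
  have hmeasU : MeasurableSet (⋃ k ∈ Finset.range n, S τ a k t) :=
    Finset.measurableSet_biUnion _ (fun k _ => S_measurable hτ k ht)
  have hmeasE : MeasurableSet (if τ 1 ≤ t then ({1} : Set ℝ) else ∅) := by
    split_ifs
    · exact measurableSet_singleton 1
    · exact MeasurableSet.empty
  -- elements of S τ a k t are < 1 and ≥ a (k+1)
  have hSsub : ∀ k, S τ a k t ⊆ Set.Ico (a (k+1)) (a k) := fun k y hy => hy.1
  -- disjointness with the singleton piece
  have hd1 : Disjoint (Set.Icc 0 (a n * t) ∪ ⋃ k ∈ Finset.range n, S τ a k t)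
      (if τ 1 ≤ t then ({1} : Set ℝ) else ∅) := by
    rw [Set.disjoint_left]
    intro y hy hy2
    have hy1 : y = 1 := by
      split_ifs at hy2
      · exact hy2
      · exact absurd hy2 (Set.notMem_empty y)
    subst hy1
    rcases hy with h|h
    · linarith [h.2]
    · simp only [Set.mem_iUnion, Finset.mem_range] at h
      obtain ⟨k, hk, hk2⟩ := h
      have := (hSsub k hk2).2
      linarith [a_le_one hτ k]
  have hd2 : Disjoint (Set.Icc 0 (a n * t)) (⋃ k ∈ Finset.range n, S τ a k t) := by
    rw [Set.disjoint_left]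
    intro y hy hy2
    simp only [Set.mem_iUnion, Finset.mem_range] at hy2
    obtain ⟨k, hk, hk2⟩ := hy2
    have h1 := (hSsub k hk2).1
    have h2 : a n ≤ a (k+1) := hτ.a_anti.antitone (by omega)
    linarith [hy.2]
  rw [measure_union hd1 hmeasE, measure_union hd2 hmeasU]
  have hE0 : muF F (if τ 1 ≤ t then ({1} : Set ℝ) else ∅) = 0 := by
    split_ifs
    · exact muF_singleton F 1
    · exact measure_empty
  have hPD : (↑(Finset.range n) : Set ℕ).PairwiseDisjoint (fun k => S τ a k t) := by
    intro i _ j _ hij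
    rcases Nat.lt_or_ge i j with h|h
    · refine Set.disjoint_left.2 (fun y hy hy2 => ?_)
      have h1 := (hSsub i hy).1
      have h2 := (hSsub j hy2).2
      have h3 : a j ≤ a (i+1) := hτ.a_anti.antitone (by omega)
      linarith
    · have h' : j < i := by omega
      refine Set.disjoint_left.2 (fun y hy hy2 => ?_)
      have h1 := (hSsub j hy2).1
      have h2 := (hSsub i hy).2
      have h3 : a i ≤ a (j+1) := hτ.a_anti.antitone (by omega)
      linarith
  rw [measure_biUnion_finset hPD (fun k _ => S_measurable hτ k ht)]
  have hIccval : muF F (Set.Icc 0 (a n * t)) = ENNReal.ofReal (F (a n * t)) := by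
    rw [muF_Icc hF (le_refl 0) hant0 hant1, hF.zero, sub_zero]
  have hSval : ∀ k ∈ Finset.range n,
      muF F (S τ a k t) = ENNReal.ofReal (F (psiK τ a k t) - F (a (k+1))) :=
    fun k _ => muF_S hτ hF k ht
  rw [hIccval, Finset.sum_congr rfl hSval, hE0, add_zero]
  have hterm_nonneg : ∀ k ∈ Finset.range n, 0 ≤ F (psiK τ a k t) - F (a (k+1)) := by
    intro k _
    have h1 := psiK_mem hτ k ht
    have := hF.mono (a_mem01 hτ (k+1)) (psiK_mem01 hτ k ht) h1.1
    linarith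
  rw [← ENNReal.ofReal_sum_of_nonneg hterm_nonneg]
  have hF0 : 0 ≤ F (a n * t) := hF.nonneg ⟨hant0, hant1⟩
  have hsum0 : 0 ≤ ∑ k ∈ Finset.range n, (F (psiK τ a k t) - F (a (k+1))) :=
    Finset.sum_nonneg hterm_nonneg
  rw [← ENNReal.ofReal_add hF0 hsum0]
  have hPhi : F (a n * t) + ∑ k ∈ Finset.range n, (F (psiK τ a k t) - F (a (k+1)))
      = Phi τ a n F t := rfl
  rw [hPhi, hfix t htm, muF_Iic hF htm]

/-- The main existence result. -/
lemma final_exists (hτ : PCApprox τ a d N) (n : ℕ) (hn : 1 ≤ n) :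
    ∃ f : ℝ → ℝ, MeasureTheory.Integrable f lam ∧
      (∀ x ∈ Set.Icc (0:ℝ) 1, 0 ≤ f x) ∧
      AntitoneOn f (Set.Icc 0 1) ∧
      (∫ x, f x ∂lam) = 1 ∧
      (∀ A : Set ℝ, MeasurableSet A → A ⊆ Set.Icc 0 1 →
        lam.withDensity (fun x => ENNReal.ofReal (f x)) ((tauN τ a n) ⁻¹' A) =
        lam.withDensity (fun x => ENNReal.ofReal (f x)) A) := by
  obtain ⟨F, hF, hfix⟩ := exists_DF_fixed hτ hn
  refine ⟨dens F, dens_integrable hF, fun x _ => dens_nonneg hF x, dens_antitoneOn hF, ?_, ?_⟩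
  · have h1 : (∫ x, dens F x ∂lam) = ∫ x in Set.Icc (0:ℝ) 1, dens F x ∂volume := by
      rw [lam]
    rw [h1, MeasureTheory.integral_Icc_eq_integral_Ioc,
      ← intervalIntegral.integral_of_le zero_le_one,
      integral_dens hF ⟨zero_le_one, le_refl 1⟩, hF.one]
  · intro A hA _
    show muF F (tauN τ a n ⁻¹' A) = muF F A
    haveI : IsFiniteMeasure (muF F) := by
      constructor
      rw [muF_inter F Set.univ, Set.univ_inter,
        muF_Icc hF (le_refl 0) zero_le_one (le_refl 1)]
      exact ENNReal.ofReal_lt_top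
    have hmeas := measurable_tauM hτ n
    set ν := (muF F).map (tauM τ a n) with hν
    haveI : IsFiniteMeasure ν := by
      constructor
      rw [hν, Measure.map_apply hmeas MeasurableSet.univ]
      exact measure_lt_top _ _
    have hext : ν = muF F := by
      refine Measure.ext_of_Iic ν (muF F) (fun t => ?_)
      rw [hν, Measure.map_apply hmeas measurableSet_Iic]
      exact muF_preimage_Iic hτ hn hF hfix t
    have hsame : tauN τ a n ⁻¹' A ∩ Set.Icc 0 1 = tauM τ a n ⁻¹' A ∩ Set.Icc 0 1 := by
      ext y
      simp only [Set.mem_inter_iff, Set.mem_preimage]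
      constructor
      · rintro ⟨h1, h2⟩
        exact ⟨by rw [tauM_eq_tauN h2.2]; exact h1, h2⟩
      · rintro ⟨h1, h2⟩
        exact ⟨by rw [← tauM_eq_tauN h2.2]; exact h1, h2⟩
    calc muF F (tauN τ a n ⁻¹' A)
        = muF F (tauN τ a n ⁻¹' A ∩ Set.Icc 0 1) := muF_inter F _
      _ = muF F (tauM τ a n ⁻¹' A ∩ Set.Icc 0 1) := by rw [hsame]
      _ = muF F (tauM τ a n ⁻¹' A) := (muF_inter F _).symm
      _ = ν A := by rw [hν, Measure.map_apply hmeas hA]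
      _ = muF F A := by rw [hext]

end Stmt10Aux
end Stmt10AuxSec

/-- For each `n ≥ N`, the approximating map `τ_n` admits an absolutely continuous invariant
probability measure `μ_n = f_n·λ` with a non-negative, non-increasing density `f_n`. -/
theorem stmt10 (τ : ℝ → ℝ) (a d : ℕ → ℝ) (N : ℕ)
    (hτ : PCApprox τ a d N) :
    ∀ n : ℕ, N ≤ n →
      ∃ f : ℝ → ℝ, MeasureTheory.Integrable f lam ∧
        (∀ x ∈ Set.Icc (0:ℝ) 1, 0 ≤ f x) ∧
        AntitoneOn f (Set.Icc 0 1) ∧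
        (∫ x, f x ∂lam) = 1 ∧
        (∀ A : Set ℝ, MeasurableSet A → A ⊆ Set.Icc 0 1 →
          lam.withDensity (fun x => ENNReal.ofReal (f x)) ((tauN τ a n) ⁻¹' A) =
          lam.withDensity (fun x => ENNReal.ofReal (f x)) A) := by
  intro n hn
  exact Stmt10Aux.final_exists hτ n (le_trans hτ.N_pos hn)
end

section
/- Let (g_n)_{n≥1} be a sequence of non-increasing functions g_n : [0,1] → ℝ that is uniformly bounded, i.e., there exists M such that |g_n(x)| ≤ M for all n and all x ∈ [0,1]. If g_n converges to h ∈ L¹([0,1],λ) weakly in L¹ (meaning ∫₀¹ g·g_n dλ → ∫₀¹ g·h dλ for every g ∈ L^∞([0,1],λ)), then ‖g_n − h‖₁ → 0 and g_n → h λ-almost everywhere as n → ∞. -/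
open MeasureTheory Set Filter
open scoped Topology

/-- If `(g_n)` is a uniformly bounded sequence of non-increasing functions on `[0,1]` which
converges weakly in `L¹` to `h` (tested against every essentially bounded measurable
function), then `g_n → h` in `L¹` and `λ`-almost everywhere. -/
theorem stmt12 (g : ℕ → ℝ → ℝ) (h : ℝ → ℝ) (M : ℝ)
    (hmono : ∀ n, AntitoneOn (g n) (Set.Icc 0 1))
    (hbdd : ∀ n, ∀ x ∈ Set.Icc (0:ℝ) 1, |g n x| ≤ M)
    (hint : ∀ n, MeasureTheory.Integrable (g n) lam)
    (hint' : MeasureTheory.Integrable h lam)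
    (hweak : ∀ φ : ℝ → ℝ, Measurable φ → (∃ K : ℝ, ∀ x ∈ Set.Icc (0:ℝ) 1, |φ x| ≤ K) →
      Filter.Tendsto (fun n => ∫ x, φ x * g n x ∂lam) Filter.atTop
        (nhds (∫ x, φ x * h x ∂lam))) :
    Filter.Tendsto (fun n => ∫ x, |g n x - h x| ∂lam) Filter.atTop (nhds 0) ∧
    ∀ᵐ x ∂lam, Filter.Tendsto (fun n => g n x) Filter.atTop (nhds (h x)) := by
  -- interval integral convergence from weak convergence
  have key : ∀ a b : ℝ, Tendsto (fun n => ∫ z in Ioc a b, g n z ∂lam) atTop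
      (nhds (∫ z in Ioc a b, h z ∂lam)) := by
    intro a b
    have hmul : ∀ f : ℝ → ℝ,
        (fun z => (Ioc a b).indicator (fun _ => (1:ℝ)) z * f z) = (Ioc a b).indicator f := by
      intro f; funext z
      by_cases hz : z ∈ Ioc a b <;> simp [Set.indicator_apply, hz]
    have := hweak ((Ioc a b).indicator (fun _ => (1:ℝ)))
      (measurable_const.indicator measurableSet_Ioc)
      ⟨1, fun x _ => by
        by_cases hx : x ∈ Ioc a b <;> simp [Set.indicator_apply, hx]⟩
    simpa [hmul, integral_indicator measurableSet_Ioc] using this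
  -- conversion between volume integrals of the extended function and lam integrals
  set h' : ℝ → ℝ := (Icc (0:ℝ) 1).indicator h with hh'
  have conv : ∀ a b : ℝ, 0 ≤ a → b ≤ 1 →
      ∫ z in Icc a b, h' z ∂volume = ∫ z in Ioc a b, h z ∂lam := by
    intro a b ha hb
    rw [hh', setIntegral_indicator measurableSet_Icc]
    have h1 : Icc a b ∩ Icc 0 1 = Icc (max a 0) (min b 1) := Icc_inter_Icc
    have h2 : Icc (max a 0) (min b 1) = Icc a b := by
      rw [max_eq_left ha, min_eq_left hb]
    rw [h1, h2, integral_Icc_eq_integral_Ioc]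
    show _ = ∫ z, h z ∂((volume.restrict (Icc 0 1)).restrict (Ioc a b))
    rw [Measure.restrict_restrict measurableSet_Ioc]
    congr 1
    have hsub : Ioc a b ⊆ Icc (0:ℝ) 1 := fun z hz =>
      ⟨le_of_lt (lt_of_le_of_lt ha hz.1), le_trans hz.2 hb⟩
    rw [inter_eq_left.2 hsub]
  -- integrability of h' wrt volume
  have hint'v : Integrable h' volume := by
    rw [hh', integrable_indicator_iff measurableSet_Icc]
    exact hint'
  -- Lebesgue differentiation
  have hdiff := (IsUnifLocDoublingMeasure.vitaliFamily (volume : Measure ℝ) 1).ae_tendsto_average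
    (hint'v.locallyIntegrable)
  -- lam-measure of sub-intervals
  have hlamIoc : ∀ a b : ℝ, 0 ≤ a → b ≤ 1 → lam (Ioc a b) = ENNReal.ofReal (b - a) := by
    intro a b ha hb
    have hsub : Ioc a b ⊆ Icc (0:ℝ) 1 := fun z hz =>
      ⟨le_of_lt (lt_of_le_of_lt ha hz.1), le_trans hz.2 hb⟩
    rw [lam, Measure.restrict_apply measurableSet_Ioc, inter_eq_left.2 hsub, Real.volume_Ioc]
  -- a.e. convergence
  have hae : ∀ᵐ x ∂lam, Tendsto (fun n => g n x) atTop (nhds (h x)) := by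
    have h0 : ∀ᵐ x ∂(volume : Measure ℝ), x ≠ (0:ℝ) ∧ x ≠ (1:ℝ) := by
      have a0 : ∀ᵐ x ∂(volume : Measure ℝ), x ≠ (0:ℝ) := by
        rw [ae_iff]
        simpa using measure_singleton (0:ℝ)
      have a1 : ∀ᵐ x ∂(volume : Measure ℝ), x ≠ (1:ℝ) := by
        rw [ae_iff]
        simpa using measure_singleton (1:ℝ)
      exact a0.and a1
    have hmem : ∀ᵐ x ∂lam, x ∈ Icc (0:ℝ) 1 := ae_restrict_mem measurableSet_Icc
    have hdiff' : ∀ᵐ x ∂lam, Tendsto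
        (fun a => ⨍ y in a, h' y ∂volume)
        ((IsUnifLocDoublingMeasure.vitaliFamily (volume : Measure ℝ) 1).filterAt x)
        (nhds (h' x)) := ae_restrict_of_ae hdiff
    have h0' : ∀ᵐ x ∂lam, x ≠ (0:ℝ) ∧ x ≠ (1:ℝ) := ae_restrict_of_ae h0
    filter_upwards [hdiff', h0', hmem] with x hx hne hxI
    have hxIoo : x ∈ Ioo (0:ℝ) 1 :=
      ⟨lt_of_le_of_ne hxI.1 (Ne.symm hne.1), lt_of_le_of_ne hxI.2 hne.2⟩
    have hx' : h' x = h x := Set.indicator_of_mem hxI h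
    have hR : Tendsto (fun y => ⨍ z in Icc x y, h' z ∂volume) (𝓝[>] x) (nhds (h x)) := by
      have := hx.comp (Real.tendsto_Icc_vitaliFamily_right x)
      rw [hx'] at this
      exact this
    have hL : Tendsto (fun y => ⨍ z in Icc y x, h' z ∂volume) (𝓝[<] x) (nhds (h x)) := by
      have := hx.comp (Real.tendsto_Icc_vitaliFamily_left x)
      rw [hx'] at this
      exact this
    refine tendsto_order.2 ⟨?_, ?_⟩
    · -- ∀ a < h x, eventually a < g n x
      intro a ha
      have hev : ∀ᶠ y in 𝓝[>] x, a < ⨍ z in Icc x y, h' z ∂volume := hR.eventually_const_lt ha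
      have hmemIoc : Ioc x 1 ∈ 𝓝[>] x := Ioc_mem_nhdsGT_of_mem ⟨le_rfl, hxIoo.2⟩
      obtain ⟨y, hy1, hy2⟩ := (hev.and (eventually_of_mem hmemIoc (fun y hy => hy))).exists
      have hyx : (0:ℝ) < y - x := sub_pos.2 hy2.1
      have havg : (⨍ z in Icc x y, h' z ∂volume) = (y - x)⁻¹ * ∫ z in Ioc x y, h z ∂lam := by
        rw [setAverage_eq, conv x y (le_of_lt hxIoo.1) hy2.2, measureReal_def, Real.volume_Icc,
          ENNReal.toReal_ofReal (by linarith), smul_eq_mul]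
      rw [havg, inv_mul_eq_div] at hy1
      have hI : a * (y - x) < ∫ z in Ioc x y, h z ∂lam := (lt_div_iff₀ hyx).1 hy1
      have hev2 : ∀ᶠ n in atTop, a * (y - x) < ∫ z in Ioc x y, g n z ∂lam :=
        (key x y).eventually_const_lt hI
      filter_upwards [hev2] with n hn
      have hsub : Ioc x y ⊆ Icc (0:ℝ) 1 := fun z hz =>
        ⟨le_of_lt (lt_of_le_of_lt (le_of_lt hxIoo.1) hz.1), le_trans hz.2 hy2.2⟩
      have hm : lam (Ioc x y) = ENNReal.ofReal (y - x) :=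
        hlamIoc x y (le_of_lt hxIoo.1) hy2.2
      have hub : ∫ z in Ioc x y, g n z ∂lam ≤ g n x * (y - x) := by
        calc ∫ z in Ioc x y, g n z ∂lam ≤ ∫ _z in Ioc x y, g n x ∂lam := by
              refine setIntegral_mono_on ((hint n).integrableOn)
                (integrableOn_const ?_) measurableSet_Ioc (fun z hz => ?_)
              · rw [hm]; exact ENNReal.ofReal_lt_top.ne
              · exact hmono n hxI (hsub hz) (le_of_lt hz.1)
          _ = g n x * (y - x) := by
              rw [setIntegral_const, measureReal_def, hm, ENNReal.toReal_ofReal (by linarith), smul_eq_mul,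
                mul_comm]
      exact lt_of_mul_lt_mul_right (lt_of_lt_of_le hn hub) (le_of_lt hyx)
    · -- ∀ b > h x, eventually g n x < b
      intro b hb
      have hev : ∀ᶠ y in 𝓝[<] x, (⨍ z in Icc y x, h' z ∂volume) < b := hL.eventually_lt_const hb
      have hmemIco : Ico 0 x ∈ 𝓝[<] x := Ico_mem_nhdsLT_of_mem ⟨hxIoo.1, le_rfl⟩
      obtain ⟨y, hy1, hy2⟩ := (hev.and (eventually_of_mem hmemIco (fun y hy => hy))).exists
      have hyx : (0:ℝ) < x - y := sub_pos.2 hy2.2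
      have havg : (⨍ z in Icc y x, h' z ∂volume) = (x - y)⁻¹ * ∫ z in Ioc y x, h z ∂lam := by
        rw [setAverage_eq, conv y x hy2.1 (le_of_lt hxIoo.2), measureReal_def, Real.volume_Icc,
          ENNReal.toReal_ofReal (by linarith), smul_eq_mul]
      rw [havg, inv_mul_eq_div] at hy1
      have hI : (∫ z in Ioc y x, h z ∂lam) < b * (x - y) := by
        have := (div_lt_iff₀ hyx).1 hy1
        linarith
      have hev2 : ∀ᶠ n in atTop, (∫ z in Ioc y x, g n z ∂lam) < b * (x - y) :=
        (key y x).eventually_lt_const hI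
      filter_upwards [hev2] with n hn
      have hsub : Ioc y x ⊆ Icc (0:ℝ) 1 := fun z hz =>
        ⟨le_of_lt (lt_of_le_of_lt hy2.1 hz.1), le_trans hz.2 (le_of_lt hxIoo.2)⟩
      have hm : lam (Ioc y x) = ENNReal.ofReal (x - y) :=
        hlamIoc y x hy2.1 (le_of_lt hxIoo.2)
      have hlb : g n x * (x - y) ≤ ∫ z in Ioc y x, g n z ∂lam := by
        calc g n x * (x - y) = ∫ _z in Ioc y x, g n x ∂lam := by
              rw [setIntegral_const, measureReal_def, hm, ENNReal.toReal_ofReal (by linarith), smul_eq_mul,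
                mul_comm]
          _ ≤ ∫ z in Ioc y x, g n z ∂lam := by
              refine setIntegral_mono_on (integrableOn_const ?_)
                ((hint n).integrableOn) measurableSet_Ioc (fun z hz => ?_)
              · rw [hm]; exact ENNReal.ofReal_lt_top.ne
              · exact hmono n (hsub hz) hxI hz.2
      exact lt_of_mul_lt_mul_right (lt_of_le_of_lt hlb hn) (le_of_lt hyx)
  refine ⟨?_, hae⟩
  haveI : IsFiniteMeasure lam := by
    constructor
    rw [lam, Measure.restrict_apply_univ, Real.volume_Icc]
    exact ENNReal.ofReal_lt_top
  -- L¹ convergence via dominated convergence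
  have hmem : ∀ᵐ z ∂lam, z ∈ Icc (0:ℝ) 1 := ae_restrict_mem measurableSet_Icc
  have hdc := tendsto_integral_of_dominated_convergence (μ := lam)
    (F := fun n z => |g n z - h z|) (f := fun _ => (0:ℝ)) (bound := fun z => M + |h z|)
    (fun n => ((hint n).sub hint').abs.aestronglyMeasurable)
    ((integrable_const M).add hint'.abs)
    (fun n => by
      filter_upwards [hmem] with z hz
      rw [Real.norm_eq_abs, abs_abs]
      calc |g n z - h z| ≤ |g n z| + |h z| := by
            have := norm_sub_le (g n z) (h z); simpa using this
        _ ≤ M + |h z| := add_le_add (hbdd n z hz) le_rfl)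
    (by
      filter_upwards [hae] with z hz
      have := (hz.sub (tendsto_const_nhds (x := h z))).abs
      simpa using this)
  simpa using hdc
end

section
/- Let T : [0,1] → [0,1] be defined by T(x) = i(i+1)·x − i for x ∈ [1/(i+1), 1/i), i = 1, 2, …, and T(0) = 0, T(1) = 1. Then Lebesgue measure λ on [0,1] is T-invariant: λ(T⁻¹(A)) = λ(A) for every Borel set A ⊆ [0,1]. -/
/-!
On `[1/(i+1), 1/i)` the map `T` is an increasing affine bijection onto `[0,1)` with slope
`i(i+1)`, so the part of `T⁻¹ A` in that interval has measure `λ(A ∩ [0,1)) / (i(i+1))`, which is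
`λ(A ∩ [0,1))` times the length of the interval. These intervals tile `(0,1)`, so summing gives
`λ(T⁻¹ A) = λ(A) · λ(0,1) = λ(A)`.
-/

open MeasureTheory Set Filter

open Topology Function

theorem preimage_mul_add_Ico {K : Type*} [Field K] [LinearOrder K] [IsStrictOrderedRing K]
    {a : K} (ha : 0 < a) (b c d : K) :
    (fun x => a * x + b) ⁻¹' Ico c d = Ico ((c - b) / a) ((d - b) / a) := by
  ext x
  simp only [mem_preimage, mem_Ico, div_le_iff₀ ha, lt_div_iff₀ ha]
  constructor <;> rintro ⟨h₁, h₂⟩ <;> constructor <;> linarith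

theorem iUnion_Ico_succ_eq_Ioo_of_antitone {α : Type*} [LinearOrder α] [TopologicalSpace α]
    [OrderTopology α] {u : ℕ → α} {a : α} (hu : Antitone u) (hpos : ∀ n, a < u n)
    (hlim : Tendsto u atTop (𝓝 a)) : ⋃ n, Ico (u (n + 1)) (u n) = Ioo a (u 0) := by
  ext x
  simp only [mem_iUnion, mem_Ico, mem_Ioo]
  constructor
  · rintro ⟨n, hnx, hxn⟩
    exact ⟨(hpos _).trans_le hnx, hxn.trans_le (hu n.zero_le)⟩
  · rintro ⟨hax, hx1⟩
    have hex : ∃ m, u m ≤ x := ((hlim.eventually (gt_mem_nhds hax)).exists).imp fun _ => le_of_lt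
    obtain ⟨n, hn⟩ : ∃ n, Nat.find hex = n + 1 :=
      Nat.exists_eq_add_one.mpr <| Nat.pos_of_ne_zero fun h => (Nat.find_spec hex).not_gt (h ▸ hx1)
    exact ⟨n, hn ▸ Nat.find_spec hex, not_le.mp <| Nat.find_min hex (hn ▸ n.lt_succ_self)⟩

theorem volume_preimage_mul_add {a : ℝ} (ha : a ≠ 0) (b : ℝ) (s : Set ℝ) :
    volume ((fun x => a * x + b) ⁻¹' s) = ENNReal.ofReal |a⁻¹| * volume s := by
  rw [show (fun x => a * x + b) ⁻¹' s = (a * ·) ⁻¹' ((· + b) ⁻¹' s) from rfl,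
    Real.volume_preimage_mul_left ha, measure_preimage_add_right]

theorem preimage_inter_eq_preimage_inter_of_eqOn {α β : Type*} {T f : α → β} {P : Set α}
    {J : Set β} (hT : EqOn T f P) (hP : f ⁻¹' J = P) (B : Set β) :
    T ⁻¹' B ∩ P = f ⁻¹' (B ∩ J) := by
  rw [inter_comm, hT.inter_preimage_eq, preimage_inter, hP, inter_comm]

theorem volume_preimage_inter_iUnion_of_affine_pieces {ι : Type*} [Countable ι]
    {P : ι → Set ℝ} (hPd : Pairwise (Disjoint on P)) {a b : ι → ℝ} (ha : ∀ i, a i ≠ 0)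
    {J : Set ℝ} (hJm : MeasurableSet J) (hJ : volume J = 1)
    (hP : ∀ i, (fun x => a i * x + b i) ⁻¹' J = P i)
    {T : ℝ → ℝ} (hT : ∀ i, EqOn T (fun x => a i * x + b i) (P i))
    {B : Set ℝ} (hB : MeasurableSet B) :
    volume (T ⁻¹' B ∩ ⋃ i, P i) = volume (B ∩ J) * volume (⋃ i, P i) := by
  have hmeas : ∀ i {s : Set ℝ}, MeasurableSet s →
      MeasurableSet ((fun x => a i * x + b i) ⁻¹' s) := fun i _ hs =>
    (measurable_const.mul measurable_id |>.add_const _) hs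
  have hPm : ∀ i, MeasurableSet (P i) := fun i => hP i ▸ hmeas i hJm
  have hpieces : T ⁻¹' B ∩ ⋃ i, P i = ⋃ i, (fun x => a i * x + b i) ⁻¹' (B ∩ J) := by
    simp only [inter_iUnion, preimage_inter_eq_preimage_inter_of_eqOn (hT _) (hP _)]
  have hdisj : Pairwise (Disjoint on fun i => (fun x => a i * x + b i) ⁻¹' (B ∩ J)) :=
    fun i j hij => (hPd hij).mono (hP i ▸ preimage_mono inter_subset_right)
      (hP j ▸ preimage_mono inter_subset_right)
  rw [hpieces, measure_iUnion hdisj fun i => hmeas i (hB.inter hJm), measure_iUnion hPd hPm,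
    ← ENNReal.tsum_mul_left]
  refine tsum_congr fun i => ?_
  rw [volume_preimage_mul_add (ha i), ← hP i, volume_preimage_mul_add (ha i), hJ, mul_one,
    mul_comm]

theorem lam_apply_eq_volume_inter_Ioo (s : Set ℝ) : lam s = volume (s ∩ Ioo 0 1) := by
  rw [lam, ← Measure.restrict_congr_set Ioo_ae_eq_Icc, Measure.restrict_apply' measurableSet_Ioo]

theorem lam_apply_eq_volume_inter_Ico (s : Set ℝ) : lam s = volume (s ∩ Ico 0 1) := by
  rw [lam, ← Measure.restrict_congr_set Ico_ae_eq_Icc, Measure.restrict_apply' measurableSet_Ico]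

theorem stmt17_general (T : ℝ → ℝ)
    (hT : ∀ i : ℕ, 1 ≤ i → ∀ x ∈ Set.Ico (1 / ((i:ℝ) + 1)) (1 / (i:ℝ)),
      T x = (i:ℝ) * ((i:ℝ) + 1) * x - (i:ℝ)) :
    ∀ A : Set ℝ, MeasurableSet A → A ⊆ Set.Icc (0:ℝ) 1 → lam (T ⁻¹' A) = lam A := by
  intro A hA _
  -- the branch of `T` with slope `i(i+1)`, `i = n + 1`, lives on `Ico (u (n + 1)) (u n)`
  set u : ℕ → ℝ := fun n => 1 / ((n : ℝ) + 1)
  have hu : Antitone u := fun m n hmn => by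
    dsimp only [u]; gcongr
  have hunion : ⋃ n, Ico (u (n + 1)) (u n) = Ioo 0 1 := by
    simpa [u] using iUnion_Ico_succ_eq_Ioo_of_antitone hu (fun n => by positivity)
      tendsto_one_div_add_atTop_nhds_zero_nat
  have hpre : ∀ n : ℕ, (fun x => ((n + 1 : ℕ) : ℝ) * (((n + 1 : ℕ) : ℝ) + 1) * x
      + -((n + 1 : ℕ) : ℝ)) ⁻¹' Ico 0 1 = Ico (u (n + 1)) (u n) := by
    intro n
    rw [preimage_mul_add_Ico (by positivity)]
    congr 1 <;> (dsimp only [u]; push_cast; field_simp; ring)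
  have hbranch : ∀ n : ℕ, EqOn T (fun x => ((n + 1 : ℕ) : ℝ) * (((n + 1 : ℕ) : ℝ) + 1) * x
      + -((n + 1 : ℕ) : ℝ)) (Ico (u (n + 1)) (u n)) := by
    intro n x hx
    rw [hT (n + 1) n.succ_pos x (by simpa [u] using hx), sub_eq_add_neg]
  have hpreimage := volume_preimage_inter_iUnion_of_affine_pieces
    (P := fun n => Ico (u (n + 1)) (u n)) hu.pairwise_disjoint_on_Ico_succ
    (fun n => by positivity) measurableSet_Ico (by simp) hpre hbranch hA
  rw [hunion, Real.volume_Ioo, sub_zero, ENNReal.ofReal_one, mul_one] at hpreimage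
  rw [lam_apply_eq_volume_inter_Ioo, lam_apply_eq_volume_inter_Ico, hpreimage]

/-- The piecewise linear map `T x = i(i+1)x − i` on `[1/(i+1), 1/i)`, `i = 1, 2, …`, with
`T 0 = 0` and `T 1 = 1`, preserves Lebesgue measure on `[0,1]`. -/
theorem stmt17 (T : ℝ → ℝ)
    (hT0 : T 0 = 0) (hT1 : T 1 = 1)
    (hT : ∀ i : ℕ, 1 ≤ i → ∀ x ∈ Set.Ico (1 / ((i:ℝ) + 1)) (1 / (i:ℝ)),
      T x = (i:ℝ) * ((i:ℝ) + 1) * x - (i:ℝ)) :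
    ∀ A : Set ℝ, MeasurableSet A → A ⊆ Set.Icc (0:ℝ) 1 → lam (T ⁻¹' A) = lam A :=
  stmt17_general T hT
end
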